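/- arXiv:2502.12688 — 7 statements merged into one kernel-verified Lean document; each statement's English description precedes it below -/
import Mathlib

section
/- For any integer ℓ ≥ 2 and any real α ∈ (0,1) with αℓ > 1, every finite simple graph G with minimum degree δ(G) ≥ (2ℓ − 2)/(αℓ − 1) admits, for every list assignment L assigning to each edge a list of ℓ colours, an L-colouring that is an α-majority edge colouring. -/
/-!
Orient every edge of `G` and cut the out-edges and the in-edges at each vertex into blocks of at
most `ℓ` edges. Joining the out-block and the in-block of each edge gives a bipartite graph of
maximum degree `ℓ`, which by Galvin's theorem has a proper colouring from any lists of size `ℓ`.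
Then a colour occurs at a vertex of out-degree `a` and in-degree `b` at most
`⌈a/ℓ⌉ + ⌈b/ℓ⌉ ≤ (d(v) + 2ℓ - 2)/ℓ` times, which is at most `α d(v)` exactly when
`d(v) ≥ (2ℓ - 2)/(αℓ - 1)`.

Galvin's theorem is proved by his kernel argument: a Kőnig colouring `φ` (obtained by padding to a
regular multigraph and peeling off Hall perfect matchings) orients the line graph so that every
edge is beaten by fewer than `ℓ` others, and Gale–Shapley stable matchings are kernels of this
orientation.
-/

open Finset

namespace BipartiteEdgeColouring

variable {ε ι α β γ δ κ C : Type*}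

/-- Throughout, `s : Finset ε` with `A B` is the bipartite multigraph whose edge `e` joins `A e` to
`B e`, and `Set.InjOn (fun e => (A e, φ e)) s` says that `φ` is proper at the `A`-ends.
`Beats A B φ` is Galvin's orientation of the line graph. -/
def Beats [LT γ] (A : ε → α) (B : ε → β) (φ : ε → γ) (e f : ε) : Prop :=
  A e = A f ∧ φ e < φ f ∨ B e = B f ∧ φ f < φ e

instance [DecidableEq α] [DecidableEq β] [LinearOrder γ] (A : ε → α) (B : ε → β) (φ : ε → γ) :
    DecidableRel (Beats A B φ) :=
  fun _ _ => inferInstanceAs (Decidable (_ ∨ _))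

/-- The proposals of the `A`-ends in the Gale–Shapley algorithm. -/
def favourites [DecidableEq α] [LinearOrder γ] (A : ε → α) (φ : ε → γ) (U : Finset ε) :
    Finset ε :=
  {e ∈ U | ∀ g ∈ U, A g = A e → φ e ≤ φ g}

section StableMatching

variable [DecidableEq α] [LinearOrder γ] {A : ε → α} {φ : ε → γ} {U : Finset ε}

theorem favourites_subset : favourites A φ U ⊆ U := filter_subset _ _

theorem injOn_favourites (hA : Set.InjOn (fun e => (A e, φ e)) U) :
    Set.InjOn A (favourites A φ U) := fun e he f hf h => by
  obtain ⟨heU, he⟩ := mem_filter.mp he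
  obtain ⟨hfU, hf⟩ := mem_filter.mp hf
  exact hA heU hfU (Prod.ext h (le_antisymm (he f hfU h.symm) (hf e heU h)))

theorem exists_mem_favourites_lt [DecidableEq ε] (hA : Set.InjOn (fun e => (A e, φ e)) U)
    {f : ε} (hf : f ∈ U \ favourites A φ U) :
    ∃ g ∈ favourites A φ U, A g = A f ∧ φ g < φ f := by
  obtain ⟨hfU, hfP⟩ := mem_sdiff.mp hf
  obtain ⟨g, hg, hmin⟩ := exists_min_image {g ∈ U | A g = A f} φ ⟨f, mem_filter.mpr ⟨hfU, rfl⟩⟩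
  obtain ⟨hgU, hgf⟩ := mem_filter.mp hg
  have hgP : g ∈ favourites A φ U :=
    mem_filter.mpr ⟨hgU, fun g' hg' h => hmin g' (mem_filter.mpr ⟨hg', h.trans hgf⟩)⟩
  have hne : φ g ≠ φ f := fun h => hfP (hA hgU hfU (Prod.ext hgf h) ▸ hgP)
  exact ⟨g, hgP, hgf, (hmin f (mem_filter.mpr ⟨hfU, rfl⟩)).lt_of_ne hne⟩

/-- Gale–Shapley, by induction: if the favourites form a matching they are stable; otherwise a
`B`-end is proposed to twice, rejects the proposal `f` it likes less, and a stable matching of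
`U.erase f` also beats `f`. -/
theorem exists_stable_matching [DecidableEq ε] (B : ε → β) (U : Finset ε)
    (hA : Set.InjOn (fun e => (A e, φ e)) U) (hB : Set.InjOn (fun e => (B e, φ e)) U) :
    ∃ K ⊆ U, Set.InjOn A K ∧ Set.InjOn B K ∧ ∀ f ∈ U \ K, ∃ e ∈ K, Beats A B φ e f := by
  induction U using Finset.strongInduction with
  | H U ih =>
  by_cases hPB : Set.InjOn B (favourites A φ U)
  · refine ⟨_, favourites_subset, injOn_favourites hA, hPB, fun f hf => ?_⟩
    obtain ⟨g, hg, hgf, hφ⟩ := exists_mem_favourites_lt hA hf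
    exact ⟨g, hg, Or.inl ⟨hgf, hφ⟩⟩
  obtain ⟨e, he, f, hf, hBef, hφ⟩ :
      ∃ e ∈ favourites A φ U, ∃ f ∈ favourites A φ U, B e = B f ∧ φ f < φ e := by
    simp only [Set.InjOn, not_forall] at hPB
    obtain ⟨e, he, f, hf, hBef, hne⟩ := hPB
    rcases lt_or_gt_of_ne fun h =>
      hne (hB (favourites_subset he) (favourites_subset hf) (Prod.ext hBef h)) with h | h
    · exact ⟨f, hf, e, he, hBef.symm, h⟩
    · exact ⟨e, he, f, hf, hBef, h⟩
  obtain ⟨K, hKU, hKA, hKB, hK⟩ := ih (U.erase f) (erase_ssubset (favourites_subset hf))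
    (hA.mono (erase_subset _ _)) (hB.mono (erase_subset _ _))
  refine ⟨K, hKU.trans (erase_subset _ _), hKA, hKB, fun g hg => ?_⟩
  obtain ⟨hgU, hgK⟩ := mem_sdiff.mp hg
  by_cases hgf : g = f
  · subst hgf
    by_cases heK : e ∈ K
    · exact ⟨e, heK, Or.inr ⟨hBef, hφ⟩⟩
    obtain ⟨h, hhK, hbeat⟩ := hK e (mem_sdiff.mpr
      ⟨mem_erase.mpr ⟨fun h => hφ.ne (congrArg φ h).symm, favourites_subset he⟩, heK⟩)
    rcases hbeat with ⟨hAh, hφh⟩ | ⟨hBh, hφh⟩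
    · exact absurd ((mem_filter.mp he).2 h (erase_subset _ _ (hKU hhK)) hAh) (not_le.mpr hφh)
    · exact ⟨h, hhK, Or.inr ⟨hBh.trans hBef, hφ.trans hφh⟩⟩
  · exact hK g (mem_sdiff.mpr ⟨mem_erase.mpr ⟨hgf, hgU⟩, hgK⟩)

end StableMatching

theorem injOn_piecewise [DecidableEq ε] {s K : Finset ε} {D : ε → δ} {ω : ε → C} {c : C}
    (hK : Set.InjOn D K) (hω : Set.InjOn (fun e => (D e, ω e)) ↑(s \ K))
    (hωc : ∀ e ∈ s \ K, ω e ≠ c) :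
    Set.InjOn (fun e => (D e, K.piecewise (fun _ => c) ω e)) s := by
  intro e he f hf h
  simp only [Prod.mk.injEq] at h
  obtain ⟨hD, hωef⟩ := h
  by_cases heK : e ∈ K <;> by_cases hfK : f ∈ K <;>
    simp only [piecewise, heK, hfK, if_true, if_false] at hωef
  · exact hK heK hfK hD
  · exact absurd hωef.symm (hωc f (mem_sdiff.mpr ⟨hf, hfK⟩))
  · exact absurd hωef (hωc e (mem_sdiff.mpr ⟨he, heK⟩))
  · exact hω (mem_sdiff.mpr ⟨he, heK⟩) (mem_sdiff.mpr ⟨hf, hfK⟩) (Prod.ext hD hωef)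

theorem card_filter_sdiff_lt_card_erase [DecidableEq ε] [DecidableEq C] {s K : Finset ε}
    {p : ε → Prop} [DecidablePred p] {t : Finset C} {c : C} (ht : #{f ∈ s | p f} < #t)
    (hc : c ∈ t → ∃ g ∈ K, g ∈ s ∧ p g) : #{f ∈ s \ K | p f} < #(t.erase c) := by
  have hsub : {f ∈ s \ K | p f} ⊆ {f ∈ s | p f} := filter_subset_filter _ sdiff_subset
  by_cases hct : c ∈ t
  · obtain ⟨g, hgK, hgs, hg⟩ := hc hct
    have hlt : #{f ∈ s \ K | p f} < #{f ∈ s | p f} := card_lt_card <|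
      (ssubset_iff_of_subset hsub).mpr
        ⟨g, mem_filter.mpr ⟨hgs, hg⟩, fun h => (mem_sdiff.mp (mem_filter.mp h).1).2 hgK⟩
    rw [card_erase_of_mem hct]
    omega
  · rw [erase_eq_of_notMem hct]
    exact (card_le_card hsub).trans_lt ht

/-- Galvin's kernel argument: colour a stable matching among the edges whose list contains `c`
with `c`, and recurse on the remaining edges with `c` deleted from their lists. -/
theorem exists_listColouring_of_card_beats_lt [DecidableEq ε] [DecidableEq α] [DecidableEq β]
    [LinearOrder γ] [Nonempty C] (A : ε → α) (B : ε → β) (φ : ε → γ) (s : Finset ε)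
    (L : ε → Finset C) (hA : Set.InjOn (fun e => (A e, φ e)) s)
    (hB : Set.InjOn (fun e => (B e, φ e)) s) (hL : ∀ e ∈ s, #{f ∈ s | Beats A B φ f e} < #(L e)) :
    ∃ ω : ε → C, (∀ e ∈ s, ω e ∈ L e) ∧ Set.InjOn (fun e => (A e, ω e)) s ∧
      Set.InjOn (fun e => (B e, ω e)) s := by
  classical
  induction s using Finset.strongInduction generalizing L with
  | H s ih =>
  rcases s.eq_empty_or_nonempty with rfl | ⟨e₀, he₀⟩
  · exact ⟨fun _ => Classical.arbitrary C, by simp, by simp, by simp⟩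
  obtain ⟨c, hc⟩ : (L e₀).Nonempty := card_pos.mp ((Nat.zero_le _).trans_lt (hL e₀ he₀))
  obtain ⟨K, hKU, hKA, hKB, hK⟩ := exists_stable_matching B {e ∈ s | c ∈ L e}
    (hA.mono (filter_subset _ _)) (hB.mono (filter_subset _ _))
  have hKs : K ⊆ s := hKU.trans (filter_subset _ _)
  have hKne : K.Nonempty := by
    rcases K.eq_empty_or_nonempty with rfl | hK₀
    · obtain ⟨e, he, -⟩ := hK e₀ (by simp [he₀, hc])
      exact absurd he (notMem_empty e)
    · exact hK₀
  have hbeats : ∀ e ∈ s \ K, #{f ∈ s \ K | Beats A B φ f e} < #((L e).erase c) := fun e he =>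
    card_filter_sdiff_lt_card_erase (hL e (mem_sdiff.mp he).1) fun hce => by
      obtain ⟨g, hgK, hg⟩ := hK e (mem_sdiff.mpr ⟨mem_filter.mpr ⟨(mem_sdiff.mp he).1, hce⟩,
        (mem_sdiff.mp he).2⟩)
      exact ⟨g, hgK, hKs hgK, hg⟩
  obtain ⟨ω, hωL, hωA, hωB⟩ := ih (s \ K) (sdiff_ssubset hKs hKne) (fun e => (L e).erase c)
    (hA.mono sdiff_subset) (hB.mono sdiff_subset) hbeats
  have hωc : ∀ e ∈ s \ K, ω e ≠ c := fun e he => ne_of_mem_erase (hωL e he)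
  refine ⟨K.piecewise (fun _ => c) ω, fun e he => ?_, injOn_piecewise hKA hωA hωc,
    injOn_piecewise hKB hωB hωc⟩
  by_cases heK : e ∈ K
  · rw [piecewise_eq_of_mem _ _ _ heK]
    exact (mem_filter.mp (hKU heK)).2
  · rw [piecewise_eq_of_notMem _ _ _ heK]
    exact mem_of_mem_erase (hωL e (mem_sdiff.mpr ⟨he, heK⟩))

section Konig

variable [DecidableEq κ]

theorem card_filter_image_univ_eq_one [DecidableEq ε] [Fintype ι] {g : ι → ε} {D : ε → κ}
    (hD : Function.Injective (D ∘ g)) (i : ι) : #{e ∈ univ.image g | D e = D (g i)} = 1 := by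
  rw [card_eq_one]
  refine ⟨g i, ext fun e => ?_⟩
  simp only [mem_filter, mem_image, mem_univ, true_and, mem_singleton]
  constructor
  · rintro ⟨⟨j, rfl⟩, h⟩
    rw [hD h]
  · rintro rfl
    exact ⟨⟨i, rfl⟩, rfl⟩

theorem card_filter_mem_eq_mul {D : ε → κ} {s : Finset ε} {S : Finset κ} {k : ℕ}
    (hD : ∀ x ∈ S, #{e ∈ s | D e = x} = k) {X : Finset κ} (hX : X ⊆ S) :
    #{e ∈ s | D e ∈ X} = k * #X := by
  rw [← sum_card_fiberwise_eq_card_filter, sum_congr rfl fun x hx => hD x (hX hx), sum_const,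
    smul_eq_mul, mul_comm]

/-- Hall's condition, by double counting the edges at a set of `A`-ends. -/
theorem card_le_card_biUnion_of_regular {A B : ε → κ} {S : Finset κ} {s : Finset ε} {k : ℕ}
    (hk : 0 < k) (hBS : ∀ e ∈ s, B e ∈ S) (hA : ∀ x ∈ S, #{e ∈ s | A e = x} = k)
    (hB : ∀ x ∈ S, #{e ∈ s | B e = x} = k) (X : Finset S) :
    #X ≤ #(X.biUnion fun x => {e ∈ s | A e = x}.image B) := by
  set X' := X.map (Function.Embedding.subtype _)
  set Y := X.biUnion fun x => {e ∈ s | A e = x}.image B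
  have hX' : X' ⊆ S := fun x hx => by
    obtain ⟨y, -, rfl⟩ := mem_map.mp hx
    exact y.2
  have hY : Y ⊆ S := fun y hy => by
    obtain ⟨x, -, hy⟩ := mem_biUnion.mp hy
    obtain ⟨e, he, rfl⟩ := mem_image.mp hy
    exact hBS e (mem_filter.mp he).1
  have hsub : {e ∈ s | A e ∈ X'} ⊆ {e ∈ s | B e ∈ Y} := fun e he => by
    obtain ⟨hes, hx⟩ := mem_filter.mp he
    obtain ⟨x, hxX, hxe⟩ := mem_map.mp hx
    exact mem_filter.mpr ⟨hes, mem_biUnion.mpr ⟨x, hxX, mem_image.mpr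
      ⟨e, mem_filter.mpr ⟨hes, hxe.symm⟩, rfl⟩⟩⟩
  have := card_le_card hsub
  rw [card_filter_mem_eq_mul hA hX', card_filter_mem_eq_mul hB hY, card_map] at this
  exact le_of_mul_le_mul_left this hk

theorem exists_perfectMatching_of_regular [DecidableEq ε] {A B : ε → κ} {S : Finset κ}
    {s : Finset ε} {k : ℕ} (hk : 0 < k) (hBS : ∀ e ∈ s, B e ∈ S)
    (hA : ∀ x ∈ S, #{e ∈ s | A e = x} = k) (hB : ∀ x ∈ S, #{e ∈ s | B e = x} = k) :
    ∃ M ⊆ s, (∀ x ∈ S, #{e ∈ M | A e = x} = 1) ∧ ∀ x ∈ S, #{e ∈ M | B e = x} = 1 := by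
  obtain ⟨f, hf, hft⟩ := (all_card_le_biUnion_card_iff_exists_injective _).mp
    (card_le_card_biUnion_of_regular hk hBS hA hB)
  have hg : ∀ x : S, ∃ e ∈ s, A e = x ∧ B e = f x := fun x => by
    obtain ⟨e, he, hef⟩ := mem_image.mp (hft x)
    exact ⟨e, (mem_filter.mp he).1, (mem_filter.mp he).2, hef⟩
  choose g hgs hgA hgB using hg
  have hfS : ∀ x, f x ∈ S := fun x => hgB x ▸ hBS _ (hgs x)
  have hfsurj : Function.Surjective fun x => (⟨f x, hfS x⟩ : S) :=
    Finite.injective_iff_surjective.mp fun x y h => hf (congrArg Subtype.val h)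
  refine ⟨univ.image g, image_subset_iff.mpr fun x _ => hgs x, fun x hx => ?_, fun y hy => ?_⟩
  · have := card_filter_image_univ_eq_one (D := A) (g := g)
      (fun x y h => Subtype.val_injective ((hgA x).symm.trans (h.trans (hgA y)))) ⟨x, hx⟩
    rwa [hgA] at this
  · obtain ⟨x, hx⟩ := hfsurj ⟨y, hy⟩
    have := card_filter_image_univ_eq_one (D := B) (g := g)
      (fun x y h => hf ((hgB x).symm.trans (h.trans (hgB y)))) x
    rwa [hgB, show f x = y from congrArg Subtype.val hx] at this

theorem card_filter_sdiff [DecidableEq ε] {s M : Finset ε} (hM : M ⊆ s) (D : ε → κ) (x : κ) :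
    #{e ∈ s \ M | D e = x} = #{e ∈ s | D e = x} - #{e ∈ M | D e = x} := by
  rw [← card_sdiff_of_subset (filter_subset_filter _ hM)]
  congr 1
  ext e
  simp only [mem_filter, mem_sdiff]
  tauto

theorem injOn_of_card_filter_eq_one {M : Finset ε} {D : ε → κ} {S : Finset κ}
    (hMS : ∀ e ∈ M, D e ∈ S) (h : ∀ x ∈ S, #{e ∈ M | D e = x} = 1) : Set.InjOn D M :=
  fun e he f hf hef => card_le_one.mp (h _ (hMS e he)).le e (mem_filter.mpr ⟨he, rfl⟩) f
    (mem_filter.mpr ⟨hf, hef.symm⟩)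

/-- Peel off perfect matchings. -/
theorem exists_properColouring_of_regular [DecidableEq ε] {A B : ε → κ} {S : Finset κ} (k : ℕ)
    {s : Finset ε} (hAS : ∀ e ∈ s, A e ∈ S) (hBS : ∀ e ∈ s, B e ∈ S)
    (hA : ∀ x ∈ S, #{e ∈ s | A e = x} = k) (hB : ∀ x ∈ S, #{e ∈ s | B e = x} = k) :
    ∃ φ : ε → ℕ, (∀ e ∈ s, φ e < k) ∧ Set.InjOn (fun e => (A e, φ e)) s ∧
      Set.InjOn (fun e => (B e, φ e)) s := by
  induction k generalizing s with
  | zero =>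
    obtain rfl : s = ∅ := eq_empty_of_forall_notMem fun e he =>
      (filter_eq_empty_iff.mp (card_eq_zero.mp (hA _ (hAS e he)))) he rfl
    exact ⟨fun _ => 0, by simp, by simp, by simp⟩
  | succ k ih =>
    obtain ⟨M, hMs, hMA, hMB⟩ := exists_perfectMatching_of_regular k.succ_pos hBS hA hB
    obtain ⟨φ, hφ, hφA, hφB⟩ := ih (s := s \ M) (fun e he => hAS e (mem_sdiff.mp he).1)
      (fun e he => hBS e (mem_sdiff.mp he).1)
      (fun x hx => by rw [card_filter_sdiff hMs, hA x hx, hMA x hx]; rfl)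
      (fun x hx => by rw [card_filter_sdiff hMs, hB x hx, hMB x hx]; rfl)
    have hφk : ∀ e ∈ s \ M, φ e ≠ k := fun e he => (hφ e he).ne
    refine ⟨M.piecewise (fun _ => k) φ, fun e he => ?_,
      injOn_piecewise (injOn_of_card_filter_eq_one (fun e he => hAS e (hMs he)) hMA) hφA hφk,
      injOn_piecewise (injOn_of_card_filter_eq_one (fun e he => hBS e (hMs he)) hMB) hφB hφk⟩
    by_cases heM : e ∈ M
    · rw [piecewise_eq_of_mem _ _ _ heM]; omega
    · rw [piecewise_eq_of_notMem _ _ _ heM]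
      exact (hφ e (mem_sdiff.mpr ⟨he, heM⟩)).trans k.lt_succ_self

theorem exists_card_filter_lt_of_card_lt {D : ε → κ} {t : Finset ε} {S : Finset κ} {k : ℕ}
    (hD : ∀ e ∈ t, D e ∈ S) (ht : #t < k * #S) : ∃ x ∈ S, #{e ∈ t | D e = x} < k := by
  by_contra! h
  exact ht.not_ge (mul_card_image_le_card_of_maps_to hD k h)

theorem card_filter_eq_of_card_eq_mul {D : ε → κ} {t : Finset ε} {S : Finset κ} {k : ℕ}
    (hD : ∀ e ∈ t, D e ∈ S) (hk : ∀ x, #{e ∈ t | D e = x} ≤ k) (ht : #t = k * #S) :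
    ∀ x ∈ S, #{e ∈ t | D e = x} = k := by
  rw [card_eq_sum_card_fiberwise hD, mul_comm, ← smul_eq_mul, ← sum_const] at ht
  exact (sum_eq_sum_iff_of_le fun x _ => hk x).mp ht

theorem card_filter_insert_le {D : ε → κ} {t : Finset ε} {k : ℕ} [DecidableEq ε] {a : ε}
    (hk : ∀ x, #{e ∈ t | D e = x} ≤ k) (ha : #{e ∈ t | D e = D a} < k) (x : κ) :
    #{e ∈ insert a t | D e = x} ≤ k := by
  rw [filter_insert]
  split_ifs with h
  · subst h; exact (card_insert_le _ _).trans ha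
  · exact hk x

/-- An edge `(x, y, i)` joins `x` to `y`; the labels `i : ι` leave room for new parallel edges. -/
theorem exists_regular_supergraph [DecidableEq ι] [Infinite ι] {S : Finset κ} {k : ℕ}
    {t : Finset (κ × κ × ι)} (hAS : ∀ e ∈ t, e.1 ∈ S) (hBS : ∀ e ∈ t, e.2.1 ∈ S)
    (hA : ∀ x, #{e ∈ t | e.1 = x} ≤ k) (hB : ∀ x, #{e ∈ t | e.2.1 = x} ≤ k) :
    ∃ t' ⊇ t, (∀ e ∈ t', e.1 ∈ S) ∧ (∀ e ∈ t', e.2.1 ∈ S) ∧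
      (∀ x ∈ S, #{e ∈ t' | e.1 = x} = k) ∧ ∀ x ∈ S, #{e ∈ t' | e.2.1 = x} = k := by
  obtain ⟨d, hd⟩ : ∃ d, #t + d = k * #S :=
    ⟨k * #S - #t, by have := card_le_mul_card_image_of_maps_to hAS k fun x _ => hA x; omega⟩
  induction d generalizing t with
  | zero => exact ⟨t, subset_rfl, hAS, hBS, card_filter_eq_of_card_eq_mul hAS hA hd,
      card_filter_eq_of_card_eq_mul hBS hB hd⟩
  | succ d ih =>
    obtain ⟨x, hx, hxk⟩ := exists_card_filter_lt_of_card_lt hAS (by omega : #t < k * #S)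
    obtain ⟨y, hy, hyk⟩ := exists_card_filter_lt_of_card_lt hBS (by omega : #t < k * #S)
    obtain ⟨i, hi⟩ := Infinite.exists_notMem_finset (t.image fun e => e.2.2)
    have hnew : (x, y, i) ∉ t := fun h => hi (mem_image_of_mem _ h)
    obtain ⟨t', ht', h⟩ := ih (t := insert (x, y, i) t)
      (forall_mem_insert _ _ _ |>.mpr ⟨hx, hAS⟩) (forall_mem_insert _ _ _ |>.mpr ⟨hy, hBS⟩)
      (card_filter_insert_le hA hxk) (card_filter_insert_le hB hyk)
      (by rw [card_insert_of_notMem hnew]; omega)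
    exact ⟨t', (subset_insert _ _).trans ht', h⟩

theorem exists_properColouring [DecidableEq ε] (A B : ε → κ) (s : Finset ε) (ℓ : ℕ)
    (hA : ∀ x, #{e ∈ s | A e = x} ≤ ℓ) (hB : ∀ x, #{e ∈ s | B e = x} ≤ ℓ) :
    ∃ φ : ε → ℕ, (∀ e ∈ s, φ e < ℓ) ∧ Set.InjOn (fun e => (A e, φ e)) s ∧
      Set.InjOn (fun e => (B e, φ e)) s := by
  classical
  set j : ε → κ × κ × (ε ⊕ ℕ) := fun e => (A e, B e, .inl e)
  have hj : Function.Injective j := fun e f h => Sum.inl_injective (congrArg (·.2.2) h)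
  obtain ⟨t, hst, htA, htB, hAk, hBk⟩ := exists_regular_supergraph (t := s.image j)
    (S := s.image A ∪ s.image B) (k := ℓ)
    (forall_mem_image.mpr fun e he => mem_union_left _ (mem_image_of_mem A he))
    (forall_mem_image.mpr fun e he => mem_union_right _ (mem_image_of_mem B he))
    (fun x => by rw [filter_image, card_image_of_injective _ hj]; exact hA x)
    (fun x => by rw [filter_image, card_image_of_injective _ hj]; exact hB x)
  obtain ⟨φ, hφ, hφA, hφB⟩ := exists_properColouring_of_regular ℓ htA htB hAk hBk
  have hmaps : Set.MapsTo j s t := fun e he => hst (mem_image_of_mem j he)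
  exact ⟨φ ∘ j, fun e he => hφ _ (hmaps he), hφA.comp hj.injOn hmaps, hφB.comp hj.injOn hmaps⟩

end Konig

theorem card_filter_beats_lt [DecidableEq α] [DecidableEq β] {A : ε → α} {B : ε → β}
    {φ : ε → ℕ} {s : Finset ε} {ℓ : ℕ} (hφ : ∀ e ∈ s, φ e < ℓ)
    (hA : Set.InjOn (fun e => (A e, φ e)) s) (hB : Set.InjOn (fun e => (B e, φ e)) s) {e : ε}
    (he : e ∈ s) : #{f ∈ s | Beats A B φ f e} < ℓ := by
  set t : Finset ε := {f ∈ s | Beats A B φ f e}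
  have hmaps : Set.MapsTo φ t ((range ℓ).erase (φ e)) := fun f hf => by
    obtain ⟨hfs, hfe⟩ := mem_filter.mp hf
    refine mem_erase.mpr ⟨?_, mem_range.mpr (hφ f hfs)⟩
    rcases hfe with ⟨-, h⟩ | ⟨-, h⟩ <;> omega
  have hinj : Set.InjOn φ t := fun f hf g hg hfg => by
    obtain ⟨hfs, hfe⟩ := mem_filter.mp hf
    obtain ⟨hgs, hge⟩ := mem_filter.mp hg
    rcases hfe with ⟨hf, hfφ⟩ | ⟨hf, hfφ⟩ <;> rcases hge with ⟨hg, hgφ⟩ | ⟨hg, hgφ⟩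
    · exact hA hfs hgs (Prod.ext (hf.trans hg.symm) hfg)
    · omega
    · omega
    · exact hB hfs hgs (Prod.ext (hf.trans hg.symm) hfg)
  calc #t ≤ #((range ℓ).erase (φ e)) := card_le_card_of_injOn φ hmaps hinj
    _ < ℓ := by
      have := hφ e he
      rw [card_erase_of_mem (mem_range.mpr this), card_range]
      omega

theorem exists_listColouring [DecidableEq ε] [DecidableEq κ] [Nonempty C] (A B : ε → κ)
    (s : Finset ε) (ℓ : ℕ) (hA : ∀ x, #{e ∈ s | A e = x} ≤ ℓ) (hB : ∀ x, #{e ∈ s | B e = x} ≤ ℓ)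
    (L : ε → Finset C) (hL : ∀ e ∈ s, ℓ ≤ #(L e)) :
    ∃ ω : ε → C, (∀ e ∈ s, ω e ∈ L e) ∧ Set.InjOn (fun e => (A e, ω e)) s ∧
      Set.InjOn (fun e => (B e, ω e)) s := by
  obtain ⟨φ, hφ, hφA, hφB⟩ := exists_properColouring A B s ℓ hA hB
  exact exists_listColouring_of_card_beats_lt A B φ s L hφA hφB fun e he =>
    (card_filter_beats_lt hφ hφA hφB he).trans_le (hL e he)

theorem exists_blocks [DecidableEq ε] (s : Finset ε) {ℓ : ℕ} (hℓ : 0 < ℓ) :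
    ∃ b : ε → ℕ, (∀ e ∈ s, b e < (#s + ℓ - 1) / ℓ) ∧ ∀ i, #{e ∈ s | b e = i} ≤ ℓ := by
  set r : ε → ℕ := fun e => s.toList.idxOf e
  refine ⟨fun e => r e / ℓ, fun e he => ?_, fun i => ?_⟩
  · have : r e < #s := by
      rw [← length_toList]; exact List.idxOf_lt_length_iff.mpr (mem_toList.mpr he)
    calc r e / ℓ < (r e + ℓ) / ℓ := by rw [Nat.add_div_right _ hℓ]; omega
      _ ≤ (#s + ℓ - 1) / ℓ := Nat.div_le_div_right (by omega)
  · set t : Finset ε := {e ∈ s | r e / ℓ = i}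
    have hmaps : Set.MapsTo r t (Ico (i * ℓ) (i * ℓ + ℓ)) := fun e he => by
      have := (Nat.div_eq_iff hℓ).mp (mem_filter.mp he).2
      exact mem_Ico.mpr ⟨this.1, by omega⟩
    have hinj : Set.InjOn r t := fun e he f _ hef =>
      (List.idxOf_inj (mem_toList.mpr (mem_filter.mp he).1)).mp hef
    simpa using card_le_card_of_injOn r hmaps hinj

theorem exists_fiberwise_blocks [DecidableEq ε] [DecidableEq κ] (p : ε → κ) (s : Finset ε)
    {ℓ : ℕ} (hℓ : 0 < ℓ) :
    ∃ b : ε → ℕ, (∀ e ∈ s, b e < (#{f ∈ s | p f = p e} + ℓ - 1) / ℓ) ∧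
      ∀ z, #{e ∈ s | (p e, b e) = z} ≤ ℓ := by
  choose b hb hbℓ using fun x => exists_blocks {e ∈ s | p e = x} hℓ
  refine ⟨fun e => b (p e) e, fun e he => hb _ e (mem_filter.mpr ⟨he, rfl⟩), fun ⟨x, i⟩ => ?_⟩
  convert hbℓ x i using 2
  ext e
  simp only [mem_filter, Prod.ext_iff]
  constructor
  · rintro ⟨he, rfl, rfl⟩; exact ⟨⟨he, rfl⟩, rfl⟩
  · rintro ⟨⟨he, rfl⟩, rfl⟩; exact ⟨he, rfl, rfl⟩

theorem card_filter_eq_and_eq_le [DecidableEq κ] [DecidableEq C] {p : ε → κ} {b : ε → ℕ}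
    {ω : ε → C} {s : Finset ε} {m : κ → ℕ} (hb : ∀ e ∈ s, b e < m (p e))
    (hω : Set.InjOn (fun e => ((p e, b e), ω e)) s)
    (v : κ) (c : C) : #{e ∈ s | p e = v ∧ ω e = c} ≤ m v := by
  set t : Finset ε := {e ∈ s | p e = v ∧ ω e = c}
  have hmaps : Set.MapsTo b t (range (m v)) := fun e he => by
    obtain ⟨hes, rfl, -⟩ := mem_filter.mp he
    exact mem_range.mpr (hb e hes)
  have hinj : Set.InjOn b t := fun e he f hf hef => by
    obtain ⟨hes, hpe, hωe⟩ := mem_filter.mp he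
    obtain ⟨hfs, hpf, hωf⟩ := mem_filter.mp hf
    exact hω hes hfs (Prod.ext (Prod.ext (hpe.trans hpf.symm) hef) (hωe.trans hωf.symm))
  simpa using card_le_card_of_injOn b hmaps hinj

end BipartiteEdgeColouring

theorem Sym2.mem_iff_out {α : Type*} {a : α} {e : Sym2 α} : a ∈ e ↔ a = e.out.1 ∨ a = e.out.2 := by
  rw [← Sym2.mem_iff, show s(e.out.1, e.out.2) = e from e.out_eq]

namespace SimpleGraph

open BipartiteEdgeColouring

variable {V C : Type*} [Fintype V] [DecidableEq V] (G : SimpleGraph V) [DecidableRel G.Adj]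

theorem incidenceFinset_eq_union_out (v : V) :
    G.incidenceFinset v = {e ∈ G.edgeFinset | e.out.1 = v} ∪ {e ∈ G.edgeFinset | e.out.2 = v} := by
  ext e
  rw [mem_incidenceFinset, ← filter_or, mem_filter, mem_edgeFinset, incidenceSet,
    Set.mem_sep_iff, Sym2.mem_iff_out, eq_comm (a := v), eq_comm (a := v)]

theorem disjoint_filter_out (v : V) :
    Disjoint {e ∈ G.edgeFinset | e.out.1 = v} {e ∈ G.edgeFinset | e.out.2 = v} := by
  rw [disjoint_filter]
  intro e he h1 h2
  rw [mem_edgeFinset, ← e.out_eq, mem_edgeSet] at he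
  exact he.ne (h1.trans h2.symm)

/-- Split the out- and in-edges of each vertex (for the orientation `e.out.1 → e.out.2`) into
blocks of `ℓ`, and list-colour the bipartite graph of out-blocks versus in-blocks with Galvin's
theorem: each colour occurs at most once per block. -/
theorem exists_listColouring_card_filter_mul_le [DecidableEq C] [Nonempty C]
    (L : Sym2 V → Finset C) {ℓ : ℕ} (hℓ : 0 < ℓ) (hL : ∀ e ∈ G.edgeSet, ℓ ≤ #(L e)) :
    ∃ ω : Sym2 V → C, (∀ e ∈ G.edgeSet, ω e ∈ L e) ∧
      ∀ v c, #{e ∈ G.incidenceFinset v | ω e = c} * ℓ ≤ G.degree v + 2 * (ℓ - 1) := by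
  obtain ⟨bOut, hbOut, hOut⟩ := exists_fiberwise_blocks (fun e : Sym2 V => e.out.1) G.edgeFinset hℓ
  obtain ⟨bIn, hbIn, hIn⟩ := exists_fiberwise_blocks (fun e : Sym2 V => e.out.2) G.edgeFinset hℓ
  obtain ⟨ω, hωL, hωOut, hωIn⟩ := exists_listColouring (fun e => (e.out.1, bOut e))
    (fun e => (e.out.2, bIn e)) G.edgeFinset ℓ hOut hIn L fun e he => hL e (mem_edgeFinset.mp he)
  refine ⟨ω, fun e he => hωL e (mem_edgeFinset.mpr he), fun v c => ?_⟩
  have hsplit : #{e ∈ G.incidenceFinset v | ω e = c} ≤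
      #{e ∈ G.edgeFinset | e.out.1 = v ∧ ω e = c} +
        #{e ∈ G.edgeFinset | e.out.2 = v ∧ ω e = c} := by
    rw [incidenceFinset_eq_union_out, filter_union, filter_filter, filter_filter]
    exact card_union_le _ _
  have hdeg :
      #{e ∈ G.edgeFinset | e.out.1 = v} + #{e ∈ G.edgeFinset | e.out.2 = v} = G.degree v := by
    rw [← card_incidenceFinset_eq_degree, incidenceFinset_eq_union_out,
      card_union_of_disjoint (G.disjoint_filter_out v)]
  have hOutc := card_filter_eq_and_eq_le
    (m := fun x => (#{e ∈ G.edgeFinset | e.out.1 = x} + ℓ - 1) / ℓ) hbOut hωOut v c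
  have hInc := card_filter_eq_and_eq_le
    (m := fun x => (#{e ∈ G.edgeFinset | e.out.2 = x} + ℓ - 1) / ℓ) hbIn hωIn v c
  have h1 := Nat.div_mul_le_self (#{e ∈ G.edgeFinset | e.out.1 = v} + ℓ - 1) ℓ
  have h2 := Nat.div_mul_le_self (#{e ∈ G.edgeFinset | e.out.2 = v} + ℓ - 1) ℓ
  have := Nat.mul_le_mul_right ℓ (hsplit.trans (add_le_add hOutc hInc))
  rw [add_mul] at this
  omega

end SimpleGraph

open Finset SimpleGraph in
theorem alpha_majority_list_edge_colouring_of_minDegree_general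
    (ℓ : ℕ) (hℓ : 2 ≤ ℓ) (α : ℝ) (hαℓ : 1 < α * ℓ)
    {V : Type*} [Fintype V] [DecidableEq V] (G : SimpleGraph V) [DecidableRel G.Adj]
    (hδ : ∀ v : V, (2 * ℓ - 2 : ℝ) / (α * ℓ - 1) ≤ (G.degree v : ℝ))
    {C : Type*} (L : Sym2 V → Finset C)
    (hL : ∀ e ∈ G.edgeSet, (L e).card = ℓ) :
    ∃ ω : Sym2 V → C,
      (∀ e ∈ G.edgeSet, ω e ∈ L e) ∧
      ∀ (v : V) (c : C),
        ((G.incidenceSet v ∩ {e | ω e = c}).ncard : ℝ) ≤ α * (G.degree v : ℝ) := by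
  classical
  have hℓ' : (2 : ℝ) ≤ ℓ := by exact_mod_cast hℓ
  have hαℓ' : 0 < α * ℓ - 1 := by linarith
  rcases isEmpty_or_nonempty V with hV | ⟨⟨v⟩⟩
  · exact ⟨isEmptyElim, fun e => isEmptyElim e, fun v => isEmptyElim v⟩
  obtain ⟨w, hvw⟩ := (G.degree_pos_iff_exists_adj v).mp <| by
    exact_mod_cast (div_pos (by linarith) hαℓ').trans_le (hδ v)
  obtain ⟨c₀, -⟩ : (L s(v, w)).Nonempty := card_pos.mp (by rw [hL s(v, w) hvw]; omega)
  have : Nonempty C := ⟨c₀⟩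
  obtain ⟨ω, hωL, hω⟩ :=
    G.exists_listColouring_card_filter_mul_le L (by omega) fun e he => (hL e he).ge
  refine ⟨ω, hωL, fun v c => ?_⟩
  have hset : G.incidenceSet v ∩ {e | ω e = c} = ↑{e ∈ G.incidenceFinset v | ω e = c} := by
    ext; simp
  have hm := hω v c
  rw [← Nat.cast_le (α := ℝ)] at hm
  push_cast [Nat.cast_sub (by omega : 1 ≤ ℓ)] at hm
  have hd := (div_le_iff₀ hαℓ').mp (hδ v)
  rw [hset, Set.ncard_coe_finset]
  nlinarith

/-- For any integer `ℓ ≥ 2` and real `α ∈ (0,1)` with `αℓ > 1`, every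
finite simple graph `G` with minimum degree at least `(2ℓ−2)/(αℓ−1)` admits, for every
list assignment with lists of size `ℓ`, an `L`-colouring that is an `α`-majority edge
colouring. -/
theorem alpha_majority_list_edge_colouring_of_minDegree
    (ℓ : ℕ) (hℓ : 2 ≤ ℓ) (α : ℝ) (hα : α ∈ Set.Ioo (0 : ℝ) 1) (hαℓ : 1 < α * ℓ)
    {V : Type*} [Fintype V] [DecidableEq V] (G : SimpleGraph V) [DecidableRel G.Adj]
    (hδ : ∀ v : V, (2 * ℓ - 2 : ℝ) / (α * ℓ - 1) ≤ (G.degree v : ℝ))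
    {C : Type*} (L : Sym2 V → Finset C)
    (hL : ∀ e ∈ G.edgeSet, (L e).card = ℓ) :
    ∃ ω : Sym2 V → C,
      (∀ e ∈ G.edgeSet, ω e ∈ L e) ∧
      ∀ (v : V) (c : C),
        ((G.incidenceSet v ∩ {e | ω e = c}).ncard : ℝ) ≤ α * (G.degree v : ℝ) :=
  alpha_majority_list_edge_colouring_of_minDegree_general ℓ hℓ α hαℓ G hδ L hL
end

section
/- Fix a real ε > 0, a real a ∈ (0,1) and a positive integer δ₀. Suppose that every finite simple graph in which every vertex degree lies in the interval [δ₀, 2δ₀ − 1] admits, for every ε-excessive list assignment L with tolerance function α satisfying min(α) ≥ a, an α-majority L-colouring. Then every finite simple graph with minimum degree at least δ₀ admits, for every ε-excessive list assignment L with tolerance function α satisfying min(α) ≥ a, an α-majority L-colouring. -/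
/-- `G` admits an `α`-majority `L`-colouring for every `ε`-excessive list assignment `L`
with tolerance function `α` satisfying `min(α) ≥ a`. -/
def MajorityChoosable (ε a : ℝ) {V : Type} [Fintype V] (G : SimpleGraph V) : Prop :=
  ∀ (C : Type) (α : C → ℝ) (L : Sym2 V → Finset C),
    (∀ c, α c ∈ Set.Ioo (0 : ℝ) 1) →
    (∀ c, a ≤ α c) →
    (∀ e ∈ G.edgeSet, 1 + ε ≤ ∑ c ∈ L e, α c) →
    ∃ ω : Sym2 V → C,
      (∀ e ∈ G.edgeSet, ω e ∈ L e) ∧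
      ∀ (v : V) (c : C),
        ((G.incidenceSet v ∩ {e | ω e = c}).ncard : ℝ) ≤
          α c * ((G.neighborSet v).ncard : ℝ)

/-!
Split every vertex `v` of degree `d ≥ δ₀` into `⌊d / δ₀⌋` copies and hand out its `d` edges
among them, `δ₀` to each copy except the last, which keeps the remaining `δ₀, …, 2δ₀ − 1`.
The split graph has the same edges as `G`, so a majority colouring of it for the pulled-back lists
is an `L`-colouring of `G`; the colour-`c` edges at `v` are those at its copies, and the bounds
`α(c) · d(copy)` add up to `α(c) · d(v)`.
-/

theorem Nat.setOf_lt_and_min_div_eq {d δ₀ i : ℕ} (hδ₀ : 0 < δ₀) (hi : i < d / δ₀) :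
    {m | m < d ∧ min (m / δ₀) (d / δ₀ - 1) = i} =
      Set.Ico (i * δ₀) (if i + 1 = d / δ₀ then d else (i + 1) * δ₀) := by
  ext m
  have h₁ : m / δ₀ < d / δ₀ → m < d := fun h =>
    ((Nat.div_lt_iff_lt_mul hδ₀).1 h).trans_le (Nat.div_mul_le_self d δ₀)
  have h₂ : m < d → m / δ₀ ≤ d / δ₀ := fun h => Nat.div_le_div_right h.le
  simp only [Set.mem_ofPred_eq, Set.mem_Ico, ← Nat.le_div_iff_mul_le hδ₀]
  split_ifs with hlast
  · omega
  · rw [← Nat.div_lt_iff_lt_mul hδ₀]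
    omega

theorem Nat.ncard_setOf_lt_and_min_div_eq_bounds {d δ₀ i : ℕ} (hδ₀ : 0 < δ₀) (hi : i < d / δ₀) :
    δ₀ ≤ {m | m < d ∧ min (m / δ₀) (d / δ₀ - 1) = i}.ncard ∧
      {m | m < d ∧ min (m / δ₀) (d / δ₀ - 1) = i}.ncard ≤ 2 * δ₀ - 1 := by
  rw [Nat.setOf_lt_and_min_div_eq hδ₀ hi, Set.ncard_Ico_nat]
  split_ifs with hlast
  · have hle : (i + 1) * δ₀ ≤ d := hlast ▸ Nat.div_mul_le_self d δ₀
    have hlt : d < (i + 1) * δ₀ + δ₀ := hlast ▸ Nat.lt_div_mul_add hδ₀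
    rw [add_one_mul] at hle hlt
    omega
  · rw [add_one_mul]
    omega

theorem Set.exists_fiber_ncard_bounds {α : Type*} {s : Set α} {δ₀ : ℕ} (hδ₀ : 0 < δ₀)
    (hs : δ₀ ≤ s.ncard) :
    ∃ g : α → Fin (s.ncard / δ₀), ∀ i,
      δ₀ ≤ {x ∈ s | g x = i}.ncard ∧ {x ∈ s | g x = i}.ncard ≤ 2 * δ₀ - 1 := by
  classical
  set d := s.ncard
  have hk : 0 < d / δ₀ := Nat.div_pos hs hδ₀
  have : Finite s := Set.finite_of_ncard_pos (hδ₀.trans_le hs)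
  let e : s ≃ Fin d := Finite.equivFinOfCardEq (Nat.card_coe_set_eq s)
  let bucket (m : ℕ) : ℕ := min (m / δ₀) (d / δ₀ - 1)
  have hbucket (m : ℕ) : bucket m < d / δ₀ := (min_le_right _ _).trans_lt (by omega)
  let g (x : α) : Fin (d / δ₀) := if hx : x ∈ s then ⟨bucket (e ⟨x, hx⟩), hbucket _⟩ else ⟨0, hk⟩
  refine ⟨g, fun i => ?_⟩
  have hfiber : {x ∈ s | g x = i}.ncard = {m | m < d ∧ bucket m = i}.ncard := by
    refine Set.ncard_congr (fun x (hx : x ∈ s ∧ _) => e ⟨x, hx.1⟩) ?_ ?_ ?_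
    · rintro x ⟨hx, rfl⟩
      simp [g, bucket, hx]
    · intro x y hx hy hxy
      simpa using e.injective (Fin.ext hxy)
    · rintro m ⟨hm, hmi⟩
      refine ⟨e.symm ⟨m, hm⟩, ⟨Subtype.prop _, Fin.ext ?_⟩, by simp⟩
      simpa [g] using hmi
  rw [hfiber]
  exact Nat.ncard_setOf_lt_and_min_div_eq_bounds hδ₀ i.2

namespace SimpleGraph

variable {V : Type*} {ι : V → Type*}

/-- `f v u` is the copy of `v` that receives the edge `vu`. -/
def split (G : SimpleGraph V) (f : ∀ v, V → ι v) : SimpleGraph (Σ v, ι v) where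
  Adj a b := G.Adj a.1 b.1 ∧ f a.1 b.1 = a.2 ∧ f b.1 a.1 = b.2
  symm := ⟨fun _ _ h => ⟨h.1.symm, h.2.2, h.2.1⟩⟩
  loopless := ⟨fun _ h => G.loopless.irrefl _ h.1⟩

def splitEdge (f : ∀ v, V → ι v) : Sym2 V → Sym2 (Σ v, ι v) :=
  Sym2.lift ⟨fun u w => s(⟨u, f u w⟩, ⟨w, f w u⟩), fun _ _ => Sym2.eq_swap⟩

variable (G : SimpleGraph V) (f : ∀ v, V → ι v)

def splitProj : G.split f →g G := ⟨Sigma.fst, fun h => h.1⟩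

@[simp]
theorem splitEdge_mk (u w : V) : splitEdge f s(u, w) = s(⟨u, f u w⟩, ⟨w, f w u⟩) := rfl

@[simp]
theorem map_fst_splitEdge (e : Sym2 V) : (splitEdge f e).map Sigma.fst = e := by
  induction e using Sym2.ind with
  | _ u w => simp

theorem splitEdge_injective : Function.Injective (splitEdge f) :=
  Function.LeftInverse.injective (map_fst_splitEdge f)

theorem splitEdge_mem_edgeSet {e : Sym2 V} (he : e ∈ G.edgeSet) :
    splitEdge f e ∈ (G.split f).edgeSet := by
  induction e using Sym2.ind with
  | _ u w => exact ⟨he, rfl, rfl⟩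

theorem image_splitEdge_incidenceSet_subset (v : V) :
    splitEdge f '' G.incidenceSet v ⊆ ⋃ i, (G.split f).incidenceSet ⟨v, i⟩ := by
  rintro _ ⟨e, ⟨he, hv⟩, rfl⟩
  obtain ⟨u, rfl⟩ := Sym2.mem_iff_exists.1 hv
  exact Set.mem_iUnion.2 ⟨f v u, splitEdge_mem_edgeSet G f he, Sym2.mem_mk_left _ _⟩

theorem ncard_incidenceSet_inter_preimage_le [Finite V] [∀ v, Fintype (ι v)]
    (v : V) (S : Set (Sym2 (Σ v, ι v))) :
    (G.incidenceSet v ∩ splitEdge f ⁻¹' S).ncard ≤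
      ∑ i, ((G.split f).incidenceSet ⟨v, i⟩ ∩ S).ncard :=
  calc (G.incidenceSet v ∩ splitEdge f ⁻¹' S).ncard
      = (splitEdge f '' G.incidenceSet v ∩ S).ncard := by
        rw [← Set.image_inter_preimage, Set.ncard_image_of_injective _ (splitEdge_injective f)]
    _ ≤ (⋃ i, (G.split f).incidenceSet ⟨v, i⟩ ∩ S).ncard := by
        rw [← Set.iUnion_inter]
        exact Set.ncard_le_ncard (Set.inter_subset_inter_left _
          (image_splitEdge_incidenceSet_subset G f v))
    _ ≤ _ := by
        simpa using Finset.univ.set_ncard_biUnion_le fun i => (G.split f).incidenceSet ⟨v, i⟩ ∩ S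

theorem neighborSet_split (v : V) (i : ι v) :
    (G.split f).neighborSet ⟨v, i⟩ =
      (fun u => ⟨u, f u v⟩) '' {u ∈ G.neighborSet v | f v u = i} := by
  ext ⟨u, j⟩
  constructor
  · rintro ⟨hvu, hi, hj⟩
    exact ⟨u, ⟨hvu, hi⟩, Sigma.ext rfl (heq_of_eq hj)⟩
  · rintro ⟨u, ⟨hvu, hi⟩, h⟩
    cases h
    exact ⟨hvu, hi, rfl⟩

theorem ncard_neighborSet_split (v : V) (i : ι v) :
    ((G.split f).neighborSet ⟨v, i⟩).ncard = {u ∈ G.neighborSet v | f v u = i}.ncard :=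
  (neighborSet_split G f v i) ▸ Set.ncard_image_of_injective _ fun _ _ h => congrArg Sigma.fst h

theorem sum_ncard_neighborSet_split [Finite V] (v : V) [Fintype (ι v)] :
    ∑ i, ((G.split f).neighborSet ⟨v, i⟩).ncard = (G.neighborSet v).ncard := by
  simp_rw [ncard_neighborSet_split]
  rw [← finsum_eq_sum_of_fintype, ← Set.ncard_iUnion_of_finite (fun _ => Set.toFinite _)]
  · congr
    ext u
    simp
  · exact fun i j hij => Set.disjoint_left.2 fun u hi hj => hij (hi.2.symm.trans hj.2)

end SimpleGraph

theorem MajorityChoosable.of_split {ε a : ℝ} {V : Type} [Fintype V] {G : SimpleGraph V}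
    {ι : V → Type} [∀ v, Fintype (ι v)] {f : ∀ v, V → ι v}
    (h : MajorityChoosable ε a (G.split f)) : MajorityChoosable ε a G := by
  intro C α L hα hαa hL
  obtain ⟨ω, hωL, hω⟩ := h C α (fun e => L (e.map Sigma.fst)) hα hαa
    fun e he => hL _ ((G.splitProj f).map_mem_edgeSet he)
  refine ⟨ω ∘ SimpleGraph.splitEdge f, fun e he => ?_, fun v c => ?_⟩
  · simpa using hωL _ (G.splitEdge_mem_edgeSet f he)
  calc ((G.incidenceSet v ∩ SimpleGraph.splitEdge f ⁻¹' {e | ω e = c}).ncard : ℝ)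
      ≤ ∑ i, (((G.split f).incidenceSet ⟨v, i⟩ ∩ {e | ω e = c}).ncard : ℝ) := by
        exact_mod_cast G.ncard_incidenceSet_inter_preimage_le f v _
    _ ≤ ∑ i, α c * (((G.split f).neighborSet ⟨v, i⟩).ncard : ℝ) :=
        Finset.sum_le_sum fun i _ => hω ⟨v, i⟩ c
    _ = α c * ((G.neighborSet v).ncard : ℝ) := by
        rw [← Finset.mul_sum, ← Nat.cast_sum, G.sum_ncard_neighborSet_split]

theorem SimpleGraph.exists_split_ncard_neighborSet_bounds {V : Type*} [Finite V]
    (G : SimpleGraph V) {δ₀ : ℕ} (hδ₀ : 0 < δ₀) (hδ : ∀ v, δ₀ ≤ (G.neighborSet v).ncard) :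
    ∃ f : ∀ v, V → Fin ((G.neighborSet v).ncard / δ₀), ∀ w,
      δ₀ ≤ ((G.split f).neighborSet w).ncard ∧ ((G.split f).neighborSet w).ncard ≤ 2 * δ₀ - 1 := by
  choose f hf using fun v => Set.exists_fiber_ncard_bounds hδ₀ (hδ v)
  exact ⟨f, fun ⟨v, i⟩ => G.ncard_neighborSet_split f v i ▸ hf v i⟩

theorem majorityChoosable_of_degrees_in_interval_general
    (ε a : ℝ) (δ₀ : ℕ) (hδ₀ : 0 < δ₀)
    (H : ∀ (W : Type) (_ : Fintype W) (G : SimpleGraph W),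
      (∀ w, δ₀ ≤ (G.neighborSet w).ncard ∧ (G.neighborSet w).ncard ≤ 2 * δ₀ - 1) →
      MajorityChoosable ε a G)
    (V : Type) [Fintype V] (G : SimpleGraph V)
    (hδ : ∀ v, δ₀ ≤ (G.neighborSet v).ncard) :
    MajorityChoosable ε a G := by
  obtain ⟨f, hf⟩ := G.exists_split_ncard_neighborSet_bounds hδ₀ hδ
  exact .of_split (H _ inferInstance _ hf)

/-- (Vertex splitting reduction.) If every finite simple graph with all
degrees in `[δ₀, 2δ₀ − 1]` admits an `α`-majority `L`-colouring for every `ε`-excessive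
list assignment with `min(α) ≥ a`, then so does every finite simple graph with minimum
degree at least `δ₀`. -/
theorem majorityChoosable_of_degrees_in_interval
    (ε a : ℝ) (hε : 0 < ε) (ha : a ∈ Set.Ioo (0 : ℝ) 1) (δ₀ : ℕ) (hδ₀ : 0 < δ₀)
    (H : ∀ (W : Type) (_ : Fintype W) (G : SimpleGraph W),
      (∀ w, δ₀ ≤ (G.neighborSet w).ncard ∧ (G.neighborSet w).ncard ≤ 2 * δ₀ - 1) →
      MajorityChoosable ε a G)
    (V : Type) [Fintype V] (G : SimpleGraph V)
    (hδ : ∀ v, δ₀ ≤ (G.neighborSet v).ncard) :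
    MajorityChoosable ε a G :=
  majorityChoosable_of_degrees_in_interval_general ε a δ₀ hδ₀ H V G hδ
end

section
/- For every fixed ε ∈ (0, 0.9] and a ∈ (0,1), every finite simple graph G with minimum degree δ(G) ≥ ⌈626·a⁻¹·ε⁻²·ln((aε)⁻¹)⌉ admits, for every ε-excessive list assignment L of G with tolerance function α satisfying min(α) ≥ a, an α-majority L-colouring. -/
/-!
Give each edge `e` and colour `c ∈ L e` the weight `x e c = α c / ∑_{c' ∈ L e} α c'`. This is a
fractional `L`-colouring in which colour `c` occupies at most `α c · d(v) / (1 + ε)` of the edges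
at `v`. Every pair `(e, c)` enters only the two vertex constraints of the endpoints of `e`, so
Beck–Fiala iterated rounding turns `x` into an `L`-colouring while moving each vertex constraint by
at most `4`: as long as a constraint has more than `4` fractional pairs it is kept exact, and such
constraints together with the edge equations involving a fractional pair (each involves at least
two) are fewer than the fractional pairs, so some nonzero direction preserves them all, and moving
along it makes one more pair integral. The degree bound
gives `α c · d(v) · ε / (1 + ε) ≥ 4`, which absorbs the error.
-/

open Finset

theorem Module.Dual.exists_ne_zero_forall_eq_zero {ι K V : Type*} [Fintype ι] [Field K]
    [AddCommGroup V] [Module K V] [FiniteDimensional K V] (f : ι → Module.Dual K V)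
    (hf : Fintype.card ι < Module.finrank K V) : ∃ v ≠ 0, ∀ j, f j v = 0 := by
  have hker : LinearMap.ker (LinearMap.pi f) ≠ ⊥ :=
    LinearMap.ker_ne_bot_of_finrank_lt (by rwa [Module.finrank_fintype_fun_eq_card])
  obtain ⟨v, hv, hv0⟩ := (Submodule.ne_bot_iff _).1 hker
  exact ⟨v, hv0, congrFun (LinearMap.mem_ker.1 hv)⟩

theorem exists_pos_add_mul_eq_zero_or_eq_one {x z : ℝ} (hx : x ∈ Set.Ioo 0 1) (hz : z ≠ 0) :
    ∃ τ > 0, x + τ * z = 0 ∨ x + τ * z = 1 := by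
  obtain ⟨hx0, hx1⟩ := hx
  rcases hz.lt_or_gt with hz | hz
  · exact ⟨-x / z, div_pos_of_neg_of_neg (by linarith) hz, Or.inl (by field_simp; ring)⟩
  · exact ⟨(1 - x) / z, div_pos (by linarith) hz, Or.inr (by field_simp; ring)⟩

theorem exists_add_mul_mem_Icc_eq_zero_or_eq_one {I : Type*} [Fintype I] {x z : I → ℝ}
    (hx : ∀ i, x i ∈ Set.Icc 0 1) (hxz : ∀ i, z i ≠ 0 → x i ∈ Set.Ioo 0 1) (hz : z ≠ 0) :
    ∃ s : ℝ, (∀ i, x i + s * z i ∈ Set.Icc 0 1) ∧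
      ∃ j, z j ≠ 0 ∧ (x j + s * z j = 0 ∨ x j + s * z j = 1) := by
  classical
  choose! τ hτ hτ01 using fun i (hi : z i ≠ 0) =>
    exists_pos_add_mul_eq_zero_or_eq_one (hxz i hi) hi
  have hP : ({i | z i ≠ 0} : Finset I).Nonempty := by
    obtain ⟨i, hi⟩ := Function.ne_iff.1 hz
    exact ⟨i, by simpa using hi⟩
  obtain ⟨j, hj, hjmin⟩ := exists_min_image _ τ hP
  simp only [mem_filter, mem_univ, true_and] at hj hjmin
  refine ⟨τ j, fun i => ?_, j, hj, hτ01 j hj⟩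
  by_cases hi : z i = 0
  · simpa [hi] using hx i
  have hend : x i + τ i * z i ∈ Set.Icc (0 : ℝ) 1 := by
    rcases hτ01 i hi with h | h <;> rw [h] <;> simp
  have hmem := (convex_Icc (0 : ℝ) 1).add_smul_mem (hx i) (y := τ i * z i) hend
    (t := τ j / τ i) ⟨by positivity [(hτ j hj).le, (hτ i hi).le],
      (div_le_one (hτ i hi)).2 (hjmin i hi)⟩
  rwa [smul_eq_mul, ← mul_assoc, div_mul_cancel₀ _ (hτ i hi).ne'] at hmem

theorem card_filter_lt_card_filter_mul_le {I R : Type*} [DecidableEq R] (t : ℕ)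
    (rows : I → Finset R) (hrows : ∀ i, #(rows i) ≤ t) (F : Finset I) :
    #{r ∈ F.biUnion rows | 2 * t < #{i ∈ F | r ∈ rows i}} * (2 * t + 1) ≤ #F * t :=
  card_mul_le_card_mul (fun r (i : I) => r ∈ rows i)
    (fun _ hr => (mem_filter.1 hr).2)
    (fun i _ => (card_le_card fun _ hr => (mem_filter.1 hr).2).trans (hrows i))

section Rounding

variable {I R E : Type*} [Fintype I]

noncomputable def fractionalCoords (x : I → ℝ) : Finset I := {i | x i ≠ 0 ∧ x i ≠ 1}

theorem mem_fractionalCoords {x : I → ℝ} {i : I} :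
    i ∈ fractionalCoords x ↔ x i ≠ 0 ∧ x i ≠ 1 := by
  simp [fractionalCoords]

theorem notMem_fractionalCoords {x : I → ℝ} {i : I} :
    i ∉ fractionalCoords x ↔ x i = 0 ∨ x i = 1 := by
  rw [mem_fractionalCoords, not_and_or, not_not, not_not]

theorem mem_Ioo_of_mem_fractionalCoords {x : I → ℝ} (hx : ∀ i, x i ∈ Set.Icc 0 1) {i : I}
    (hi : i ∈ fractionalCoords x) : x i ∈ Set.Ioo 0 1 := by
  rw [mem_fractionalCoords] at hi
  exact ⟨(hx i).1.lt_of_ne' hi.1, (hx i).2.lt_of_ne hi.2⟩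

theorem two_le_card_filter_mem_fractionalCoords [DecidableEq I] {x : I → ℝ}
    (hx : ∀ i, x i ∈ Set.Icc 0 1) {S : Finset I} {k : ℤ} (hk : ∑ i ∈ S, x i = k) {i : I}
    (hiS : i ∈ S) (hi : i ∈ fractionalCoords x) : 2 ≤ #{j ∈ S | j ∈ fractionalCoords x} := by
  by_contra! h
  have hone : {j ∈ S | j ∈ fractionalCoords x} = {i} :=
    eq_singleton_iff_unique_mem.2 ⟨mem_filter.2 ⟨hiS, hi⟩, fun j hj =>
      card_le_one.1 (by omega) j hj i (mem_filter.2 ⟨hiS, hi⟩)⟩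
  have hint : ∀ j ∈ S.erase i, x j = ((if x j = 1 then 1 else 0 : ℤ) : ℝ) := by
    intro j hj
    have hjF : j ∉ fractionalCoords x := fun hjF => (mem_erase.1 hj).1
      (mem_singleton.1 (hone ▸ mem_filter.2 ⟨(mem_erase.1 hj).2, hjF⟩))
    rcases notMem_fractionalCoords.1 hjF with h | h <;> simp [h]
  rw [← add_sum_erase S x hiS, sum_congr rfl hint] at hk
  set m : ℤ := k - ∑ j ∈ S.erase i, if x j = 1 then 1 else 0
  have hxi : x i = m := by
    push_cast [m] at hk ⊢
    linarith
  obtain ⟨h0, h1⟩ := mem_Ioo_of_mem_fractionalCoords hx hi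
  rw [hxi] at h0 h1
  have : 0 < m := by exact_mod_cast h0
  have : m < 1 := by exact_mod_cast h1
  omega

theorem card_image_fractionalCoords_mul_two_le [DecidableEq I] [DecidableEq E] (group : I → E)
    {x : I → ℝ} (hx : ∀ i, x i ∈ Set.Icc 0 1) (hint : ∀ e, ∃ k : ℤ, ∑ i with group i = e, x i = k) :
    #((fractionalCoords x).image group) * 2 ≤ #(fractionalCoords x) := by
  simpa using card_mul_le_card_mul (fun e i => group i = e) (n := 1)
    (fun e he => by
      obtain ⟨i, hi, rfl⟩ := mem_image.1 he
      obtain ⟨k, hk⟩ := hint (group i)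
      have := two_le_card_filter_mem_fractionalCoords hx hk (by simp) hi
      convert this using 2; ext; simp [and_comm])
    (fun i _ => card_le_one.2 fun e he e' he' => by
      rw [mem_bipartiteBelow] at he he'
      exact he.2.symm.trans he'.2)

theorem sum_le_sum_add_card_filter_fractionalCoords [DecidableEq I] {x y : I → ℝ}
    (hx : ∀ i, 0 ≤ x i) (hy : ∀ i, y i ≤ 1) (hyx : ∀ i ∉ fractionalCoords x, y i = x i)
    (p : I → Prop) [DecidablePred p] :
    ∑ i with p i, y i ≤ ∑ i with p i, x i + #{i ∈ fractionalCoords x | p i} := by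
  have hcard : (#{i ∈ fractionalCoords x | p i} : ℝ) =
      ∑ i with p i, if i ∈ fractionalCoords x then 1 else 0 := by
    rw [sum_boole, filter_filter]
    congr 2
    ext i
    simp [and_comm]
  rw [hcard, ← sum_add_distrib]
  refine sum_le_sum fun i _ => ?_
  by_cases hi : i ∈ fractionalCoords x
  · simp only [hi, if_true]
    linarith [hy i, hx i]
  · simp [hi, hyx i hi]

variable [DecidableEq I] [DecidableEq R] [DecidableEq E] (t : ℕ) (rows : I → Finset R)
  (hrows : ∀ i, #(rows i) ≤ t) (group : I → E) {x : I → ℝ} (hx : ∀ i, x i ∈ Set.Icc 0 1)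
  (hint : ∀ e, ∃ k : ℤ, ∑ i with group i = e, x i = k)
include hrows hx hint

theorem card_image_add_card_filter_lt_card (hF : (fractionalCoords x).Nonempty) :
    #((fractionalCoords x).image group) +
      #{r ∈ (fractionalCoords x).biUnion rows | 2 * t < #{i ∈ fractionalCoords x | r ∈ rows i}}
      < #(fractionalCoords x) := by
  have hM := card_image_fractionalCoords_mul_two_le group hx hint
  have hA := card_filter_lt_card_filter_mul_le t rows hrows (fractionalCoords x)
  have := hF.card_pos
  nlinarith

theorem exists_ne_zero_sum_eq_zero (hF : (fractionalCoords x).Nonempty) :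
    ∃ z : I → ℝ, z ≠ 0 ∧ (∀ i ∉ fractionalCoords x, z i = 0) ∧
      (∀ e, ∑ i with group i = e, z i = 0) ∧
      ∀ r, 2 * t < #{i ∈ fractionalCoords x | r ∈ rows i} → ∑ i with r ∈ rows i, z i = 0 := by
  set F := fractionalCoords x
  set M := F.image group
  set A := {r ∈ F.biUnion rows | 2 * t < #{i ∈ F | r ∈ rows i}}
  let sumOver : Finset I → Module.Dual ℝ (I → ℝ) := fun S => ∑ i ∈ S, LinearMap.proj i
  have hsumOver : ∀ S z, sumOver S z = ∑ i ∈ S, z i := fun S z => by simp [sumOver]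
  -- one constraint per group meeting `F`, per heavy row, and per coordinate outside `F`
  obtain ⟨z, hz, hzc⟩ := Module.Dual.exists_ne_zero_forall_eq_zero
    (Sum.elim (fun e : M => sumOver {i | group i = e}) <|
      Sum.elim (fun r : A => sumOver {i | r.1 ∈ rows i}) fun i : ↥Fᶜ => LinearMap.proj i.1)
    (by
      have : #M + #A < #F := card_image_add_card_filter_lt_card t rows hrows group hx hint hF
      have := card_add_card_compl F
      simp only [Fintype.card_sum, Fintype.card_coe, Module.finrank_fintype_fun_eq_card]
      omega)
  have hzF : ∀ i ∉ F, z i = 0 := fun i hi => hzc (.inr (.inr ⟨i, mem_compl.2 hi⟩))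
  refine ⟨z, hz, hzF, fun e => ?_, fun r hr => ?_⟩
  · by_cases he : e ∈ M
    · simpa [hsumOver] using hzc (.inl ⟨e, he⟩)
    · refine sum_eq_zero fun i hi => hzF i fun hiF => he ?_
      exact mem_image.2 ⟨i, hiF, (mem_filter.1 hi).2⟩
  · have hrA : r ∈ A := by
      refine mem_filter.2 ⟨?_, hr⟩
      obtain ⟨i, hi⟩ := card_pos.1 (by omega : 0 < #{i ∈ F | r ∈ rows i})
      exact mem_biUnion.2 ⟨i, (mem_filter.1 hi).1, (mem_filter.1 hi).2⟩
    simpa [hsumOver] using hzc (.inr (.inl ⟨r, hrA⟩))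

theorem exists_rounding_step (hF : (fractionalCoords x).Nonempty) :
    ∃ x' : I → ℝ, (∀ i, x' i ∈ Set.Icc 0 1) ∧ #(fractionalCoords x') < #(fractionalCoords x) ∧
      (∀ i ∉ fractionalCoords x, x' i = x i) ∧
      (∀ e, ∑ i with group i = e, x' i = ∑ i with group i = e, x i) ∧
      ∀ r, 2 * t < #{i ∈ fractionalCoords x | r ∈ rows i} →
        ∑ i with r ∈ rows i, x' i = ∑ i with r ∈ rows i, x i := by
  obtain ⟨z, hz, hzF, hzgroup, hzrow⟩ := exists_ne_zero_sum_eq_zero t rows hrows group hx hint hF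
  have hxz : ∀ i, z i ≠ 0 → x i ∈ Set.Ioo 0 1 := fun i hi =>
    mem_Ioo_of_mem_fractionalCoords hx (not_imp_comm.1 (hzF i) hi)
  obtain ⟨s, hs, j, hzj, hj⟩ := exists_add_mul_mem_Icc_eq_zero_or_eq_one hx hxz hz
  have hsum : ∀ S : Finset I, ∑ i ∈ S, (x i + s * z i) = ∑ i ∈ S, x i + s * ∑ i ∈ S, z i :=
    fun S => by rw [sum_add_distrib, mul_sum]
  refine ⟨fun i => x i + s * z i, hs, ?_, fun i hi => by simp [hzF i hi],
    fun e => by simp only [hsum, hzgroup, mul_zero, add_zero],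
    fun r hr => by simp only [hsum, hzrow r hr, mul_zero, add_zero]⟩
  have hsub : fractionalCoords (fun i => x i + s * z i) ⊆ (fractionalCoords x).erase j := by
    intro i hi
    have hiF : i ∈ fractionalCoords x := by
      by_contra hiF
      rw [mem_fractionalCoords, hzF i hiF, mul_zero, add_zero] at hi
      exact hiF (mem_fractionalCoords.2 hi)
    refine mem_erase.2 ⟨?_, hiF⟩
    rintro rfl
    exact (notMem_fractionalCoords (x := fun i => x i + s * z i)).2 hj hi
  exact (card_le_card hsub).trans_lt
    (card_erase_lt_of_mem (not_imp_comm.1 (hzF j) hzj))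

end Rounding

/-- Beck–Fiala iterated rounding. -/
theorem exists_rounding {I R E : Type*} [Fintype I] [DecidableEq I] [DecidableEq R] [DecidableEq E]
    (t : ℕ) (rows : I → Finset R) (hrows : ∀ i, #(rows i) ≤ t) (group : I → E) (x : I → ℝ)
    (hx : ∀ i, x i ∈ Set.Icc 0 1) (hint : ∀ e, ∃ k : ℤ, ∑ i with group i = e, x i = k) :
    ∃ y : I → ℝ, (∀ i, y i = 0 ∨ y i = 1) ∧ (∀ i ∉ fractionalCoords x, y i = x i) ∧
      (∀ e, ∑ i with group i = e, y i = ∑ i with group i = e, x i) ∧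
      ∀ r, ∑ i with r ∈ rows i, y i ≤ ∑ i with r ∈ rows i, x i + 2 * t := by
  induction hn : #(fractionalCoords x) using Nat.strong_induction_on generalizing x with
  | _ n ih =>
  rcases (fractionalCoords x).eq_empty_or_nonempty with hF | hF
  · refine ⟨x, fun i => notMem_fractionalCoords.1 (by simp [hF]), fun _ _ => rfl, fun _ => rfl,
      fun _ => le_add_of_nonneg_right (by positivity)⟩
  obtain ⟨x', hx', hlt, hfix, hgroup, hrow⟩ := exists_rounding_step t rows hrows group hx hint hF
  obtain ⟨y, hy01, hyx', hygroup, hyrow⟩ := ih _ (hn ▸ hlt) x' hx'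
    (fun e => by simpa only [hgroup] using hint e) rfl
  have hyx : ∀ i ∉ fractionalCoords x, y i = x i := fun i hi => by
    rw [hyx' i (by rw [notMem_fractionalCoords, hfix i hi]; exact notMem_fractionalCoords.1 hi),
      hfix i hi]
  refine ⟨y, hy01, hyx, fun e => (hygroup e).trans (hgroup e), fun r => ?_⟩
  by_cases hheavy : 2 * t < #{i ∈ fractionalCoords x | r ∈ rows i}
  · simpa only [hrow r hheavy] using hyrow r
  · have hy1 : ∀ i, y i ≤ 1 := fun i => by rcases hy01 i with h | h <;> simp [h]
    calc ∑ i with r ∈ rows i, y i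
        ≤ ∑ i with r ∈ rows i, x i + #{i ∈ fractionalCoords x | r ∈ rows i} :=
          sum_le_sum_add_card_filter_fractionalCoords (fun i => (hx i).1) hy1 hyx _
      _ ≤ ∑ i with r ∈ rows i, x i + 2 * t := by
          gcongr
          exact_mod_cast not_lt.1 hheavy

theorem Fintype.sum_filter_fst_eq {ι M : Type*} {κ : ι → Type*} [Fintype ι] [DecidableEq ι]
    [∀ i, Fintype (κ i)] [AddCommMonoid M] (f : (Σ i, κ i) → M) (a : ι) :
    ∑ p with p.1 = a, f p = ∑ k, f ⟨a, k⟩ := by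
  rw [sum_filter, Fintype.sum_sigma,
    Fintype.sum_eq_single a fun i hi => Fintype.sum_eq_zero _ fun k => if_neg hi]
  simp only [if_true]

section ListColouring

variable {V C : Type*} [Fintype V] [DecidableEq V] [DecidableEq C] {G : SimpleGraph V}
  [DecidableRel G.Adj] {L : Sym2 V → Finset C}

theorem sum_filter_mem_le_sum_incidenceFinset {x : Sym2 V → C → ℝ} (hx : ∀ e c, 0 ≤ x e c)
    (v : V) (c : C) :
    ∑ i : (Σ e : G.edgeFinset, L e) with v ∈ (i.1 : Sym2 V) ∧ (i.2 : C) = c, x i.1 i.2 ≤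
      ∑ e ∈ G.incidenceFinset v, x e c := by
  rw [sum_filter, Fintype.sum_sigma, G.incidenceFinset_eq_filter, sum_filter,
    ← sum_coe_sort G.edgeFinset]
  refine sum_le_sum fun e _ => ?_
  by_cases hv : v ∈ (e : Sym2 V)
  · simp only [hv, true_and, if_true]
    rw [sum_coe_sort (L e) (fun c' => if c' = c then x e c' else 0), sum_ite_eq']
    split_ifs <;> simp [hx]
  · simp [hv]

theorem exists_listColouring_of_eq_zero_or_one [Nonempty C]
    {y : (Σ e : G.edgeFinset, L e) → ℝ} (hy01 : ∀ i, y i = 0 ∨ y i = 1)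
    (hy : ∀ e : G.edgeFinset, ∑ c : L e, y ⟨e, c⟩ = 1) :
    ∃ ω : Sym2 V → C, (∀ e ∈ G.edgeSet, ω e ∈ L e) ∧ ∀ v c,
      ((G.incidenceSet v ∩ {e | ω e = c}).ncard : ℝ) ≤
        ∑ i with v ∈ (i.1 : Sym2 V) ∧ (i.2 : C) = c, y i := by
  have hcol : ∀ e : G.edgeFinset, ∃ c : L e, y ⟨e, c⟩ = 1 := fun e => by
    obtain ⟨c, -, hc⟩ := exists_ne_zero_of_sum_ne_zero ((hy e).trans_ne one_ne_zero)
    exact ⟨c, (hy01 _).resolve_left hc⟩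
  choose col hcol using hcol
  let ω : Sym2 V → C := fun e =>
    if h : e ∈ G.edgeFinset then col ⟨e, h⟩ else Classical.arbitrary C
  have hω : ∀ e (he : e ∈ G.edgeFinset), ω e = col ⟨e, he⟩ := fun e he => dif_pos he
  refine ⟨ω, fun e he => (hω e (G.mem_edgeFinset.2 he)).symm ▸ (col _).2, fun v c => ?_⟩
  set S : Finset (Σ e : G.edgeFinset, L e) :=
    {i ∈ {i | v ∈ (i.1 : Sym2 V) ∧ (i.2 : C) = c} | y i = 1}
  have hsub : G.incidenceSet v ∩ {e | ω e = c} ⊆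
      (fun i : Σ e : G.edgeFinset, L e => (i.1 : Sym2 V)) '' S := by
    rintro e ⟨hev, rfl⟩
    have he := G.mem_edgeFinset.2 (G.incidenceSet_subset v hev)
    exact ⟨⟨⟨e, he⟩, col ⟨e, he⟩⟩, by simp [S, hev.2, hω e he, hcol], rfl⟩
  have hS : (#S : ℝ) = ∑ i with v ∈ (i.1 : Sym2 V) ∧ (i.2 : C) = c, y i := by
    rw [← sum_boole]
    exact sum_congr rfl fun i _ => by rcases hy01 i with h | h <;> simp [h]
  calc ((G.incidenceSet v ∩ {e | ω e = c}).ncard : ℝ)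
      ≤ ((fun i : Σ e : G.edgeFinset, L e => (i.1 : Sym2 V)) '' S).ncard := by
        exact_mod_cast Set.ncard_le_ncard hsub
    _ ≤ #S := by
      rw [← coe_image, Set.ncard_coe_finset]
      exact_mod_cast card_image_le
    _ = ∑ i with v ∈ (i.1 : Sym2 V) ∧ (i.2 : C) = c, y i := hS

theorem exists_listColouring_ncard_le_sum_add_four [Nonempty C] (x : Sym2 V → C → ℝ)
    (hx : ∀ e c, 0 ≤ x e c) (hsum : ∀ e ∈ G.edgeSet, ∑ c ∈ L e, x e c = 1) :
    ∃ ω : Sym2 V → C, (∀ e ∈ G.edgeSet, ω e ∈ L e) ∧ ∀ v c,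
      ((G.incidenceSet v ∩ {e | ω e = c}).ncard : ℝ) ≤ ∑ e ∈ G.incidenceFinset v, x e c + 4 := by
  let rows : (Σ e : G.edgeFinset, L e) → Finset (V × C) :=
    fun i => (i.1 : Sym2 V).toFinset ×ˢ {(i.2 : C)}
  have hrows : ∀ i, #(rows i) ≤ 2 := fun i => by
    rw [card_product, Sym2.card_toFinset, card_singleton]
    split_ifs <;> omega
  have hgroup : ∀ e : G.edgeFinset, ∑ c : L e, x e c = 1 := fun e => by
    rw [sum_coe_sort (L e) (x e)]
    exact hsum e (G.mem_edgeFinset.1 e.2)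
  have hx1 : ∀ i : Σ e : G.edgeFinset, L e, x i.1 i.2 ∈ Set.Icc 0 1 := fun ⟨e, c⟩ =>
    ⟨hx _ _, hgroup e ▸ single_le_sum (f := fun c : L e => x e c) (fun _ _ => hx _ _) (mem_univ c)⟩
  obtain ⟨y, hy01, -, hygroup, hyrow⟩ := exists_rounding 2 rows hrows Sigma.fst
    (fun i => x i.1 i.2) hx1 fun e => ⟨1, by rw [Fintype.sum_filter_fst_eq, hgroup]; simp⟩
  obtain ⟨ω, hωL, hω⟩ := exists_listColouring_of_eq_zero_or_one hy01
    fun e => by rw [← Fintype.sum_filter_fst_eq y, hygroup, Fintype.sum_filter_fst_eq, hgroup]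
  have hrow : ∀ v c i, (v, c) ∈ rows i ↔ v ∈ (i.1 : Sym2 V) ∧ (i.2 : C) = c := fun v c i => by
    simp [rows, eq_comm]
  refine ⟨ω, hωL, fun v c => ?_⟩
  calc ((G.incidenceSet v ∩ {e | ω e = c}).ncard : ℝ)
      ≤ ∑ i with v ∈ (i.1 : Sym2 V) ∧ (i.2 : C) = c, y i := hω v c
    _ ≤ ∑ i : (Σ e : G.edgeFinset, L e) with v ∈ (i.1 : Sym2 V) ∧ (i.2 : C) = c,
          x i.1 i.2 + 4 := by
        simpa only [hrow, Nat.cast_ofNat, show (2 : ℝ) * 2 = 4 by norm_num] using hyrow (v, c)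
    _ ≤ ∑ e ∈ G.incidenceFinset v, x e c + 4 := by
        gcongr
        exact sum_filter_mem_le_sum_incidenceFinset hx v c

end ListColouring

theorem sum_incidenceFinset_div_sum_le {V C : Type*} [Fintype V] [DecidableEq V]
    {G : SimpleGraph V} [DecidableRel G.Adj] {L : Sym2 V → Finset C} {α : C → ℝ}
    (hα : ∀ c, 0 ≤ α c) {s : ℝ} (hs : 0 < s) (hL : ∀ e ∈ G.edgeSet, s ≤ ∑ c ∈ L e, α c)
    (v : V) (c : C) :
    ∑ e ∈ G.incidenceFinset v, α c / ∑ c' ∈ L e, α c' ≤ α c * G.degree v / s :=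
  calc ∑ e ∈ G.incidenceFinset v, α c / ∑ c' ∈ L e, α c'
      ≤ ∑ e ∈ G.incidenceFinset v, α c / s := by
        gcongr with e he
        · exact hα c
        · exact hL e (G.incidenceSet_subset v ((G.mem_incidenceFinset v e).1 he))
    _ = α c * G.degree v / s := by
        rw [sum_const, G.card_incidenceFinset_eq_degree, nsmul_eq_mul]
        ring

theorem inv_ten_le_log_inv_mul {ε a : ℝ} (hε : ε ∈ Set.Ioc (0 : ℝ) 0.9)
    (ha : a ∈ Set.Ioo (0 : ℝ) 1) : 1 / 10 ≤ Real.log (a * ε)⁻¹ := by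
  obtain ⟨hε0, hε1⟩ := hε
  obtain ⟨ha0, ha1⟩ := ha
  have := Real.one_sub_inv_le_log_of_pos (x := (a * ε)⁻¹) (by positivity)
  rw [inv_inv] at this
  nlinarith

theorem mul_div_one_add_add_four_le {ε a α d : ℝ} (hε : ε ∈ Set.Ioc (0 : ℝ) 0.9)
    (ha : a ∈ Set.Ioo (0 : ℝ) 1) (hα : a ≤ α)
    (hd : 626 * a⁻¹ * (ε ^ 2)⁻¹ * Real.log (a * ε)⁻¹ ≤ d) : α * d / (1 + ε) + 4 ≤ α * d := by
  have hlog := inv_ten_le_log_inv_mul hε ha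
  obtain ⟨hε0, hε1⟩ := hε
  obtain ⟨ha0, -⟩ := ha
  have hd' : 62.6 ≤ a * ε ^ 2 * d := by
    have : 626 * a⁻¹ * (ε ^ 2)⁻¹ * (1 / 10) ≤ d := le_trans (by gcongr) hd
    calc (62.6 : ℝ) = a * ε ^ 2 * (626 * a⁻¹ * (ε ^ 2)⁻¹ * (1 / 10)) := by field_simp; norm_num
      _ ≤ a * ε ^ 2 * d := by gcongr
  have hd0 : 0 ≤ d := by nlinarith [mul_pos ha0 (pow_pos hε0 2)]
  rw [div_add' _ _ _ (by positivity), div_le_iff₀ (by positivity)]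
  nlinarith [mul_le_mul_of_nonneg_right hα (mul_nonneg hd0 hε0.le)]

theorem alpha_majority_colouring_general_tolerances_general
    (ε a : ℝ) (hε : ε ∈ Set.Ioc (0 : ℝ) 0.9) (ha : a ∈ Set.Ioo (0 : ℝ) 1)
    {V : Type*} [Fintype V] (G : SimpleGraph V) [DecidableRel G.Adj]
    (hδ : ∀ v : V, ⌈626 * a⁻¹ * (ε ^ 2)⁻¹ * Real.log (a * ε)⁻¹⌉₊ ≤ G.degree v)
    (C : Type*) (α : C → ℝ)
    (hα : ∀ c, α c ∈ Set.Ioo (0 : ℝ) 1) (hmin : ∀ c, a ≤ α c)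
    (L : Sym2 V → Finset C)
    (hL : ∀ e ∈ G.edgeSet, 1 + ε ≤ ∑ c ∈ L e, α c) :
    ∃ ω : Sym2 V → C,
      (∀ e ∈ G.edgeSet, ω e ∈ L e) ∧
      ∀ (v : V) (c : C),
        ((G.incidenceSet v ∩ {e | ω e = c}).ncard : ℝ) ≤ α c * (G.degree v : ℝ) := by
  classical
  have hdeg : ∀ v, 626 * a⁻¹ * (ε ^ 2)⁻¹ * Real.log (a * ε)⁻¹ ≤ G.degree v :=
    fun v => (Nat.le_ceil _).trans (by exact_mod_cast hδ v)
  have hS : ∀ e ∈ G.edgeSet, 0 < ∑ c ∈ L e, α c := fun e he => by linarith [hL e he, hε.1]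
  rcases isEmpty_or_nonempty V with hV | ⟨⟨v₀⟩⟩
  · exact ⟨isEmptyElim, fun e => isEmptyElim e, fun v => isEmptyElim v⟩
  have : Nonempty C := by
    have hX : 0 < 626 * a⁻¹ * (ε ^ 2)⁻¹ * Real.log (a * ε)⁻¹ :=
      mul_pos (by have := hε.1; have := ha.1; positivity)
        (by linarith [inv_ten_le_log_inv_mul hε ha])
    obtain ⟨u, hu⟩ := (G.degree_pos_iff_exists_adj v₀).1 ((Nat.ceil_pos.2 hX).trans_le (hδ v₀))
    obtain ⟨c, -⟩ := nonempty_of_sum_ne_zero (hS s(v₀, u) hu).ne'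
    exact ⟨c⟩
  obtain ⟨ω, hωL, hω⟩ := exists_listColouring_ncard_le_sum_add_four (G := G) (L := L)
    (fun e c => α c / ∑ c' ∈ L e, α c')
    (fun e c => div_nonneg (hα c).1.le (sum_nonneg fun c _ => (hα c).1.le))
    (fun e he => by rw [← sum_div, div_self (hS e he).ne'])
  refine ⟨ω, hωL, fun v c => (hω v c).trans ?_⟩
  calc ∑ e ∈ G.incidenceFinset v, α c / ∑ c' ∈ L e, α c' + 4
      ≤ α c * G.degree v / (1 + ε) + 4 := by
        gcongr
        exact sum_incidenceFinset_div_sum_le (fun c => (hα c).1.le) (by linarith [hε.1]) hL v c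
    _ ≤ α c * G.degree v := mul_div_one_add_add_four_le hε ha (hmin c) (hdeg v)

/-- For fixed `ε ∈ (0, 0.9]` and `a ∈ (0,1)`, every finite simple graph
with minimum degree at least `⌈626·a⁻¹·ε⁻²·ln((aε)⁻¹)⌉` admits, for every `ε`-excessive
list assignment `L` with tolerance function `α` satisfying `min(α) ≥ a`, an `α`-majority
`L`-colouring. -/
theorem alpha_majority_colouring_general_tolerances
    (ε a : ℝ) (hε : ε ∈ Set.Ioc (0 : ℝ) 0.9) (ha : a ∈ Set.Ioo (0 : ℝ) 1)
    {V : Type*} [Fintype V] [DecidableEq V] (G : SimpleGraph V) [DecidableRel G.Adj]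
    (hδ : ∀ v : V, ⌈626 * a⁻¹ * (ε ^ 2)⁻¹ * Real.log (a * ε)⁻¹⌉₊ ≤ G.degree v)
    (C : Type*) (α : C → ℝ)
    (hα : ∀ c, α c ∈ Set.Ioo (0 : ℝ) 1) (hmin : ∀ c, a ≤ α c)
    (L : Sym2 V → Finset C)
    (hL : ∀ e ∈ G.edgeSet, 1 + ε ≤ ∑ c ∈ L e, α c) :
    ∃ ω : Sym2 V → C,
      (∀ e ∈ G.edgeSet, ω e ∈ L e) ∧
      ∀ (v : V) (c : C),
        ((G.incidenceSet v ∩ {e | ω e = c}).ncard : ℝ) ≤ α c * (G.degree v : ℝ) :=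
  alpha_majority_colouring_general_tolerances_general ε a hε ha G hδ C α hα hmin L hL
end

section
/- For any positive integer z and any integers a, b, c, d with b − a = d − c ≥ 0 and |(a+b)/2 − z/2| ≥ |(c+d)/2 − z/2|, it holds that ∑_{i=a}^{b} C(z,i) ≤ ∑_{i=c}^{d} C(z,i), where the binomial coefficient C(z,i) is taken to be 0 whenever i < 0 or i > z. -/
/-!
Write `f = extChoose z`. Since `C(z, i)` is symmetric under `i ↦ z - i` and increases towards the
middle of the row, `f i ≤ f j` whenever `j` is at least as close to `z / 2` as `i`. Hence if a
window `[a, b]` has centre to the right of `z / 2`, sliding it one step to the left trades the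
coefficient `f b` for `f (a - 1)`, which is at least as central, so the sum does not decrease.
Sliding `[a, b]` step by step onto `[c, d]`, after reflecting either window in `z / 2` if
needed, gives the claim.
-/

/-- The binomial coefficient `C(z,i)` for an integer index `i`, extended by `0` whenever
`i < 0` or `i > z`. -/
def extChoose (z : ℕ) (i : ℤ) : ℕ :=
  if 0 ≤ i ∧ i ≤ (z : ℤ) then z.choose i.toNat else 0

open Finset

namespace Nat

theorem choose_le_choose_of_le_of_two_mul_le {n r s : ℕ} (hrs : r ≤ s) (hs : 2 * s ≤ n) :
    n.choose r ≤ n.choose s := by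
  induction s, hrs using Nat.le_induction with
  | base => exact le_rfl
  | succ s _ ih => exact (ih (by omega)).trans (choose_le_succ_of_lt_half_left (by omega))

theorem choose_eq_choose_min {n r : ℕ} (hr : r ≤ n) : n.choose r = n.choose (min r (n - r)) := by
  rcases le_total r (n - r) with h | h
  · rw [min_eq_left h]
  · rw [min_eq_right h, choose_symm hr]

theorem choose_le_choose_of_min_le {n r s : ℕ} (hr : r ≤ n) (hs : s ≤ n)
    (h : min r (n - r) ≤ min s (n - s)) : n.choose r ≤ n.choose s := by
  rw [choose_eq_choose_min hr, choose_eq_choose_min hs]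
  exact choose_le_choose_of_le_of_two_mul_le h (by omega)

end Nat

/-- Distances from the centre `z / 2` are doubled to stay in `ℤ`. -/
def AntitoneAwayFrom {M : Type*} [LE M] (z : ℤ) (f : ℤ → M) : Prop :=
  ∀ i j : ℤ, |2 * j - z| ≤ |2 * i - z| → f i ≤ f j

theorem antitoneAwayFrom_extChoose (z : ℕ) : AntitoneAwayFrom z (extChoose z) := by
  intro i j h
  rw [abs_eq_max_neg, abs_eq_max_neg] at h
  unfold extChoose
  split_ifs with hi hj hj
  · exact Nat.choose_le_choose_of_min_le (by omega) (by omega) (by omega)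
  · omega
  · exact Nat.zero_le _
  · exact Nat.zero_le _

namespace AntitoneAwayFrom

variable {M : Type*} {z : ℤ} {f : ℤ → M}

theorem apply_sub [PartialOrder M] (hf : AntitoneAwayFrom z f) (i : ℤ) : f (z - i) = f i := by
  have hdist : |2 * (z - i) - z| = |2 * i - z| := by rw [← abs_neg]; congr 1; ring
  exact le_antisymm (hf _ _ hdist.ge) (hf _ _ hdist.le)

section Sum

variable [AddCommMonoid M] [PartialOrder M]

theorem sum_Icc_eq_sum_Icc_sub (hf : AntitoneAwayFrom z f) (a b : ℤ) :
    ∑ i ∈ Icc a b, f i = ∑ i ∈ Icc (z - b) (z - a), f i := by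
  refine sum_nbij' (z - ·) (z - ·) ?_ ?_ (fun _ _ ↦ sub_sub_cancel z _)
    (fun _ _ ↦ sub_sub_cancel z _) (fun i _ ↦ (hf.apply_sub i).symm)
  all_goals intro i hi; simp only [mem_Icc] at hi ⊢; omega

theorem exists_sum_Icc_eq_with_abs_centre (hf : AntitoneAwayFrom z f) (a b : ℤ) :
    ∃ a' b', b' - a' = b - a ∧ a' + b' = z + |a + b - z| ∧
      ∑ i ∈ Icc a b, f i = ∑ i ∈ Icc a' b', f i := by
  rcases le_total 0 (a + b - z) with h | h
  · exact ⟨a, b, rfl, by rw [abs_of_nonneg h]; ring, rfl⟩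
  · exact ⟨z - b, z - a, by ring, by rw [abs_of_nonpos h]; ring, hf.sum_Icc_eq_sum_Icc_sub a b⟩

variable [IsOrderedAddMonoid M]

theorem sum_Icc_le_sum_Icc_sub_one (hf : AntitoneAwayFrom z f) {a b : ℤ} (hab : a ≤ b)
    (h : z + 2 ≤ a + b) : ∑ i ∈ Icc a b, f i ≤ ∑ i ∈ Icc (a - 1) (b - 1), f i := by
  have hIoc : Ioc (a - 1) (b - 1) = Ico a b := by ext; simp only [mem_Ioc, mem_Ico]; omega
  rw [← sum_Ico_add_eq_sum_Icc hab, ← sum_Ioc_add_eq_sum_Icc (by omega), hIoc]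
  exact add_le_add_right (hf _ _ (by rw [abs_eq_max_neg, abs_eq_max_neg]; omega)) _

theorem sum_Icc_le_sum_Icc_sub (hf : AntitoneAwayFrom z f) (k : ℕ) {a b : ℤ} (hab : a ≤ b)
    (h : z + 2 * k ≤ a + b) : ∑ i ∈ Icc a b, f i ≤ ∑ i ∈ Icc (a - k) (b - k), f i := by
  induction k generalizing a b with
  | zero => simp
  | succ k ih =>
    calc ∑ i ∈ Icc a b, f i
        ≤ ∑ i ∈ Icc (a - 1) (b - 1), f i := hf.sum_Icc_le_sum_Icc_sub_one hab (by omega)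
      _ ≤ ∑ i ∈ Icc (a - 1 - k) (b - 1 - k), f i := ih (by omega) (by omega)
      _ = ∑ i ∈ Icc (a - (k + 1 : ℕ)) (b - (k + 1 : ℕ)), f i := by push_cast; ring_nf

theorem sum_Icc_le_sum_Icc_of_le_add_le_add (hf : AntitoneAwayFrom z f) {a b c d : ℤ} (hab : a ≤ b)
    (hlen : b - a = d - c) (hcd : z ≤ c + d) (hcentre : c + d ≤ a + b) :
    ∑ i ∈ Icc a b, f i ≤ ∑ i ∈ Icc c d, f i := by
  obtain ⟨k, hk⟩ : ∃ k : ℕ, a - c = k := ⟨(a - c).toNat, by omega⟩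
  obtain ⟨rfl, rfl⟩ : c = a - k ∧ d = b - k := by omega
  exact hf.sum_Icc_le_sum_Icc_sub k hab (by omega)

theorem sum_Icc_le_sum_Icc_of_abs_le (hf : AntitoneAwayFrom z f) {a b c d : ℤ} (hab : a ≤ b)
    (hlen : b - a = d - c) (hcentre : |c + d - z| ≤ |a + b - z|) :
    ∑ i ∈ Icc a b, f i ≤ ∑ i ∈ Icc c d, f i := by
  obtain ⟨a', b', hlen_ab, hcentre_ab, hsum_ab⟩ := hf.exists_sum_Icc_eq_with_abs_centre a b
  obtain ⟨c', d', hlen_cd, hcentre_cd, hsum_cd⟩ := hf.exists_sum_Icc_eq_with_abs_centre c d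
  rw [hsum_ab, hsum_cd]
  simp only [abs_eq_max_neg] at hcentre hcentre_ab hcentre_cd
  exact hf.sum_Icc_le_sum_Icc_of_le_add_le_add (by omega) (by omega) (by omega) (by omega)

end Sum

end AntitoneAwayFrom

theorem sum_extChoose_le_of_more_central_general
    (z : ℕ) (a b c d : ℤ)
    (h1 : b - a = d - c) (h2 : 0 ≤ b - a)
    (h3 : |((c : ℚ) + d) / 2 - (z : ℚ) / 2| ≤ |((a : ℚ) + b) / 2 - (z : ℚ) / 2|) :
    ∑ i ∈ Finset.Icc a b, extChoose z i ≤ ∑ i ∈ Finset.Icc c d, extChoose z i := by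
  have hcentre : |c + d - (z : ℤ)| ≤ |a + b - (z : ℤ)| := by
    have h3' : |((c + d - z : ℤ) : ℚ)| / 2 ≤ |((a + b - z : ℤ) : ℚ)| / 2 := by
      convert h3 using 2 <;> push_cast <;> rw [← sub_div, abs_div, abs_two]
    exact_mod_cast (div_le_div_iff_of_pos_right two_pos).mp h3'
  exact (antitoneAwayFrom_extChoose z).sum_Icc_le_sum_Icc_of_abs_le (by omega) h1 hcentre

/-- A run of consecutive binomial coefficients in row `z` of Pascal's
triangle has a sum which is larger the more centrally it is located. -/
theorem sum_extChoose_le_of_more_central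
    (z : ℕ) (hz : 0 < z) (a b c d : ℤ)
    (h1 : b - a = d - c) (h2 : 0 ≤ b - a)
    (h3 : |((c : ℚ) + d) / 2 - (z : ℚ) / 2| ≤ |((a : ℚ) + b) / 2 - (z : ℚ) / 2|) :
    ∑ i ∈ Finset.Icc a b, extChoose z i ≤ ∑ i ∈ Finset.Icc c d, extChoose z i :=
  sum_extChoose_le_of_more_central_general z a b c d h1 h2 h3
end

section
/- Let ℓ and d be positive integers, C a finite set of colours, Λ = (α₁,…,α_ℓ) a vector with each α_i ∈ (0,1), and α:C→(0,1) a function. Call an injective map M:{1,…,ℓ}→C a Λ-list if α(M(i)) = α_i for each i. Let p₁,…,p_ℓ ≥ 0 be reals with ∑_{i=1}^{ℓ} p_i = 1, p_i < α_i for each i, and p_i = p_j whenever α_i = α_j. Given Λ-lists L₁,…,L_d, consider the product probability measure on colour choices (X₁,…,X_d) in which independently for each edge index e ∈ {1,…,d}, X_e equals L_e(i) with probability p_i. Then for every Λ-family (L₁,…,L_d) and every single Λ-list L, the probability of the event 'there exists a colour c ∈ C such that #{e : X_e = c} > α(c)·d' under the family (L₁,…,L_d) is at most the probability of the same event under the constant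 family (L,…,L). -/
/-!
Only the colour sets `range (L e)` matter: edge `e` picks colour `c` with weight `π c` if `c` is
in its list and `0` otherwise, where `π c = p i` for any `i` with `Λ i = α c`, and every list has
the same `α`-profile as `range L`. For colours `a ≠ b` with `α a = α b`, compress each list that
contains `b` but not `a` by replacing `b` with `a`. Fix the choices up to merging `b` into `a`:
of the `N` edges that chose from `{a, b}`, say `v` can only take `a`, `t` only `b` and `w` both,
so the number of `a`-edges is `v + Bin(w)` before and `v + t + Bin(w)` after the compression.
Avoiding a violation confines this number to a window symmetric about `N / 2`, and as binomial
coefficients are symmetric and unimodal the window catches less mass after the shift, which moves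
the centre of `Bin(w)` from distance `|v - t| / 2` to distance `(v + t) / 2` from `N / 2`.
Compressing towards `range L` strictly decreases the number of list entries outside `range L`
and ends at the constant family.
-/

open Finset

namespace Nat

theorem choose_le_choose_of_le_of_two_mul_le_s10 {n i j : ℕ} (hij : i ≤ j) (hj : 2 * j ≤ n) :
    n.choose i ≤ n.choose j := by
  induction j, hij using Nat.le_induction with
  | base => rfl
  | succ k _ ih =>
    exact (ih (by omega)).trans (choose_le_succ_of_lt_half_left (by omega))

theorem choose_le_choose_of_le_of_add_le {n i j : ℕ} (hij : i ≤ j) (h : i + j ≤ n) :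
    n.choose i ≤ n.choose j := by
  rcases le_or_gt (2 * j) n with hj | hj
  · exact choose_le_choose_of_le_of_two_mul_le_s10 hij hj
  · rw [← choose_symm (by omega : j ≤ n)]
    exact choose_le_choose_of_le_of_two_mul_le_s10 (by omega) (by omega)

end Nat

theorem sum_range_mul_nonneg_of_antisymm {N : ℕ} {H Q : ℕ → ℝ}
    (hH : ∀ k ≤ N, H (N - k) = -H k) (hH₀ : ∀ k, 2 * k ≤ N → 0 ≤ H k)
    (hQ : ∀ k, 2 * k ≤ N → Q (N - k) ≤ Q k) :
    0 ≤ ∑ k ∈ range (N + 1), H k * Q k := by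
  have hreflect : ∑ k ∈ range (N + 1), H k * Q (N - k) = -∑ k ∈ range (N + 1), H k * Q k := by
    rw [← sum_range_reflect (fun k => H k * Q k), ← sum_neg_distrib]
    refine sum_congr rfl fun k hk => ?_
    rw [add_tsub_cancel_right, hH k (mem_range_succ_iff.1 hk)]
    ring
  have hterm : ∀ k ∈ range (N + 1), 0 ≤ H k * (Q k - Q (N - k)) := by
    intro k hk
    have hk : k ≤ N := mem_range_succ_iff.1 hk
    rcases le_or_gt (2 * k) N with h | h
    · exact mul_nonneg (hH₀ k h) (sub_nonneg.2 (hQ k h))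
    · have hm : 2 * (N - k) ≤ N := by omega
      have hHk : H k = -H (N - k) := by rw [← hH (N - k) (by omega), Nat.sub_sub_self hk]
      have hQk : Q k ≤ Q (N - k) := by simpa [Nat.sub_sub_self hk] using hQ (N - k) hm
      rw [hHk]
      exact mul_nonneg_of_nonpos_of_nonpos (neg_nonpos.2 (hH₀ _ hm)) (sub_nonpos.2 hQk)
  have := sum_nonneg hterm
  simp only [mul_sub, sum_sub_distrib, hreflect] at this
  linarith

-- `k ↦ C(w, k) - C(w, k - t)` is antisymmetric about `(w + t) / 2` and nonnegative below it.
theorem sum_choose_mul_add_le {w t : ℕ} {Q : ℕ → ℝ}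
    (hQ : ∀ k, 2 * k ≤ w + t → Q (w + t - k) ≤ Q k) :
    ∑ j ∈ range (w + 1), (w.choose j : ℝ) * Q (t + j) ≤
      ∑ j ∈ range (w + 1), (w.choose j : ℝ) * Q j := by
  set g : ℕ → ℝ := fun k => if t ≤ k then (w.choose (k - t) : ℝ) else 0
  have hL : ∑ j ∈ range (w + 1), (w.choose j : ℝ) * Q (t + j)
      = ∑ k ∈ range (w + t + 1), g k * Q k := by
    rw [show w + t + 1 = t + (w + 1) by omega, sum_range_add _ t (w + 1),
      sum_eq_zero (s := range t), zero_add]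
    · simp [g]
    · intro k hk; simp [g, (mem_range.1 hk).not_ge]
  have hR : ∑ j ∈ range (w + 1), (w.choose j : ℝ) * Q j
      = ∑ k ∈ range (w + t + 1), (w.choose k : ℝ) * Q k := by
    rw [show w + t + 1 = w + 1 + t by omega, sum_range_add _ (w + 1) t,
      sum_eq_zero (s := range t), add_zero]
    intro k _; simp [Nat.choose_eq_zero_of_lt (by omega : w < w + 1 + k)]
  rw [hL, hR, ← sub_nonneg, ← sum_sub_distrib]
  simp_rw [← sub_mul]
  refine sum_range_mul_nonneg_of_antisymm (fun k hk => ?_) (fun k hk => ?_) hQ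
  · have h₁ : (w.choose (w + t - k) : ℝ) = g k := by
      simp only [g]
      split_ifs with htk
      · rw [show w + t - k = w - (k - t) by omega, Nat.choose_symm (by omega)]
      · rw [Nat.choose_eq_zero_of_lt (by omega), Nat.cast_zero]
    have h₂ : g (w + t - k) = w.choose k := by
      simp only [g, show t ≤ w + t - k ↔ k ≤ w by omega]
      split_ifs with hkw
      · rw [show w + t - k - t = w - k by omega, Nat.choose_symm hkw]
      · rw [Nat.choose_eq_zero_of_lt (by omega), Nat.cast_zero]
    rw [h₁, h₂]; ring
  · simp only [g]
    split_ifs with htk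
    · exact sub_nonneg.2 (by
        exact_mod_cast Nat.choose_le_choose_of_le_of_add_le (by omega) (by omega))
    · simp

section Intervals

variable {ι : Type*} [DecidableEq ι]

theorem Finset.sum_Icc_eq_sum_range_choose {lo hi : Finset ι} (h : lo ⊆ hi) (G : ℕ → ℝ) :
    ∑ A ∈ Icc lo hi, G #A =
      ∑ k ∈ range (#(hi \ lo) + 1), ((#(hi \ lo)).choose k : ℝ) * G (#lo + k) := by
  have hdisj : ∀ K ∈ (hi \ lo).powerset, Disjoint lo K := fun K hK =>
    disjoint_of_subset_right (mem_powerset.1 hK) disjoint_sdiff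
  have hcount := sum_powerset_apply_card (fun k => G (#lo + k)) (x := hi \ lo)
  simp only [nsmul_eq_mul] at hcount
  rw [Icc_eq_image_powerset h, sum_image, ← hcount]
  · exact sum_congr rfl fun K hK => by rw [card_union_of_disjoint (hdisj K hK)]
  · intro K₁ hK₁ K₂ hK₂ hK
    simp only at hK
    rw [← union_sdiff_cancel_left (hdisj K₁ hK₁), hK, union_sdiff_cancel_left (hdisj K₂ hK₂)]

theorem Finset.sum_Icc_compress_le {D lo hi : Finset ι} (hhi : hi ⊆ D) {G : ℕ → ℝ}
    (hG : ∀ m m', m ≤ m' → #D ≤ m + m' → G m' ≤ G m) :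
    ∑ A ∈ Icc (lo ∪ (D \ hi)) (hi ∪ (D \ lo)), G #A ≤ ∑ A ∈ Icc lo hi, G #A := by
  by_cases hlo : lo ⊆ hi
  · have hD : hi ∪ (D \ lo) = D := by
      ext e; have := @hhi e; have := @hlo e; simp only [mem_union, mem_sdiff]; tauto
    have hdiff : D \ (lo ∪ (D \ hi)) = hi \ lo := by
      ext e; have := @hhi e; simp only [mem_union, mem_sdiff]; tauto
    have hcard : #(lo ∪ (D \ hi)) = #lo + #(D \ hi) :=
      card_union_of_disjoint (disjoint_of_subset_left hlo disjoint_sdiff)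
    have hDcard : #D = #lo + (#(hi \ lo) + #(D \ hi)) := by
      rw [card_sdiff_of_subset hlo, card_sdiff_of_subset hhi]
      have := card_le_card hlo; have := card_le_card hhi; omega
    rw [hD, sum_Icc_eq_sum_range_choose (union_subset (hlo.trans hhi) sdiff_subset),
      sum_Icc_eq_sum_range_choose hlo, hdiff, hcard]
    simp_rw [add_assoc]
    exact sum_choose_mul_add_le (Q := fun k => G (#lo + k)) (w := #(hi \ lo)) (t := #(D \ hi))
      fun k hk =>
      hG (#lo + k) (#lo + (#(hi \ lo) + #(D \ hi) - k)) (by omega) (by omega)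
  · have hempty : ¬ lo ∪ (D \ hi) ⊆ hi ∪ (D \ lo) := by
      intro h; apply hlo; intro e he
      have := h (mem_union_left _ he); simp only [mem_union, mem_sdiff] at this; tauto
    rw [Icc_eq_empty hlo, Icc_eq_empty hempty]

end Intervals

namespace UV

variable {C : Type*} [DecidableEq C] {a b c : C} {s : Finset C}

theorem mem_compress_singleton_left (hab : a ≠ b) :
    a ∈ compress {a} {b} s ↔ a ∈ s ∨ b ∈ s := by
  unfold compress; split_ifs with h <;> simp at h ⊢ <;> grind

theorem mem_compress_singleton_right : b ∈ compress {a} {b} s ↔ a ∈ s ∧ b ∈ s := by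
  unfold compress; split_ifs with h <;> simp at h ⊢ <;> grind

theorem mem_compress_singleton_of_ne (ha : c ≠ a) (hb : c ≠ b) :
    c ∈ compress {a} {b} s ↔ c ∈ s := by
  unfold compress; split_ifs <;> simp [ha, hb]

theorem filter_compress_singleton (hab : a ≠ b) {P : C → Prop} [DecidablePred P]
    (hP : P a ↔ P b) : (compress {a} {b} s).filter P = compress {a} {b} (s.filter P) := by
  ext c
  by_cases ha : c = a
  · subst ha; simp only [mem_filter, mem_compress_singleton_left hab]; tauto
  by_cases hb : c = b
  · subst hb; simp only [mem_filter, mem_compress_singleton_right]; tauto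
  simp only [mem_filter, mem_compress_singleton_of_ne ha hb]

theorem compress_singleton_sdiff_subset {R : Finset C} (ha : a ∈ R) :
    compress {a} {b} s \ R ⊆ s \ R := by
  intro c hc
  rw [mem_sdiff] at hc ⊢
  refine ⟨?_, hc.2⟩
  by_cases hcb : c = b
  · subst hcb; exact (mem_compress_singleton_right.1 hc.1).2
  · exact (mem_compress_singleton_of_ne (by rintro rfl; exact hc.2 ha) hcb).1 hc.1

end UV

section Colourings

variable {ι C : Type*} [Fintype ι] [DecidableEq C]

def NoViolation (θ : C → ℝ) (x : ι → C) : Prop :=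
  ∀ c, (#{e | x e = c} : ℝ) ≤ θ c

noncomputable def noViolationWeight (θ π : C → ℝ) (S : ι → Finset C) : (ι → C) → ℝ :=
  {x | (∀ e, x e ∈ S e) ∧ NoViolation θ x}.indicator fun x => ∏ e, π (x e)

-- The weight of `unmerge a b y A` with `#A = m`, apart from the constraints imposed by the lists.
noncomputable def fibreWeight [Fintype C] (θ π : C → ℝ) (a b : C) (y : ι → C) (m : ℕ) : ℝ :=
  if (∀ c, c ≠ a → c ≠ b → (#{e | y e = c} : ℝ) ≤ θ c) ∧ (m : ℝ) ≤ θ a ∧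
    ((#({e | y e = a} : Finset ι) - m : ℕ) : ℝ) ≤ θ a then ∏ e, π (y e) else 0

theorem fibreWeight_le_of_le [Fintype C] {θ π : C → ℝ} {a b : C} (hπ₀ : ∀ c, 0 ≤ π c)
    (y : ι → C) {m m' : ℕ} (hm : m ≤ m') (hmm' : #({e | y e = a} : Finset ι) ≤ m + m') :
    fibreWeight θ π a b y m' ≤ fibreWeight θ π a b y m := by
  unfold fibreWeight
  split_ifs with h₁ h₂
  · rfl
  · refine absurd ⟨h₁.1, le_trans (by exact_mod_cast hm) h₁.2.1, ?_⟩ h₂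
    exact le_trans (by exact_mod_cast (by omega : #({e | y e = a} : Finset ι) - m ≤ m')) h₁.2.1
  · exact prod_nonneg fun e _ => hπ₀ _
  · rfl

variable [DecidableEq ι]

noncomputable def noViolationMass [Fintype C] (θ π : C → ℝ) (S : ι → Finset C) : ℝ :=
  ∑ x, noViolationWeight θ π S x

-- For `y` avoiding `b`, the configurations that become `y` when `b` is merged into `a` are the
-- `unmerge a b y A` with `A ⊆ y⁻¹ {a}`, the set of edges coloured `a`.
def unmerge (a b : C) (y : ι → C) (A : Finset ι) : ι → C :=
  fun e => if e ∈ A then a else if y e = a then b else y e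

section unmerge

variable {a b : C} {y : ι → C} {A : Finset ι}

theorem filter_unmerge_eq_left (hab : a ≠ b) : ({e | unmerge a b y A e = a} : Finset ι) = A := by
  ext e
  simp only [mem_filter, mem_univ, true_and]
  unfold unmerge
  split_ifs <;> grind

theorem filter_unmerge_eq_right (hab : a ≠ b) (hy : ∀ e, y e ≠ b) :
    ({e | unmerge a b y A e = b} : Finset ι) = ({e | y e = a} : Finset ι) \ A := by
  ext e
  simp only [mem_filter, mem_univ, true_and, mem_sdiff]
  unfold unmerge
  split_ifs <;> grind

theorem filter_unmerge_eq_of_ne (hA : A ⊆ ({e | y e = a} : Finset ι)) {c : C} (hca : c ≠ a)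
    (hcb : c ≠ b) : ({e | unmerge a b y A e = c} : Finset ι) = ({e | y e = c} : Finset ι) := by
  ext e
  have := @hA e
  simp only [mem_filter, mem_univ, true_and] at this ⊢
  unfold unmerge
  split_ifs <;> grind

theorem noViolation_unmerge_iff (hab : a ≠ b) (hy : ∀ e, y e ≠ b)
    (hA : A ⊆ ({e | y e = a} : Finset ι)) {θ : C → ℝ} :
    NoViolation θ (unmerge a b y A) ↔ (∀ c, c ≠ a → c ≠ b → (#{e | y e = c} : ℝ) ≤ θ c) ∧
      (#A : ℝ) ≤ θ a ∧ ((#({e | y e = a} : Finset ι) - #A : ℕ) : ℝ) ≤ θ b := by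
  rw [← card_sdiff_of_subset hA]
  refine ⟨fun h => ⟨fun c hca hcb => ?_, ?_, ?_⟩, fun ⟨hc, ha, hb⟩ c => ?_⟩
  · simpa [filter_unmerge_eq_of_ne hA hca hcb] using h c
  · simpa [filter_unmerge_eq_left hab] using h a
  · simpa [filter_unmerge_eq_right hab hy] using h b
  · by_cases hca : c = a
    · subst hca; rwa [filter_unmerge_eq_left hab]
    by_cases hcb : c = b
    · subst hcb; rwa [filter_unmerge_eq_right hab hy]
    rw [filter_unmerge_eq_of_ne hA hca hcb]; exact hc c hca hcb

theorem prod_unmerge (hA : A ⊆ ({e | y e = a} : Finset ι)) {π : C → ℝ} (hπ : π a = π b) :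
    ∏ e, π (unmerge a b y A e) = ∏ e, π (y e) := by
  refine prod_congr rfl fun e _ => ?_
  by_cases he : e ∈ A
  · have hya : y e = a := by simpa using hA he
    simp [unmerge, he, hya]
  · by_cases hya : y e = a <;> simp [unmerge, he, hya, hπ]

theorem forall_unmerge_mem_iff (hA : A ⊆ ({e | y e = a} : Finset ι)) (S : ι → Finset C) :
    (∀ e, unmerge a b y A e ∈ S e) ↔ (∀ e, y e ≠ a → y e ∈ S e) ∧
      ({e | y e = a ∧ b ∉ S e} : Finset ι) ⊆ A ∧ A ⊆ ({e | y e = a ∧ a ∈ S e} : Finset ι) := by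
  simp only [subset_iff, mem_filter, mem_univ, true_and] at hA ⊢
  constructor
  · intro h
    refine ⟨fun e he => ?_, fun e ⟨hya, hb⟩ => ?_, fun e he => ⟨hA he, ?_⟩⟩
    · simpa [unmerge, he, show e ∉ A from fun h => he (hA h)] using h e
    · by_contra he
      exact hb (by simpa [unmerge, he, hya] using h e)
    · simpa [unmerge, he] using h e
  · rintro ⟨hout, hlo, hhi⟩ e
    by_cases he : e ∈ A
    · simpa [unmerge, he] using (hhi he).2
    · by_cases hya : y e = a
      · simp only [unmerge, he, hya, if_false, if_true]
        by_contra hb; exact he (hlo ⟨hya, hb⟩)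
      · simpa [unmerge, he, hya] using hout e hya

end unmerge

variable [Fintype C] {a b : C}

theorem sum_eq_sum_sum_unmerge {M : Type*} [AddCommMonoid M] (hab : a ≠ b)
    (F : (ι → C) → M) :
    ∑ x, F x = ∑ y ∈ Fintype.piFinset (fun _ => univ.erase b),
      ∑ A ∈ ({e | y e = a} : Finset ι).powerset, F (unmerge a b y A) := by
  rw [← sum_fiberwise_of_maps_to (g := fun x e => if x e = b then a else x e)
    (t := Fintype.piFinset fun _ => univ.erase b) (fun x _ => by
      simp only [Fintype.mem_piFinset, mem_erase, mem_univ, and_true]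
      intro e; split_ifs <;> assumption)]
  refine sum_congr rfl fun y hy => ?_
  simp only [Fintype.mem_piFinset, mem_erase, mem_univ, and_true] at hy
  have hleft : ∀ x, (fun e => if x e = b then a else x e) = y →
      unmerge a b y {e | x e = a} = x := by
    intro x hx
    funext e
    have hxe := congrFun hx e
    simp only [unmerge, mem_filter, mem_univ, true_and]
    by_cases hxa : x e = a
    · simp [hxa]
    · by_cases hxb : x e = b
      · rw [if_pos hxb] at hxe; simp [hxb, ← hxe, hab.symm]
      · rw [if_neg hxb] at hxe; simp [hxa, ← hxe]
  refine sum_nbij' (fun x => ({e | x e = a} : Finset ι)) (unmerge a b y) ?_ ?_ ?_ ?_ ?_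
  · intro x hx
    simp only [mem_filter, mem_univ, true_and, funext_iff] at hx
    simp only [mem_powerset, subset_iff, mem_filter, mem_univ, true_and]
    intro e he; rw [← hx e, if_neg (he ▸ hab)]; exact he
  · intro A hA
    simp only [mem_powerset, subset_iff, mem_filter, mem_univ, true_and] at hA
    simp only [mem_filter, mem_univ, true_and, funext_iff, unmerge]
    intro e
    by_cases he : e ∈ A
    · simp [he, hA he, hab]
    · by_cases hya : y e = a <;> simp [he, hya, hy e]
  · intro x hx
    exact hleft x (mem_filter.1 hx).2
  · exact fun A _ => filter_unmerge_eq_left hab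
  · intro x hx
    rw [hleft x (mem_filter.1 hx).2]

theorem sum_powerset_noViolationWeight_unmerge {y : ι → C} (hab : a ≠ b) (hy : ∀ e, y e ≠ b)
    {θ π : C → ℝ} (hθ : θ a = θ b) (hπ : π a = π b) (S : ι → Finset C) :
    ∑ A ∈ ({e | y e = a} : Finset ι).powerset, noViolationWeight θ π S (unmerge a b y A) =
      if ∀ e, y e ≠ a → y e ∈ S e then
        ∑ A ∈ Icc ({e | y e = a ∧ b ∉ S e} : Finset ι) ({e | y e = a ∧ a ∈ S e} : Finset ι),
          fibreWeight θ π a b y #A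
      else 0 := by
  classical
  split_ifs with hS
  · have hIcc : Icc ({e | y e = a ∧ b ∉ S e} : Finset ι) ({e | y e = a ∧ a ∈ S e} : Finset ι) =
        ({e | y e = a} : Finset ι).powerset.filter fun A =>
          ({e | y e = a ∧ b ∉ S e} : Finset ι) ⊆ A ∧ A ⊆ ({e | y e = a ∧ a ∈ S e} : Finset ι) := by
      ext A
      simp only [mem_Icc, mem_filter, mem_powerset, iff_and_self, and_imp]
      exact fun _ hA e he => by simpa using (mem_filter.1 (hA he)).2.1
    rw [hIcc, sum_filter]
    refine sum_congr rfl fun A hA => ?_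
    have hA : A ⊆ ({e | y e = a} : Finset ι) := mem_powerset.1 hA
    simp only [noViolationWeight, fibreWeight, Set.indicator_apply, Set.mem_ofPred_eq,
      forall_unmerge_mem_iff hA S, noViolation_unmerge_iff hab hy hA, prod_unmerge hA hπ, ← hθ]
    split_ifs <;> first | rfl | (exfalso; tauto)
  · refine sum_eq_zero fun A hA => Set.indicator_of_notMem ?_ _
    exact fun h => hS ((forall_unmerge_mem_iff (mem_powerset.1 hA) S).1 h.1).1

theorem sum_powerset_noViolationWeight_compress_le {y : ι → C} (hab : a ≠ b) (hy : ∀ e, y e ≠ b)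
    {θ π : C → ℝ} (hθ : θ a = θ b) (hπ : π a = π b) (hπ₀ : ∀ c, 0 ≤ π c) (S : ι → Finset C) :
    ∑ A ∈ ({e | y e = a} : Finset ι).powerset,
        noViolationWeight θ π (fun e => UV.compress {a} {b} (S e)) (unmerge a b y A) ≤
      ∑ A ∈ ({e | y e = a} : Finset ι).powerset, noViolationWeight θ π S (unmerge a b y A) := by
  have hout : (∀ e, y e ≠ a → y e ∈ UV.compress {a} {b} (S e)) ↔ ∀ e, y e ≠ a → y e ∈ S e :=
    forall_congr' fun e => imp_congr_right fun h => UV.mem_compress_singleton_of_ne h (hy e)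
  have hlo : ({e | y e = a ∧ b ∉ UV.compress {a} {b} (S e)} : Finset ι) =
      ({e | y e = a ∧ b ∉ S e} : Finset ι) ∪
        (({e | y e = a} : Finset ι) \ ({e | y e = a ∧ a ∈ S e} : Finset ι)) := by
    ext e; simp [UV.mem_compress_singleton_right]; tauto
  have hhi : ({e | y e = a ∧ a ∈ UV.compress {a} {b} (S e)} : Finset ι) =
      ({e | y e = a ∧ a ∈ S e} : Finset ι) ∪
        (({e | y e = a} : Finset ι) \ ({e | y e = a ∧ b ∉ S e} : Finset ι)) := by
    ext e; simp [UV.mem_compress_singleton_left hab]; tauto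
  simp only [sum_powerset_noViolationWeight_unmerge hab hy hθ hπ, hout, hlo, hhi]
  split_ifs
  · exact sum_Icc_compress_le (fun e he => by simp_all) fun m m' =>
      fibreWeight_le_of_le hπ₀ y
  · rfl

theorem noViolationMass_compress_le (hab : a ≠ b) {θ π : C → ℝ} (hθ : θ a = θ b) (hπ : π a = π b)
    (hπ₀ : ∀ c, 0 ≤ π c) (S : ι → Finset C) :
    noViolationMass θ π (fun e => UV.compress {a} {b} (S e)) ≤ noViolationMass θ π S := by
  simp only [noViolationMass, sum_eq_sum_sum_unmerge hab]
  refine sum_le_sum fun y hy => sum_powerset_noViolationWeight_compress_le hab ?_ hθ hπ hπ₀ S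
  simpa using hy

end Colourings

section Profiles

variable {C β : Type*} [DecidableEq β] (α : C → β)

theorem Finset.eq_of_subset_of_card_filter_eq {s R : Finset C} (h : s ⊆ R)
    (hcard : ∀ r, #{c ∈ s | α c = r} = #{c ∈ R | α c = r}) : s = R := by
  refine h.antisymm fun c hc => ?_
  have hfilter := eq_of_subset_of_card_le (filter_subset_filter _ h) (hcard (α c)).ge
  have : c ∈ ({c' ∈ R | α c' = α c} : Finset C) := mem_filter.2 ⟨hc, rfl⟩
  rw [← hfilter] at this
  exact (mem_filter.1 this).1

theorem Finset.exists_mem_notMem_of_card_filter_eq {s R : Finset C}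
    (hcard : ∀ r, #{c ∈ s | α c = r} = #{c ∈ R | α c = r}) {b : C} (hb : b ∈ s) (hbR : b ∉ R) :
    ∃ a ∈ R, a ∉ s ∧ α a = α b := by
  by_contra! hne
  have hsub : ({c ∈ R | α c = α b} : Finset C) ⊆ {c ∈ s | α c = α b} := by
    intro a ha
    rw [mem_filter] at ha ⊢
    exact ⟨by_contra fun has => hne a ha.1 has ha.2, ha.2⟩
  have hfilter := eq_of_subset_of_card_le hsub (hcard (α b)).le
  have : b ∈ ({c ∈ s | α c = α b} : Finset C) := mem_filter.2 ⟨hb, rfl⟩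
  rw [← hfilter] at this
  exact hbR (mem_filter.1 this).1

variable [DecidableEq C]

theorem UV.card_filter_compress_singleton {a b : C} (hab : a ≠ b) (hα : α a = α b)
    (s : Finset C) (r : β) :
    #{c ∈ compress {a} {b} s | α c = r} = #{c ∈ s | α c = r} := by
  rw [filter_compress_singleton hab (by rw [hα]), card_compress (by simp)]

variable {ι : Type*} [Fintype ι] [DecidableEq ι] [Fintype C]

theorem noViolationMass_const_le {θ π : C → ℝ} (hθ : ∀ a b, α a = α b → θ a = θ b)
    (hπ : ∀ a b, α a = α b → π a = π b) (hπ₀ : ∀ c, 0 ≤ π c) (R : Finset C)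
    (S : ι → Finset C) (hS : ∀ e r, #{c ∈ S e | α c = r} = #{c ∈ R | α c = r}) :
    noViolationMass θ π (fun _ : ι => R) ≤ noViolationMass θ π S := by
  induction hn : ∑ e, #(S e \ R) using Nat.strong_induction_on generalizing S with
  | _ n ih =>
  by_cases hsub : ∀ e, S e ⊆ R
  · rw [show S = fun _ => R from funext fun e => eq_of_subset_of_card_filter_eq α (hsub e) (hS e)]
  obtain ⟨e₀, b, hb, hbR⟩ := (not_forall.1 hsub).imp fun _ => not_subset.1
  obtain ⟨a, haR, haS, hab⟩ := exists_mem_notMem_of_card_filter_eq α (hS e₀) hb hbR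
  have hne : a ≠ b := by rintro rfl; exact hbR haR
  have hsmaller : ∑ e, #(UV.compress {a} {b} (S e) \ R) < n := by
    refine hn ▸ sum_lt_sum (fun e _ => card_le_card (UV.compress_singleton_sdiff_subset haR))
      ⟨e₀, mem_univ _, card_lt_card ?_⟩
    refine (ssubset_iff_of_subset (UV.compress_singleton_sdiff_subset haR)).2 ⟨b, ?_, ?_⟩
    · exact mem_sdiff.2 ⟨hb, hbR⟩
    · exact fun h => haS (UV.mem_compress_singleton_right.1 (mem_sdiff.1 h).1).1
  calc noViolationMass θ π (fun _ : ι => R)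
      ≤ noViolationMass θ π (fun e => UV.compress {a} {b} (S e)) :=
        ih _ hsmaller _ (fun e r => (UV.card_filter_compress_singleton α hne hab _ r).trans
          (hS e r)) rfl
    _ ≤ noViolationMass θ π S := noViolationMass_compress_le hne (hθ a b hab) (hπ a b hab) hπ₀ S

end Profiles

section Lists

variable {ι J C β : Type*} [Fintype J] [DecidableEq C]

open scoped Classical in
noncomputable def listWeight (Λ : J → β) (p : J → ℝ) (r : β) : ℝ :=
  if h : ∃ i, Λ i = r then p h.choose else 0

theorem listWeight_apply {Λ : J → β} {p : J → ℝ} (hp : ∀ i j, Λ i = Λ j → p i = p j) (i : J) :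
    listWeight Λ p (Λ i) = p i := by
  have h : ∃ j, Λ j = Λ i := ⟨i, rfl⟩
  rw [listWeight, dif_pos h]
  exact hp _ _ h.choose_spec

theorem listWeight_nonneg {Λ : J → β} {p : J → ℝ} (hp : ∀ i, 0 ≤ p i) (r : β) :
    0 ≤ listWeight Λ p r := by
  unfold listWeight; split_ifs <;> simp [hp]

theorem card_filter_image_eq {α : C → β} {Λ : J → β} [DecidableEq β] {M : J → C}
    (hM : M.Injective) (hα : ∀ i, α (M i) = Λ i) (r : β) :
    #{c ∈ univ.image M | α c = r} = #{i | Λ i = r} := by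
  rw [filter_image, card_image_of_injective _ hM]
  simp only [hα]

variable [Fintype ι] [DecidableEq ι] [Fintype C]

theorem sum_indicator_noViolation_eq_noViolationMass (M : ι → J → C)
    (hM : ∀ e, (M e).Injective) (θ π : C → ℝ) (p : J → ℝ) (hp : ∀ e i, p i = π (M e i)) :
    ∑ f : ι → J, {f | NoViolation θ fun e => M e (f e)}.indicator (fun f => ∏ e, p (f e)) f =
      noViolationMass θ π (fun e => univ.image (M e)) := by
  classical
  set g : (ι → C) → ℝ := {x | NoViolation θ x}.indicator fun x => ∏ e, π (x e)
  have hinj : (fun (f : ι → J) e => M e (f e)).Injective :=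
    fun f f' h => funext fun e => hM e (congrFun h e)
  calc _ = ∑ f : ι → J, g (fun e => M e (f e)) := by
        refine sum_congr rfl fun f _ => ?_
        simp only [g, Set.indicator_apply, Set.mem_ofPred_eq, ← hp]
    _ = ∑ x ∈ Fintype.piFinset fun e => univ.image (M e), g x := by
        rw [Fintype.piFinset_image, Fintype.piFinset_univ, sum_image fun f _ f' _ h => hinj h]
    _ = noViolationMass θ π (fun e => univ.image (M e)) := by
        rw [noViolationMass, ← univ_inter (Fintype.piFinset _), ← sum_ite_mem]
        refine sum_congr rfl fun x _ => ?_
        simp only [noViolationWeight, g, Set.indicator_apply, Set.mem_ofPred_eq,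
          Fintype.mem_piFinset]
        split_ifs <;> tauto

theorem sum_indicator_violation_eq (M : ι → J → C) (hM : ∀ e, (M e).Injective)
    (θ π : C → ℝ) (p : J → ℝ) (hp : ∀ e i, p i = π (M e i)) :
    ∑ f : ι → J, {f | ∃ c, θ c < (#{e | M e (f e) = c} : ℝ)}.indicator (fun f => ∏ e, p (f e)) f =
      ∑ f : ι → J, ∏ e, p (f e) - noViolationMass θ π (fun e => univ.image (M e)) := by
  have hcompl : {f : ι → J | ∃ c, θ c < (#{e | M e (f e) = c} : ℝ)} =
      {f | NoViolation θ fun e => M e (f e)}ᶜ := by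
    ext f; simp [NoViolation]
  rw [← sum_indicator_noViolation_eq_noViolationMass M hM θ π p hp, ← sum_sub_distrib, hcompl]
  exact sum_congr rfl fun f _ => congrFun (Set.indicator_compl _ _) f

end Lists

theorem prob_majority_violation_le_uniform_lists_general
    (ℓ d : ℕ)
    (C : Type*) [Fintype C] [DecidableEq C]
    (Λ : Fin ℓ → ℝ)
    (α : C → ℝ)
    (p : Fin ℓ → ℝ) (hp0 : ∀ i, 0 ≤ p i)
    (hpeq : ∀ i j, Λ i = Λ j → p i = p j)
    (Lfam : Fin d → Fin ℓ → C)
    (hfam : ∀ e, Function.Injective (Lfam e) ∧ ∀ i, α (Lfam e i) = Λ i)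
    (L : Fin ℓ → C) (hL : Function.Injective L ∧ ∀ i, α (L i) = Λ i) :
    ∑ f : Fin d → Fin ℓ,
        Set.indicator
          {f : Fin d → Fin ℓ | ∃ c : C,
            α c * d < ((Finset.univ.filter fun e => Lfam e (f e) = c).card : ℝ)}
          (fun f => ∏ e, p (f e)) f ≤
      ∑ f : Fin d → Fin ℓ,
        Set.indicator
          {f : Fin d → Fin ℓ | ∃ c : C,
            α c * d < ((Finset.univ.filter fun e => L (f e) = c).card : ℝ)}
          (fun f => ∏ e, p (f e)) f := by
  set π : C → ℝ := fun c => listWeight Λ p (α c)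
  have hp : ∀ M : Fin ℓ → C, (∀ i, α (M i) = Λ i) → ∀ i, p i = π (M i) := fun M hM i => by
    simp only [π, hM, listWeight_apply hpeq]
  have hprofile : ∀ e r, #{c ∈ univ.image (Lfam e) | α c = r} = #{c ∈ univ.image L | α c = r} :=
    fun e r => (card_filter_image_eq (hfam e).1 (hfam e).2 r).trans
      (card_filter_image_eq hL.1 hL.2 r).symm
  calc _ = ∑ f : Fin d → Fin ℓ, ∏ e, p (f e) -
        noViolationMass (fun c => α c * d) π (fun e => univ.image (Lfam e)) :=
        sum_indicator_violation_eq Lfam (fun e => (hfam e).1) _ π p fun e => hp _ (hfam e).2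
    _ ≤ ∑ f : Fin d → Fin ℓ, ∏ e, p (f e) -
        noViolationMass (fun c => α c * d) π (fun _ => univ.image L) :=
        sub_le_sub_left (noViolationMass_const_le α (fun a b h => by simp only [h])
          (fun a b h => by simp only [h]) (fun c => listWeight_nonneg hp0 _) _ _ hprofile) _
    _ = _ := (sum_indicator_violation_eq (fun _ => L) (fun _ => hL.1) _ π p
        fun _ => hp _ hL.2).symm

/-- Among all `Λ`-families of lists on the edges incident with a fixed
vertex of degree `d`, the probability (under independent choices, where the `i`-th colour
of a list is drawn with probability `pᵢ`) that some colour `c` is chosen more than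
`α(c)·d` times is maximised when all the lists are equal. -/
theorem prob_majority_violation_le_uniform_lists
    (ℓ d : ℕ) (hℓ : 0 < ℓ) (hd : 0 < d)
    (C : Type*) [Fintype C] [DecidableEq C]
    (Λ : Fin ℓ → ℝ) (hΛ : ∀ i, Λ i ∈ Set.Ioo (0 : ℝ) 1)
    (α : C → ℝ) (hα : ∀ c, α c ∈ Set.Ioo (0 : ℝ) 1)
    (p : Fin ℓ → ℝ) (hp0 : ∀ i, 0 ≤ p i) (hp1 : ∑ i, p i = 1)
    (hpΛ : ∀ i, p i < Λ i) (hpeq : ∀ i j, Λ i = Λ j → p i = p j)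
    (Lfam : Fin d → Fin ℓ → C)
    (hfam : ∀ e, Function.Injective (Lfam e) ∧ ∀ i, α (Lfam e i) = Λ i)
    (L : Fin ℓ → C) (hL : Function.Injective L ∧ ∀ i, α (L i) = Λ i) :
    ∑ f : Fin d → Fin ℓ,
        Set.indicator
          {f : Fin d → Fin ℓ | ∃ c : C,
            α c * d < ((Finset.univ.filter fun e => Lfam e (f e) = c).card : ℝ)}
          (fun f => ∏ e, p (f e)) f ≤
      ∑ f : Fin d → Fin ℓ,
        Set.indicator
          {f : Fin d → Fin ℓ | ∃ c : C,
            α c * d < ((Finset.univ.filter fun e => L (f e) = c).card : ℝ)}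
          (fun f => ∏ e, p (f e)) f :=
  prob_majority_violation_le_uniform_lists_general ℓ d C Λ α p hp0 hpeq Lfam hfam L hL
end

section
/- For every fixed ε ∈ (0, 0.9] and integer ℓ ≥ 2, for every ε-excessive tolerance vector Λ = (α₁,…,α_ℓ), every finite simple graph G with minimum degree δ(G) ≥ ⌈109·ℓ·ε⁻²·ln(ℓ·ε⁻¹)⌉, every Λ-tolerance function α and every Λ-list assignment L of G, there exists an α-majority L-colouring of G. -/
/-!
Iterated rounding. Discard the tolerances below `ε / (2ℓ)` (together at most `ε / 2`) and rescale
the others by their sum `W ≥ 1 + ε / 2`; putting these weights on the list of every edge gives a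
fractional colouring in which colour `c` has load at most `α(c) d(v) / W` at `v`. While some
variable is fractional, there are more fractional variables than the constraints "every edge has
total weight one" and "the load of `(v, c)` is kept", imposed only for the pairs `(v, c)` seeing at
least five fractional variables: every fractional edge has two fractional variables and every
fractional variable is seen by two pairs. So some nonzero direction respects all constraints, and
moving along it until a variable reaches `0` or `1` makes one more variable integral. A pair whose
constraint is dropped keeps at most its load plus four edges of its colour, so the final colouring
has at most `α(c) d(v) / W + 4` edges of colour `c` at `v`, which is at most `α(c) d(v)` because
the minimum degree forces `α(c) d(v) ≥ 37 / ε` whenever colour `c` is used.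
-/

open Finset

lemma add_mul_mem_Icc_of_le_div {x y t : ℝ} (hx : x ∈ Set.Ioo 0 1) (hy : y ≠ 0) (ht₀ : 0 ≤ t)
    (ht : t ≤ ((if 0 < y then 1 else 0) - x) / y) : x + t * y ∈ Set.Icc 0 1 := by
  obtain ⟨hx₀, hx₁⟩ := hx
  rcases hy.lt_or_gt with hneg | hpos
  · rw [if_neg hneg.not_gt, le_div_iff_of_neg hneg] at ht
    constructor <;> nlinarith
  · rw [if_pos hpos, le_div_iff₀ hpos] at ht
    constructor <;> nlinarith

lemma exists_add_mul_mem_Icc_notMem_Ioo {α : Type*} (s : Finset α) (x y : α → ℝ)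
    (hx : ∀ a ∈ s, x a ∈ Set.Ioo 0 1) (hy : ∃ a ∈ s, y a ≠ 0) :
    ∃ t : ℝ, (∀ a ∈ s, x a + t * y a ∈ Set.Icc 0 1) ∧ ∃ a ∈ s, x a + t * y a ∉ Set.Ioo 0 1 := by
  classical
  -- coordinate `a` moves towards the end `b a` of `[0, 1]` and reaches it at time `τ a`
  set b : α → ℝ := fun a => if 0 < y a then 1 else 0
  set τ : α → ℝ := fun a => (b a - x a) / y a
  have hτ : ∀ a ∈ s, y a ≠ 0 → 0 ≤ τ a := fun a ha hya => by
    obtain ⟨hx₀, hx₁⟩ := hx a ha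
    rcases hya.lt_or_gt with hneg | hpos
    · exact div_nonneg_of_nonpos (by simp [b, hneg.not_gt]; linarith) hneg.le
    · exact div_nonneg (by simp [b, hpos]; linarith) hpos.le
  obtain ⟨a₀, ha₀, hmin⟩ := (s.filter (y · ≠ 0)).exists_min_image τ (by simpa [Finset.Nonempty])
  rw [mem_filter] at ha₀
  refine ⟨τ a₀, fun a ha => ?_, a₀, ha₀.1, ?_⟩
  · by_cases hya : y a = 0
    · simpa [hya] using Set.Ioo_subset_Icc_self (hx a ha)
    · exact add_mul_mem_Icc_of_le_div (hx a ha) hya (hτ a₀ ha₀.1 ha₀.2)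
        (hmin a (mem_filter.2 ⟨ha, hya⟩))
  · rw [div_mul_cancel₀ _ ha₀.2, add_sub_cancel]
    by_cases h : 0 < y a₀ <;> simp [b, h]

lemma exists_ne_zero_forall_sum_eq_zero {α β : Type*} [DecidableEq α] (s : Finset α)
    (t : Finset β) (R : β → Finset α) (h : #t < #s) :
    ∃ y : α → ℝ, (∀ a ∉ s, y a = 0) ∧ (∃ a ∈ s, y a ≠ 0) ∧ ∀ b ∈ t, ∑ a ∈ R b, y a = 0 := by
  let M : Matrix t s ℝ := Matrix.of fun b a => if (a : α) ∈ R b then 1 else 0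
  have hker : LinearMap.ker M.mulVecLin ≠ ⊥ :=
    LinearMap.ker_ne_bot_of_finrank_lt (by simpa [Module.finrank_fintype_fun_eq_card] using h)
  obtain ⟨z, hz, hz0⟩ := (Submodule.ne_bot_iff _).1 hker
  let y : α → ℝ := fun a => if ha : a ∈ s then z ⟨a, ha⟩ else 0
  refine ⟨y, fun a ha => dif_neg ha, ?_, fun b hb => ?_⟩
  · obtain ⟨a, ha⟩ := Function.ne_iff.1 hz0
    exact ⟨a, a.2, by simpa [y] using ha⟩
  · have hrow := congrFun hz ⟨b, hb⟩
    simp only [Matrix.mulVecLin_apply, Matrix.mulVec, dotProduct, M, Matrix.of_apply, ite_mul,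
      one_mul, zero_mul, Pi.zero_apply] at hrow
    calc ∑ a ∈ R b, y a = ∑ a ∈ s with a ∈ R b, y a :=
          (sum_subset (fun a ha => (mem_filter.1 ha).2) fun a ha has =>
            dif_neg fun h => has (mem_filter.2 ⟨h, ha⟩)).symm
      _ = ∑ a : s, if (a : α) ∈ R b then z a else 0 := by
          rw [sum_filter, ← sum_coe_sort s]
          exact sum_congr rfl fun a _ => by simp [y]
      _ = 0 := hrow

lemma exists_ne_mem_Ioo_of_sum_eq_one {ι : Type*} [Fintype ι] [DecidableEq ι] {f : ι → ℝ}
    (h0 : ∀ i, 0 ≤ f i) (h1 : ∑ i, f i = 1) {i₀ : ι} (hi₀ : f i₀ ∈ Set.Ioo 0 1) :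
    ∃ j ≠ i₀, f j ∈ Set.Ioo 0 1 := by
  have hrest : ∑ j ∈ univ.erase i₀, f j = 1 - f i₀ := by rw [sum_erase_eq_sub (mem_univ _), h1]
  obtain ⟨j, hj, hpos⟩ := exists_lt_of_sum_lt (f := 0) (s := univ.erase i₀) (g := f)
    (by simp only [Pi.zero_apply, sum_const_zero]; linarith [hi₀.2])
  refine ⟨j, ne_of_mem_erase hj, hpos, ?_⟩
  linarith [single_le_sum (fun j _ => h0 j) hj, hi₀.1]

lemma Sym2.card_filter_mem_le_two {V : Type*} [Fintype V] [DecidableEq V] (z : Sym2 V) :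
    #{v | v ∈ z} ≤ 2 := by
  induction z with
  | _ a b => exact (card_le_card fun v hv => by simpa [Sym2.mem_iff] using hv).trans card_le_two

namespace FractionalListColouring

variable {V ι C : Type*} [Fintype V] [DecidableEq V] [Fintype ι] [DecidableEq C]
  (G : SimpleGraph V) [DecidableRel G.Adj] (L : Sym2 V → ι → C)

def pairsAt (v : V) (c : C) : Finset (Sym2 V × ι) :=
  (G.incidenceFinset v ×ˢ univ).filter fun p => L p.1 p.2 = c

noncomputable def load (x : Sym2 V × ι → ℝ) (v : V) (c : C) : ℝ :=
  ∑ p ∈ pairsAt G L v c, x p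

noncomputable def fracSet (x : Sym2 V × ι → ℝ) : Finset (Sym2 V × ι) :=
  (G.edgeFinset ×ˢ univ).filter fun p => x p ∈ Set.Ioo 0 1

noncomputable def fracCount (x : Sym2 V × ι → ℝ) (v : V) (c : C) : ℕ :=
  #{p ∈ fracSet G x | v ∈ p.1 ∧ L p.1 p.2 = c}

noncomputable def supportCount (x : Sym2 V × ι → ℝ) (v : V) (c : C) : ℕ :=
  #{p ∈ pairsAt G L v c | x p ≠ 0}

/-- The pairs whose load is kept while rounding. -/
noncomputable def activeSet (x : Sym2 V × ι → ℝ) : Finset (V × C) :=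
  (univ ×ˢ (fracSet G x).image fun p => L p.1 p.2).filter fun q => 5 ≤ fracCount G L x q.1 q.2

/-- `x (e, i)` is the weight of the `i`-th colour in the list of `e`. -/
structure IsFractional (x : Sym2 V × ι → ℝ) : Prop where
  nonneg : ∀ e ∈ G.edgeSet, ∀ i, 0 ≤ x (e, i)
  sum_eq_one : ∀ e ∈ G.edgeSet, ∑ i, x (e, i) = 1

structure IsPartialRounding (x₀ x : Sym2 V × ι → ℝ) : Prop extends IsFractional G x where
  support_subset : ∀ e ∈ G.edgeSet, ∀ i, x (e, i) ≠ 0 → x₀ (e, i) ≠ 0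
  load_le : ∀ v c, 5 ≤ fracCount G L x v c → load G L x v c ≤ load G L x₀ v c
  supportCount_le : ∀ v c, fracCount G L x v c < 5 →
    (supportCount G L x v c : ℝ) ≤ load G L x₀ v c + 4

variable {G L} {x : Sym2 V × ι → ℝ}

lemma mem_pairsAt {v : V} {c : C} {p : Sym2 V × ι} :
    p ∈ pairsAt G L v c ↔ p.1 ∈ G.edgeSet ∧ v ∈ p.1 ∧ L p.1 p.2 = c := by
  simp [pairsAt, SimpleGraph.incidenceSet, and_assoc]

omit [DecidableEq V] in
lemma mem_fracSet {p : Sym2 V × ι} : p ∈ fracSet G x ↔ p.1 ∈ G.edgeSet ∧ x p ∈ Set.Ioo 0 1 := by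
  simp [fracSet]

lemma card_pairsAt_le_degree (hL : ∀ e ∈ G.edgeSet, Function.Injective (L e)) (v : V) (c : C) :
    #(pairsAt G L v c) ≤ G.degree v := by
  rw [← G.card_incidenceFinset_eq_degree]
  refine card_le_card_of_injOn Prod.fst (fun p hp => (mem_filter.1 hp).1 |> mem_product.1 |>.1)
    fun p hp q hq hpq => ?_
  rw [mem_coe, mem_pairsAt] at hp hq
  exact Prod.ext hpq (hL _ hp.1 (by rw [hp.2.2, hpq, hq.2.2]))

lemma load_le_degree_mul (hL : ∀ e ∈ G.edgeSet, Function.Injective (L e)) {v : V} {c : C}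
    {a : ℝ} (ha : 0 ≤ a) (hx : ∀ e ∈ G.edgeSet, ∀ i, L e i = c → x (e, i) ≤ a) :
    load G L x v c ≤ G.degree v * a :=
  calc load G L x v c ≤ #(pairsAt G L v c) • a := sum_le_card_nsmul _ _ _ fun p hp => by
        obtain ⟨he, -, hc⟩ := mem_pairsAt.1 hp
        exact hx _ he _ hc
    _ ≤ G.degree v * a := by
        rw [nsmul_eq_mul]
        gcongr
        exact_mod_cast card_pairsAt_le_degree hL v c

omit [Fintype V] [DecidableEq V] [DecidableRel G.Adj] in
lemma IsFractional.le_one (hx : IsFractional G x) {e : Sym2 V} (he : e ∈ G.edgeSet) (i : ι) :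
    x (e, i) ≤ 1 :=
  hx.sum_eq_one e he ▸ single_le_sum (fun j _ => hx.nonneg e he j) (mem_univ i)

lemma IsFractional.two_le_card_fiber [DecidableEq ι] (hx : IsFractional G x) {e : Sym2 V}
    (he : e ∈ (fracSet G x).image Prod.fst) : 2 ≤ #{p ∈ fracSet G x | p.1 = e} := by
  obtain ⟨⟨e, i⟩, hp, rfl⟩ := mem_image.1 he
  obtain ⟨hE, hi⟩ := mem_fracSet.1 hp
  obtain ⟨j, hji, hj⟩ := exists_ne_mem_Ioo_of_sum_eq_one (hx.nonneg e hE) (hx.sum_eq_one e hE) hi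
  refine one_lt_card.2 ⟨(e, i), mem_filter.2 ⟨hp, rfl⟩, (e, j), ?_, by simp [hji.symm]⟩
  exact mem_filter.2 ⟨mem_fracSet.2 ⟨hE, hj⟩, rfl⟩

lemma IsFractional.card_image_fst_add_card_activeSet_lt [DecidableEq ι] (hx : IsFractional G x)
    (hne : (fracSet G x).Nonempty) :
    #((fracSet G x).image Prod.fst) + #(activeSet G L x) < #(fracSet G x) := by
  have hedges : #((fracSet G x).image Prod.fst) * 2 ≤ #(fracSet G x) * 1 :=
    card_mul_le_card_mul (fun (e : Sym2 V) (p : Sym2 V × ι) => p.1 = e)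
      (fun e he => hx.two_le_card_fiber he)
      fun p _ => card_le_one.2 fun a ha b hb => (mem_filter.1 ha).2.symm.trans (mem_filter.1 hb).2
  -- a fractional variable is seen by its two endpoints, with its own colour
  have hactive : #(activeSet G L x) * 5 ≤ #(fracSet G x) * 2 :=
    card_mul_le_card_mul (fun (q : V × C) (p : Sym2 V × ι) => q.1 ∈ p.1 ∧ L p.1 p.2 = q.2)
      (fun q hq => (mem_filter.1 hq).2) fun p _ => by
        refine (card_le_card (t := ({v | v ∈ p.1} : Finset V) ×ˢ {L p.1 p.2})
          fun q hq => ?_).trans ?_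
        · obtain ⟨-, hv, hc⟩ := mem_filter.1 hq
          exact mem_product.2 ⟨mem_filter.2 ⟨mem_univ _, hv⟩, mem_singleton.2 hc.symm⟩
        · simpa using Sym2.card_filter_mem_le_two p.1
  have := hne.card_pos
  omega

lemma IsFractional.exists_balancing_direction [DecidableEq ι] (hx : IsFractional G x)
    (hne : (fracSet G x).Nonempty) :
    ∃ y : Sym2 V × ι → ℝ, (∀ p ∉ fracSet G x, y p = 0) ∧ (∃ p ∈ fracSet G x, y p ≠ 0) ∧
      (∀ e, ∑ i, y (e, i) = 0) ∧
      ∀ v c, 5 ≤ fracCount G L x v c → ∑ p ∈ pairsAt G L v c, y p = 0 := by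
  obtain ⟨y, hys, hy0, hyR⟩ := exists_ne_zero_forall_sum_eq_zero (fracSet G x)
    (((fracSet G x).image Prod.fst).disjSum (activeSet G L x))
    (Sum.elim (fun e => {e} ×ˢ univ) fun q => pairsAt G L q.1 q.2)
    (by simpa using hx.card_image_fst_add_card_activeSet_lt hne)
  refine ⟨y, hys, hy0, fun e => ?_, fun v c hvc => hyR (.inr (v, c)) (inr_mem_disjSum.2 ?_)⟩
  · by_cases he : e ∈ (fracSet G x).image Prod.fst
    · simpa [sum_product] using hyR (.inl e) (inl_mem_disjSum.2 he)
    · exact sum_eq_zero fun i _ => hys _ fun h => he (mem_image_of_mem _ h)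
  · obtain ⟨p, hp⟩ := card_pos.1 (lt_of_lt_of_le (by norm_num) hvc)
    obtain ⟨hpF, -, hpc⟩ := mem_filter.1 hp
    exact mem_filter.2 ⟨mem_product.2 ⟨mem_univ v, mem_image.2 ⟨p, hpF, hpc⟩⟩, hvc⟩

lemma IsFractional.supportCount_le_load_add_fracCount (hx : IsFractional G x) (v : V) (c : C) :
    (supportCount G L x v c : ℝ) ≤ load G L x v c + fracCount G L x v c := by
  classical
  have hsplit :
      supportCount G L x v c ≤ #{p ∈ pairsAt G L v c | x p = 1} + fracCount G L x v c := by
    refine (card_le_card fun p hp => ?_).trans (card_union_le _ _)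
    obtain ⟨hp, hp0⟩ := mem_filter.1 hp
    obtain ⟨he, hv, hc⟩ := mem_pairsAt.1 hp
    rcases (hx.le_one he p.2).eq_or_lt with h1 | h1
    · exact mem_union_left _ (mem_filter.2 ⟨hp, h1⟩)
    · exact mem_union_right _ (mem_filter.2
        ⟨mem_fracSet.2 ⟨he, (hx.nonneg _ he p.2).lt_of_ne' hp0, h1⟩, hv, hc⟩)
  have hones : (#{p ∈ pairsAt G L v c | x p = 1} : ℝ) ≤ load G L x v c :=
    calc (#{p ∈ pairsAt G L v c | x p = 1} : ℝ) = ∑ p ∈ pairsAt G L v c with x p = 1, x p := by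
          rw [sum_congr rfl fun p hp => (mem_filter.1 hp).2, sum_const, nsmul_one]
      _ ≤ load G L x v c := sum_le_sum_of_subset_of_nonneg (filter_subset _ _) fun p hp _ =>
          hx.nonneg _ (mem_pairsAt.1 hp).1 p.2
  have : (supportCount G L x v c : ℝ) ≤ #{p ∈ pairsAt G L v c | x p = 1} + fracCount G L x v c :=
    mod_cast hsplit
  linarith

lemma IsPartialRounding.of_fracSet_subset {x₀ x' : Sym2 V × ι → ℝ}
    (h : IsPartialRounding G L x₀ x) (hx' : IsFractional G x')
    (hsupp : ∀ p, x' p ≠ 0 → x p ≠ 0) (hfrac : fracSet G x' ⊆ fracSet G x)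
    (hload : ∀ v c, 5 ≤ fracCount G L x v c → load G L x' v c = load G L x v c) :
    IsPartialRounding G L x₀ x' := by
  have hcount : ∀ v c, fracCount G L x' v c ≤ fracCount G L x v c := fun v c =>
    card_le_card (filter_subset_filter _ hfrac)
  refine { hx' with
    support_subset := fun e he i hi => h.support_subset e he i (hsupp _ hi)
    load_le := fun v c h5 => ?_
    supportCount_le := fun v c h4 => ?_ }
  · have h5x := h5.trans (hcount v c)
    exact (hload v c h5x).trans_le (h.load_le v c h5x)
  by_cases h5 : 5 ≤ fracCount G L x v c
  · -- `(v, c)` has just become inactive: its load was kept, and few fractional variables remain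
    have h4' : (fracCount G L x' v c : ℝ) ≤ 4 := by exact_mod_cast Nat.le_of_lt_succ h4
    linarith [hx'.supportCount_le_load_add_fracCount (L := L) v c, hload v c h5, h.load_le v c h5]
  · have hle : supportCount G L x' v c ≤ supportCount G L x v c :=
      card_le_card (monotone_filter_right _ fun p _ => hsupp p)
    exact (Nat.cast_le.2 hle).trans (h.supportCount_le v c (not_le.1 h5))

lemma IsPartialRounding.exists_card_fracSet_lt [DecidableEq ι] {x₀ : Sym2 V × ι → ℝ}
    (h : IsPartialRounding G L x₀ x) (hne : (fracSet G x).Nonempty) :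
    ∃ x', IsPartialRounding G L x₀ x' ∧ #(fracSet G x') < #(fracSet G x) := by
  obtain ⟨y, hys, hy0, hyE, hyA⟩ := h.exists_balancing_direction (L := L) hne
  obtain ⟨t, hbox, p₀, hp₀, hp₀'⟩ := exists_add_mul_mem_Icc_notMem_Ioo (fracSet G x) x y
    (fun p hp => (mem_fracSet.1 hp).2) hy0
  set x' : Sym2 V × ι → ℝ := fun p => x p + t * y p
  have hfix : ∀ p ∉ fracSet G x, x' p = x p := fun p hp => by simp [x', hys p hp]
  have hsub : fracSet G x' ⊆ fracSet G x := fun p hp => by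
    by_contra hpx
    rw [mem_fracSet, hfix p hpx] at hp
    exact hpx (mem_fracSet.2 hp)
  have hx' : IsFractional G x' := by
    refine ⟨fun e he i => ?_, fun e he => ?_⟩
    · by_cases hp : (e, i) ∈ fracSet G x
      · exact (hbox _ hp).1
      · exact hfix _ hp ▸ h.nonneg e he i
    · simp [x', sum_add_distrib, ← mul_sum, h.sum_eq_one e he, hyE e]
  refine ⟨x', h.of_fracSet_subset hx' (fun p hp => ?_) hsub fun v c h5 => ?_,
    card_lt_card ⟨hsub, fun hsup => ?_⟩⟩
  · by_cases hpx : p ∈ fracSet G x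
    · exact (mem_fracSet.1 hpx).2.1.ne'
    · rwa [← hfix p hpx]
  · simp [x', load, sum_add_distrib, ← mul_sum, hyA v c h5]
  · exact hp₀' (mem_fracSet.1 (hsup hp₀)).2

lemma IsFractional.isPartialRounding_self (hx : IsFractional G x) : IsPartialRounding G L x x where
  toIsFractional := hx
  support_subset _ _ _ := id
  load_le _ _ _ := le_rfl
  supportCount_le v c h4 := by
    have h4' : (fracCount G L x v c : ℝ) ≤ 4 := by exact_mod_cast Nat.le_of_lt_succ h4
    linarith [hx.supportCount_le_load_add_fracCount (L := L) v c]

lemma IsPartialRounding.exists_fracSet_eq_empty [DecidableEq ι] {x₀ : Sym2 V × ι → ℝ}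
    (h : IsPartialRounding G L x₀ x) : ∃ x', IsPartialRounding G L x₀ x' ∧ fracSet G x' = ∅ := by
  induction hn : #(fracSet G x) using Nat.strong_induction_on generalizing x with
  | _ n ih =>
    rcases (fracSet G x).eq_empty_or_nonempty with h0 | hne
    · exact ⟨x, h, h0⟩
    · obtain ⟨x', h', hlt⟩ := h.exists_card_fracSet_lt hne
      exact ih _ (hn ▸ hlt) h' rfl

lemma IsPartialRounding.exists_choice_of_fracSet_eq_empty [Nonempty ι] {x₀ : Sym2 V × ι → ℝ}
    (h : IsPartialRounding G L x₀ x) (hempty : fracSet G x = ∅) :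
    ∃ ch : Sym2 V → ι, (∀ e ∈ G.edgeSet, x₀ (e, ch e) ≠ 0) ∧
      ∀ v c, (#{e ∈ G.incidenceFinset v | L e (ch e) = c} : ℝ) ≤ load G L x₀ v c + 4 := by
  have hone : ∀ e, ∃ i, e ∈ G.edgeSet → x (e, i) = 1 := fun e => by
    by_cases he : e ∈ G.edgeSet
    · obtain ⟨i, -, hi⟩ := exists_lt_of_sum_lt (f := 0) (s := univ) (g := fun i => x (e, i))
        (by simp [h.sum_eq_one e he])
      refine ⟨i, fun _ => (h.le_one he i).eq_of_not_lt fun hlt => ?_⟩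
      simpa [hempty] using mem_fracSet.2 ⟨he, hi, hlt⟩
    · exact ⟨Classical.arbitrary ι, fun h => absurd h he⟩
  choose ch hch using hone
  refine ⟨ch, fun e he => h.support_subset e he _ (by simp [hch e he]), fun v c => ?_⟩
  have hcard : #{e ∈ G.incidenceFinset v | L e (ch e) = c} ≤ supportCount G L x v c := by
    refine card_le_card_of_injOn (fun e => (e, ch e)) (fun e he => ?_) fun e _ e' _ he => ?_
    · obtain ⟨hev, hc⟩ := mem_filter.1 he
      have hE := G.incidenceSet_subset v ((G.mem_incidenceFinset v e).1 hev)
      refine mem_filter.2 ⟨mem_filter.2 ⟨mem_product.2 ⟨hev, mem_univ _⟩, hc⟩, ?_⟩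
      simp [hch e hE]
    · exact congrArg Prod.fst he
  have hfrac : fracCount G L x v c < 5 := by simp [fracCount, hempty]
  exact (Nat.cast_le.2 hcard).trans (h.supportCount_le v c hfrac)

theorem IsFractional.exists_choice_card_le_load_add_four [DecidableEq ι] [Nonempty ι]
    (hx : IsFractional G x) :
    ∃ ch : Sym2 V → ι, (∀ e ∈ G.edgeSet, x (e, ch e) ≠ 0) ∧
      ∀ v c, (#{e ∈ G.incidenceFinset v | L e (ch e) = c} : ℝ) ≤ load G L x v c + 4 := by
  obtain ⟨xf, hf, hempty⟩ := (hx.isPartialRounding_self (L := L)).exists_fracSet_eq_empty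
  exact hf.exists_choice_of_fracSet_eq_empty hempty

end FractionalListColouring

lemma sum_le_sum_filter_le_add_card_mul {ι : Type*} [Fintype ι] (f : ι → ℝ) {θ : ℝ} (hθ : 0 ≤ θ) :
    ∑ i, f i ≤ ∑ i with θ ≤ f i, f i + Fintype.card ι * θ := by
  rw [← sum_filter_add_sum_filter_not univ (θ ≤ f ·)]
  gcongr
  calc ∑ i with ¬θ ≤ f i, f i ≤ #{i | ¬θ ≤ f i} • θ :=
        sum_le_card_nsmul _ _ _ fun i hi => (not_le.1 (mem_filter.1 hi).2).le
    _ ≤ Fintype.card ι * θ := by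
        rw [nsmul_eq_mul]
        gcongr
        exact_mod_cast card_le_univ _

lemma exists_rescaled_truncation {ι : Type*} [Fintype ι] {Λ : ι → ℝ} {ε : ℝ} (hε : 0 < ε)
    (hΛ : ∑ i, Λ i = 1 + ε) :
    ∃ (w : ι → ℝ) (W : ℝ), 1 + ε / 2 ≤ W ∧ (∀ i, 0 ≤ w i) ∧ ∑ i, w i = 1 ∧
      ∀ i, w i ≠ 0 → w i = Λ i / W ∧ ε / (2 * Fintype.card ι) ≤ Λ i := by
  classical
  set θ := ε / (2 * Fintype.card ι)
  set W := ∑ i with θ ≤ Λ i, Λ i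
  have hW : 1 + ε / 2 ≤ W := by
    have hθ : Fintype.card ι * θ ≤ ε / 2 := by
      rcases (Fintype.card ι).eq_zero_or_pos with h | h
      · simp only [h, CharP.cast_eq_zero, zero_mul]
        positivity
      · simp only [θ]
        field_simp
        rfl
    linarith [sum_le_sum_filter_le_add_card_mul Λ (θ := θ) (by positivity)]
  refine ⟨fun i => if θ ≤ Λ i then Λ i / W else 0, W, hW, fun i => ?_, ?_, fun i hi => ?_⟩
  · dsimp only
    split_ifs with h
    · exact div_nonneg ((by positivity : 0 ≤ θ).trans h) (by linarith)
    · exact le_rfl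
  · rw [← sum_filter, ← sum_div, div_self (by linarith)]
  · by_cases h : θ ≤ Λ i
    · exact ⟨if_pos h, h⟩
    · exact absurd (if_neg h) hi

lemma SimpleGraph.ncard_incidenceSet_inter_eq_card_filter {V : Type*} [Fintype V] [DecidableEq V]
    (G : SimpleGraph V) [DecidableRel G.Adj] (v : V) (p : Sym2 V → Prop) [DecidablePred p] :
    (G.incidenceSet v ∩ {e | p e}).ncard = #{e ∈ G.incidenceFinset v | p e} := by
  rw [← Set.ncard_coe_finset]
  congr 1
  ext e
  simp [SimpleGraph.mem_incidenceFinset]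

/-- The constant `37` is `⌊109 · log 2 / 2⌋`. -/
lemma thirty_seven_le_mul_mul {ε ℓ a d : ℝ} (hε : 0 < ε) (hε₁ : ε ≤ 1) (hℓ : 2 ≤ ℓ)
    (ha : ε / (2 * ℓ) ≤ a) (hd : 109 * ℓ * (ε ^ 2)⁻¹ * Real.log (ℓ * ε⁻¹) ≤ d) :
    37 ≤ ε * (a * d) := by
  have hlog : 0.69 ≤ Real.log (ℓ * ε⁻¹) := by
    have h2 : (2 : ℝ) ≤ ℓ * ε⁻¹ := by
      rw [← div_eq_mul_inv, le_div_iff₀ hε]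
      nlinarith
    linarith [Real.log_two_gt_d9, Real.log_le_log two_pos h2]
  have ha₀ : 0 ≤ a := le_trans (by positivity) ha
  set lg := Real.log (ℓ * ε⁻¹)
  calc (37 : ℝ) ≤ ε * (ε / (2 * ℓ) * (109 * ℓ * (ε ^ 2)⁻¹ * lg)) := by
        field_simp
        linarith
    _ ≤ ε * (a * d) := by gcongr

lemma div_add_four_le {ε A W : ℝ} (hε : 0 < ε) (hε₉ : ε ≤ 0.9) (hW : 1 + ε / 2 ≤ W)
    (hA : 37 ≤ ε * A) : A / W + 4 ≤ A := by
  have hA₀ : 0 ≤ A := by nlinarith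
  have hWA : A / W ≤ A / (1 + ε / 2) := div_le_div_of_nonneg_left hA₀ (by positivity) hW
  have : A / (1 + ε / 2) + 4 ≤ A := by
    rw [div_add' _ _ _ (by positivity), div_le_iff₀ (by positivity)]
    nlinarith
  linarith

open FractionalListColouring

theorem alpha_majority_colouring_uniform_tolerance_vector_general
    (ε : ℝ) (hε : ε ∈ Set.Ioc (0 : ℝ) 0.9) (ℓ : ℕ) (hℓ : 2 ≤ ℓ)
    (Λ : Fin ℓ → ℝ) (hΛsum : ∑ i, Λ i = 1 + ε)
    {V : Type*} [Fintype V] [DecidableEq V] (G : SimpleGraph V) [DecidableRel G.Adj]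
    (hδ : ∀ v : V, ⌈(109 : ℝ) * ℓ * (ε ^ 2)⁻¹ * Real.log (ℓ * ε⁻¹)⌉₊ ≤ G.degree v)
    (C : Type*) (α : C → ℝ) (hα : ∀ c, α c ∈ Set.Ioo (0 : ℝ) 1)
    (L : Sym2 V → Fin ℓ → C)
    (hLinj : ∀ e ∈ G.edgeSet, Function.Injective (L e))
    (hLα : ∀ e ∈ G.edgeSet, ∀ i, α (L e i) = Λ i) :
    ∃ ω : Sym2 V → C,
      (∀ e ∈ G.edgeSet, ∃ i, L e i = ω e) ∧
      ∀ (v : V) (c : C),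
        ((G.incidenceSet v ∩ {e | ω e = c}).ncard : ℝ) ≤ α c * (G.degree v : ℝ) := by
  classical
  obtain ⟨hε₀, hε₉⟩ := hε
  have : NeZero ℓ := ⟨by omega⟩
  obtain ⟨w, W, hW, hw₀, hw₁, hw⟩ := exists_rescaled_truncation hε₀ hΛsum
  rw [Fintype.card_fin] at hw
  have hx : IsFractional G fun p : Sym2 V × Fin ℓ => w p.2 := ⟨fun _ _ i => hw₀ i, fun _ _ => hw₁⟩
  obtain ⟨ch, hch, hcount⟩ := hx.exists_choice_card_le_load_add_four (L := L)
  refine ⟨fun e => L e (ch e), fun e _ => ⟨ch e, rfl⟩, fun v c => ?_⟩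
  rw [G.ncard_incidenceSet_inter_eq_card_filter]
  rcases (filter (fun e => L e (ch e) = c) (G.incidenceFinset v)).eq_empty_or_nonempty with
    h0 | ⟨e, he⟩
  · rw [h0, card_empty, Nat.cast_zero]
    exact mul_nonneg (hα c).1.le (Nat.cast_nonneg _)
  obtain ⟨hev, rfl⟩ := mem_filter.1 he
  have hE : e ∈ G.edgeSet := G.incidenceSet_subset v ((G.mem_incidenceFinset v e).1 hev)
  have hload : load G L (fun p => w p.2) v (L e (ch e)) ≤ G.degree v * (α (L e (ch e)) / W) := by
    refine load_le_degree_mul hLinj (div_nonneg (hα _).1.le (by linarith)) fun e' he' i hi => ?_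
    by_cases hwi : w i = 0
    · exact hwi ▸ div_nonneg (hα _).1.le (by linarith)
    · rw [(hw i hwi).1, ← hi, hLα e' he']
  have hd : 109 * ℓ * (ε ^ 2)⁻¹ * Real.log (ℓ * ε⁻¹) ≤ (G.degree v : ℝ) :=
    (Nat.le_ceil _).trans (by exact_mod_cast hδ v)
  calc _ ≤ load G L (fun p => w p.2) v (L e (ch e)) + 4 := hcount v _
    _ ≤ α (L e (ch e)) * G.degree v / W + 4 := by rw [mul_comm, mul_div_assoc]; linarith
    _ ≤ α (L e (ch e)) * G.degree v := div_add_four_le hε₀ hε₉ hW <|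
        thirty_seven_le_mul_mul hε₀ (by linarith) (by exact_mod_cast hℓ)
          (hLα e hE _ ▸ (hw _ (hch e hE)).2) hd

/-- For fixed `ε ∈ (0, 0.9]` and integer `ℓ ≥ 2`, for every
`ε`-excessive tolerance vector `Λ = (α₁,…,α_ℓ)`, every finite simple graph `G` with
minimum degree at least `⌈109·ℓ·ε⁻²·ln(ℓ·ε⁻¹)⌉`, every `Λ`-tolerance function `α` and
every `Λ`-list assignment `L` of `G`, there is an `α`-majority `L`-colouring of `G`. -/
theorem alpha_majority_colouring_uniform_tolerance_vector
    (ε : ℝ) (hε : ε ∈ Set.Ioc (0 : ℝ) 0.9) (ℓ : ℕ) (hℓ : 2 ≤ ℓ)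
    (Λ : Fin ℓ → ℝ) (hΛ : ∀ i, Λ i ∈ Set.Ioo (0 : ℝ) 1) (hΛsum : ∑ i, Λ i = 1 + ε)
    {V : Type*} [Fintype V] [DecidableEq V] (G : SimpleGraph V) [DecidableRel G.Adj]
    (hδ : ∀ v : V, ⌈(109 : ℝ) * ℓ * (ε ^ 2)⁻¹ * Real.log (ℓ * ε⁻¹)⌉₊ ≤ G.degree v)
    (C : Type*) (α : C → ℝ) (hα : ∀ c, α c ∈ Set.Ioo (0 : ℝ) 1)
    (hαΛ : ∀ c, ∃ i, α c = Λ i)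
    (L : Sym2 V → Fin ℓ → C)
    (hLinj : ∀ e ∈ G.edgeSet, Function.Injective (L e))
    (hLα : ∀ e ∈ G.edgeSet, ∀ i, α (L e i) = Λ i) :
    ∃ ω : Sym2 V → C,
      (∀ e ∈ G.edgeSet, ∃ i, L e i = ω e) ∧
      ∀ (v : V) (c : C),
        ((G.incidenceSet v ∩ {e | ω e = c}).ncard : ℝ) ≤ α c * (G.degree v : ℝ) :=
  alpha_majority_colouring_uniform_tolerance_vector_general ε hε ℓ hℓ Λ hΛsum G hδ C α hα L hLinj
    hLα
end

section
/- Let k ≥ 2 be an integer and let G be a finite simple d-regular graph with d ≥ k² − k such that ⌊d/k⌋ is even. Then for every list assignment L assigning to each edge a list of k+1 colours, G admits an L-colouring that is a 1/k-majority edge colouring. -/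
/-!
Write `⌊d/k⌋ = 2s`. Orient `G` so that every vertex is the tail of at most `⌈d/2⌉` edges and the
head of at most `⌈d/2⌉` edges, and regard the orientation as a bipartite multigraph between
tails and heads. As `d ≥ k² - k` forces `⌊d/k⌋ ≥ k - 1 ≥ d mod k`, we get `d ≤ (k + 1)⌊d/k⌋`,
i.e. `⌈d/2⌉ ≤ (k + 1)s`. By Galvin's theorem this bipartite multigraph can therefore be edge
coloured properly from the lists `L(e) × {0, …, s - 1}`, of size `(k + 1)s`. Forgetting the second
coordinate, a colour `c` is then used at most `s` times at `v` as a tail and `s` times as a head,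
so at most `2s = ⌊d/k⌋` times in all.

Galvin's theorem is proved by his kernel method: a proper edge colouring with `n` colours (König's
theorem, via perfect matchings in a padded regular double cover) ranks the edges at each vertex so
that every edge is outranked by fewer than `n` others, and stable matchings then let one colour
be handed out at a time. The orientation comes from Hall's theorem, giving every vertex half its
degree in slots, after joining the vertices of odd degree to a new vertex.
-/

open Finset

lemma Finset.card_filter_disjSum {α β : Type*} (s : Finset α) (t : Finset β)
    (P : α ⊕ β → Prop) [DecidablePred P] :
    #{z ∈ s.disjSum t | P z} = #{a ∈ s | P (.inl a)} + #{b ∈ t | P (.inr b)} := by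
  simp only [card_filter, sum_disjSum]

lemma Finset.exists_injective_of_card_le_card_biUnion {ι α : Type*} [DecidableEq α]
    (s : Finset ι) (t : ι → Finset α) (h : ∀ s' ⊆ s, #s' ≤ #(s'.biUnion t)) :
    ∃ f : s → α, Function.Injective f ∧ ∀ i : s, f i ∈ t i := by
  refine (all_card_le_biUnion_card_iff_exists_injective fun i : s => t i).mp fun s' => ?_
  have hs' : s'.map (Function.Embedding.subtype _) ⊆ s := fun i hi => by
    obtain ⟨j, -, rfl⟩ := mem_map.mp hi
    exact j.2
  calc #s' = #(s'.map (Function.Embedding.subtype _)) := (card_map _).symm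
    _ ≤ #((s'.map (Function.Embedding.subtype _)).biUnion t) := h _ hs'
    _ = #(s'.biUnion fun i => t i) := by
      congr 1
      ext a
      simp

section Multigraph

variable {ε V : Type*} [DecidableEq V]

/-- The degree of `v` in the multigraph with edge set `E` in which `e` joins `p e` and `q e`
(a loop counts twice). -/
def endDegree (E : Finset ε) (p q : ε → V) (v : V) : ℕ :=
  #{e ∈ E | p e = v} + #{e ∈ E | q e = v}

lemma endDegree_comm (E : Finset ε) (p q : ε → V) : endDegree E q p = endDegree E p q :=
  funext fun _ => add_comm _ _

lemma endDegree_mono {E F : Finset ε} (h : E ⊆ F) (p q : ε → V) (v : V) :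
    endDegree E p q v ≤ endDegree F p q v :=
  add_le_add (card_le_card (filter_subset_filter _ h)) (card_le_card (filter_subset_filter _ h))

lemma sum_endDegree (E : Finset ε) (p q : ε → V) {W : Finset V} (hp : ∀ e ∈ E, p e ∈ W)
    (hq : ∀ e ∈ E, q e ∈ W) : ∑ v ∈ W, endDegree E p q v = 2 * #E := by
  simp only [endDegree, sum_add_distrib]
  rw [← card_eq_sum_card_fiberwise hp, ← card_eq_sum_card_fiberwise hq, two_mul]

lemma endDegree_eq_of_sym2_eq {E : Finset ε} {p q t h : ε → V}
    (hth : ∀ e ∈ E, s(t e, h e) = s(p e, q e)) : endDegree E t h = endDegree E p q := by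
  funext v
  simp only [endDegree, card_filter, ← sum_add_distrib]
  refine sum_congr rfl fun e he => ?_
  rcases Sym2.eq_iff.mp (hth e he) with ⟨ht, hh⟩ | ⟨ht, hh⟩ <;> rw [ht, hh]
  rw [add_comm]

def halfSlots (E : Finset ε) (p q : ε → V) (v : V) : Finset (V × ℕ) :=
  {v} ×ˢ range (endDegree E p q v / 2)

lemma mem_halfSlots {E : Finset ε} {p q : ε → V} {v : V} {a : V × ℕ} :
    a ∈ halfSlots E p q v ↔ a.1 = v ∧ a.2 < endDegree E p q v / 2 := by
  simp only [halfSlots, mem_product, mem_singleton, mem_range]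

lemma card_halfSlots (E : Finset ε) (p q : ε → V) (v : V) :
    #(halfSlots E p q v) = endDegree E p q v / 2 := by
  rw [halfSlots, card_product, card_singleton, card_range, one_mul]

lemma card_le_card_biUnion_halfSlots {E : Finset ε} {p q : ε → V}
    (heven : ∀ v, Even (endDegree E p q v)) {s : Finset ε} (hs : s ⊆ E) :
    #s ≤ #(s.biUnion fun e => halfSlots E p q (p e) ∪ halfSlots E p q (q e)) := by
  set W := s.image p ∪ s.image q
  have hW : s.biUnion (fun e => halfSlots E p q (p e) ∪ halfSlots E p q (q e)) =
      W.biUnion (halfSlots E p q) := by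
    ext a
    simp only [mem_biUnion, mem_union, mem_image, W]
    grind
  rw [hW, card_biUnion (t := halfSlots E p q) fun v _ w _ hvw =>
    disjoint_product.mpr (Or.inl (disjoint_singleton.mpr hvw))]
  refine Nat.le_of_mul_le_mul_left ?_ two_pos
  calc 2 * #s = ∑ v ∈ W, endDegree s p q v :=
        (sum_endDegree s p q (fun e he => mem_union_left _ (mem_image_of_mem p he))
          fun e he => mem_union_right _ (mem_image_of_mem q he)).symm
    _ ≤ ∑ v ∈ W, endDegree E p q v := sum_le_sum fun v _ => endDegree_mono hs p q v
    _ = 2 * ∑ v ∈ W, #(halfSlots E p q v) := by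
        rw [mul_sum]
        exact sum_congr rfl fun v _ => by
          rw [card_halfSlots, Nat.two_mul_div_two_of_even (heven v)]

lemma exists_orientation_card_filter_le_half {E : Finset ε} {p q : ε → V}
    (heven : ∀ v, Even (endDegree E p q v)) :
    ∃ t h : ε → V, (∀ e ∈ E, s(t e, h e) = s(p e, q e)) ∧
      ∀ v, #{e ∈ E | t e = v} ≤ endDegree E p q v / 2 := by
  classical
  -- Hall's theorem puts every edge in a slot at one of its ends, and that end becomes its tail
  obtain ⟨f, hf_inj, hf⟩ := exists_injective_of_card_le_card_biUnion E _
    fun _ hs => card_le_card_biUnion_halfSlots heven hs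
  set g : ε → V × ℕ := fun e => if he : e ∈ E then f ⟨e, he⟩ else (p e, 0)
  have hg : ∀ e ∈ E, g e ∈ halfSlots E p q (g e).1 ∧ ((g e).1 = p e ∨ (g e).1 = q e) :=
    fun e he => by
      have := hf ⟨e, he⟩
      simp only [mem_union, mem_halfSlots] at this
      simp only [g, dif_pos he, mem_halfSlots]
      grind
  have hg_inj : Set.InjOn g E := fun e he e' he' hee' => by
    rw [mem_coe] at he he'
    simp only [g, dif_pos he, dif_pos he'] at hee'
    exact congrArg Subtype.val (hf_inj hee')
  refine ⟨fun e => (g e).1, fun e => if (g e).1 = p e then q e else p e, fun e he => ?_,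
    fun v => ?_⟩
  · rcases (hg e he).2 with hend | hend <;> simp [hend]
  · refine (card_le_card_of_injOn g (fun e he => ?_) (hg_inj.mono fun e he =>
      (mem_filter.mp he).1)).trans_eq (card_halfSlots E p q v)
    obtain ⟨heE, rfl⟩ := mem_filter.mp he
    exact (hg e heE).1

/-- The degrees after joining each vertex of `O` to a new vertex `none`. -/
lemma endDegree_disjSum_apex (E : Finset ε) (p q : ε → V) (O : Finset V) (u : Option V) :
    endDegree (E.disjSum O) (Sum.elim (some ∘ p) some) (Sum.elim (some ∘ q) fun _ => none) u =
      u.elim #O fun v => endDegree E p q v + if v ∈ O then 1 else 0 := by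
  rcases u with _ | v
  · simp [endDegree, card_filter_disjSum]
  · simp only [endDegree, card_filter_disjSum, Sum.elim_inl, Function.comp_apply,
      Option.some.injEq, Sum.elim_inr, filter_eq', reduceCtorEq, filter_false, card_empty,
      add_zero, Option.elim_some]
    split_ifs <;> simp [add_right_comm]

lemma card_filter_le_card_filter_disjSum {E : Finset ε} {O : Finset V} {τ' : ε ⊕ V → Option V}
    {τ : ε → V} (hτ : ∀ e ∈ E, τ' (.inl e) = some (τ e)) (v : V) :
    #{e ∈ E | τ e = v} ≤ #{z ∈ E.disjSum O | τ' z = some v} := by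
  refine card_le_card_of_injOn Sum.inl (fun e he => ?_) Sum.inl_injective.injOn
  obtain ⟨heE, rfl⟩ := mem_filter.mp he
  exact mem_filter.mpr ⟨inl_mem_disjSum.mpr heE, hτ e heE⟩

variable [Fintype V]

theorem exists_eulerian_orientation {E : Finset ε} {p q : ε → V}
    (heven : ∀ v, Even (endDegree E p q v)) :
    ∃ t h : ε → V, (∀ e ∈ E, s(t e, h e) = s(p e, q e)) ∧
      ∀ v, 2 * #{e ∈ E | t e = v} = endDegree E p q v ∧
        2 * #{e ∈ E | h e = v} = endDegree E p q v := by
  obtain ⟨t, h, hth, hout⟩ := exists_orientation_card_filter_le_half heven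
  -- the bounds `hout` are tight, as both sides sum to `#E`
  have hsum : ∑ v, #{e ∈ E | t e = v} = ∑ v, endDegree E p q v / 2 := by
    refine Nat.eq_of_mul_eq_mul_left two_pos ?_
    rw [← card_eq_sum_card_fiberwise fun e _ => mem_univ (t e), mul_sum,
      ← sum_endDegree E p q (fun e _ => mem_univ _) fun e _ => mem_univ _]
    exact sum_congr rfl fun v _ => (Nat.two_mul_div_two_of_even (heven v)).symm
  refine ⟨t, h, hth, fun v => ?_⟩
  have htail : 2 * #{e ∈ E | t e = v} = endDegree E p q v := by
    rw [(sum_eq_sum_iff_of_le fun v _ => hout v).mp hsum v (mem_univ v)]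
    exact Nat.two_mul_div_two_of_even (heven v)
  have hsum_v := congrFun (endDegree_eq_of_sym2_eq hth) v
  simp only [endDegree] at hsum_v htail ⊢
  omega

lemma even_endDegree_disjSum_apex (E : Finset ε) (p q : ε → V) (u : Option V) :
    Even (endDegree (E.disjSum {v | Odd (endDegree E p q v)}) (Sum.elim (some ∘ p) some)
      (Sum.elim (some ∘ q) fun _ => none) u) := by
  rcases u with _ | v <;> rw [endDegree_disjSum_apex]
  · rw [Option.elim_none, ← even_sum_iff_even_card_odd,
      sum_endDegree E p q (fun e _ => mem_univ _) fun e _ => mem_univ _]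
    exact even_two_mul _
  · rw [Option.elim_some]
    by_cases hodd : Odd (endDegree E p q v)
    · rw [if_pos (by simpa using hodd)]
      exact hodd.add_one
    · rw [if_neg (by simpa using hodd), add_zero]
      exact Nat.not_odd_iff_even.mp hodd

theorem exists_balanced_orientation (E : Finset ε) (p q : ε → V) :
    ∃ t h : ε → V, (∀ e ∈ E, s(t e, h e) = s(p e, q e)) ∧
      ∀ v, #{e ∈ E | t e = v} ≤ (endDegree E p q v + 1) / 2 ∧
        #{e ∈ E | h e = v} ≤ (endDegree E p q v + 1) / 2 := by
  obtain ⟨t', h', hth', hdeg'⟩ := exists_eulerian_orientation (even_endDegree_disjSum_apex E p q)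
  have hth : ∀ e ∈ E, t' (.inl e) = some ((t' (.inl e)).getD (p e)) ∧
      h' (.inl e) = some ((h' (.inl e)).getD (q e)) ∧
      s((t' (.inl e)).getD (p e), (h' (.inl e)).getD (q e)) = s(p e, q e) := fun e he => by
    have := hth' (.inl e) (inl_mem_disjSum.mpr he)
    simp only [Sum.elim_inl, Function.comp_apply] at this
    rcases Sym2.eq_iff.mp this with ⟨h1, h2⟩ | ⟨h1, h2⟩ <;> simp [h1, h2, Sym2.eq_swap]
  -- an end at `v` is an end at `some v` after adding the apex, where the degree is at most
  -- `endDegree E p q v + 1`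
  have hbound : ∀ (τ' : ε ⊕ V → Option V) (τ : ε → V), (∀ e ∈ E, τ' (.inl e) = some (τ e)) →
      (∀ v, 2 * #{z ∈ E.disjSum {v | Odd (endDegree E p q v)} | τ' z = some v} =
        endDegree (E.disjSum {v | Odd (endDegree E p q v)}) (Sum.elim (some ∘ p) some)
          (Sum.elim (some ∘ q) fun _ => none) (some v)) →
      ∀ v, #{e ∈ E | τ e = v} ≤ (endDegree E p q v + 1) / 2 := by
    intro τ' τ hτ hτ' v
    have := card_filter_le_card_filter_disjSum (O := {v | Odd (endDegree E p q v)}) hτ v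
    have hdeg := hτ' v
    rw [endDegree_disjSum_apex, Option.elim_some] at hdeg
    split_ifs at hdeg <;> omega
  exact ⟨_, _, fun e he => (hth e he).2.2, fun v =>
    ⟨hbound t' _ (fun e he => (hth e he).1) (fun v => (hdeg' _).1) v,
      hbound h' _ (fun e he => (hth e he).2.1) (fun v => (hdeg' _).2) v⟩⟩

end Multigraph

section BipartiteMultigraph

variable {ε X Y β : Type*}

/-- `E` with the end maps `x` and `y` is read as a bipartite multigraph: two edges are adjacent
when they share their `x`-end or their `y`-end, even if `X = Y`. -/
def IsProperEdgeColouring (E : Finset ε) (x : ε → X) (y : ε → Y) (ω : ε → β) : Prop :=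
  ∀ e ∈ E, ∀ f ∈ E, e ≠ f → (x e = x f ∨ y e = y f) → ω e ≠ ω f

namespace IsProperEdgeColouring

variable {E F : Finset ε} {x : ε → X} {y : ε → Y} {ω : ε → β}

lemma mono (h : IsProperEdgeColouring E x y ω) (hF : F ⊆ E) : IsProperEdgeColouring F x y ω :=
  fun e he f hf => h e (hF he) f (hF hf)

lemma swap (h : IsProperEdgeColouring E x y ω) : IsProperEdgeColouring E y x ω :=
  fun e he f hf hef hadj => h e he f hf hef hadj.symm

lemma card_filter_left_le [DecidableEq X] [DecidableEq β] (h : IsProperEdgeColouring E x y ω)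
    (v : X) (S : Finset β) : #{e ∈ E | x e = v ∧ ω e ∈ S} ≤ #S := by
  refine card_le_card_of_injOn ω (fun e he => (mem_filter.mp he).2.2) fun e he f hf hωef => ?_
  simp only [coe_filter, Set.mem_ofPred_eq] at he hf
  by_contra hef
  exact h e he.1 f hf.1 hef (Or.inl (he.2.1.trans hf.2.1.symm)) hωef

lemma card_filter_right_le [DecidableEq Y] [DecidableEq β] (h : IsProperEdgeColouring E x y ω)
    (w : Y) (S : Finset β) : #{e ∈ E | y e = w ∧ ω e ∈ S} ≤ #S :=
  h.swap.card_filter_left_le w S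

end IsProperEdgeColouring

variable [DecidableEq X] [DecidableEq Y] {x : ε → X} {y : ε → Y}

lemma card_filter_mem_eq_mul_card {E : Finset ε} {r : ℕ}
    (hx : ∀ e ∈ E, #{f ∈ E | x f = x e} = r) {S : Finset X} (hS : S ⊆ E.image x) :
    #{e ∈ E | x e ∈ S} = r * #S := by
  rw [card_eq_sum_card_fiberwise (s := {e ∈ E | x e ∈ S}) (f := x) (t := S)
    fun e he => (mem_filter.mp he).2, mul_comm]
  refine sum_const_nat fun v hv => ?_
  obtain ⟨e, he, rfl⟩ := mem_image.mp (hS hv)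
  rw [filter_filter, ← hx e he]
  congr 1
  exact filter_congr fun f _ => ⟨fun h => h.2, fun h => ⟨h ▸ hv, h⟩⟩

lemma card_image_eq_of_regular {E : Finset ε} {r : ℕ} (hr : 0 < r)
    (hx : ∀ e ∈ E, #{f ∈ E | x f = x e} = r) (hy : ∀ e ∈ E, #{f ∈ E | y f = y e} = r) :
    #(E.image x) = #(E.image y) := by
  refine Nat.eq_of_mul_eq_mul_left hr ?_
  rw [← card_filter_mem_eq_mul_card hx Subset.rfl, ← card_filter_mem_eq_mul_card hy Subset.rfl,
    filter_true_of_mem fun e he => mem_image_of_mem x he,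
    filter_true_of_mem fun e he => mem_image_of_mem y he]

lemma exists_injective_of_regular {E : Finset ε} {r : ℕ} (hr : 0 < r)
    (hx : ∀ e ∈ E, #{f ∈ E | x f = x e} = r) (hy : ∀ e ∈ E, #{f ∈ E | y f = y e} = r) :
    ∃ g : E.image x → Y, Function.Injective g ∧
      ∀ v : E.image x, g v ∈ {e ∈ E | x e = v}.image y := by
  refine (all_card_le_biUnion_card_iff_exists_injective _).mp fun S => ?_
  refine Nat.le_of_mul_le_mul_left ?_ hr
  calc r * #S = r * #(S.map (Function.Embedding.subtype _)) := by rw [card_map]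
    _ = #{e ∈ E | x e ∈ S.map (Function.Embedding.subtype _)} :=
      (card_filter_mem_eq_mul_card hx fun v hv => by
        obtain ⟨v, -, rfl⟩ := mem_map.mp hv
        exact v.2).symm
    _ ≤ #{e ∈ E | y e ∈ S.biUnion fun v => {e ∈ E | x e = v}.image y} := by
      refine card_le_card fun e he => ?_
      obtain ⟨heE, hxe⟩ := mem_filter.mp he
      obtain ⟨v, hv, hve⟩ := mem_map.mp hxe
      exact mem_filter.mpr ⟨heE, mem_biUnion.mpr ⟨v, hv, mem_image.mpr
        ⟨e, mem_filter.mpr ⟨heE, hve.symm⟩, rfl⟩⟩⟩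
    _ = r * #(S.biUnion fun v => {e ∈ E | x e = v}.image y) :=
      card_filter_mem_eq_mul_card hy <| biUnion_subset.mpr fun v _ =>
        image_subset_image (filter_subset _ _)

lemma exists_perfect_matching_of_regular [DecidableEq ε] {E : Finset ε} {r : ℕ} (hr : 0 < r)
    (hx : ∀ e ∈ E, #{f ∈ E | x f = x e} = r) (hy : ∀ e ∈ E, #{f ∈ E | y f = y e} = r) :
    ∃ M ⊆ E, (∀ e ∈ E, #{m ∈ M | x m = x e} = 1) ∧ ∀ e ∈ E, #{m ∈ M | y m = y e} = 1 := by
  obtain ⟨g, hg_inj, hg⟩ := exists_injective_of_regular hr hx hy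
  have hm : ∀ v : E.image x, ∃ e, e ∈ E ∧ x e = v ∧ y e = g v := fun v => by
    simpa [and_assoc] using hg v
  choose m hmE hmx hmy using hm
  have hg_surj : ∀ e ∈ E, ∃ v, g v = y e := by
    have himage : univ.image g = E.image y := by
      refine eq_of_subset_of_card_le (fun w hw => ?_) ?_
      · obtain ⟨v, -, rfl⟩ := mem_image.mp hw
        exact image_subset_image (filter_subset _ _) (hg v)
      · rw [card_image_of_injective _ hg_inj, card_univ, Fintype.card_coe,
          card_image_eq_of_regular hr hx hy]
    intro e he
    obtain ⟨v, -, hv⟩ := mem_image.mp (himage ▸ mem_image_of_mem y he)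
    exact ⟨v, hv⟩
  have hxM : ∀ v : E.image x, {f ∈ univ.image m | x f = v} = {m v} := fun v => by
    ext f
    simp only [mem_filter, mem_image, mem_univ, true_and, mem_singleton]
    constructor
    · rintro ⟨⟨u, rfl⟩, hu⟩
      exact congrArg m (Subtype.ext ((hmx u).symm.trans hu))
    · rintro rfl
      exact ⟨⟨v, rfl⟩, hmx v⟩
  have hyM : ∀ v, {f ∈ univ.image m | y f = g v} = {m v} := fun v => by
    ext f
    simp only [mem_filter, mem_image, mem_univ, true_and, mem_singleton]
    constructor
    · rintro ⟨⟨u, rfl⟩, hu⟩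
      exact congrArg m (hg_inj ((hmy u).symm.trans hu))
    · rintro rfl
      exact ⟨⟨v, rfl⟩, hmy v⟩
  refine ⟨univ.image m, fun e he => ?_, fun e he => ?_, fun e he => ?_⟩
  · obtain ⟨v, -, rfl⟩ := mem_image.mp he
    exact hmE v
  · rw [show x e = (⟨x e, mem_image_of_mem x he⟩ : E.image x) from rfl, hxM, card_singleton]
  · obtain ⟨v, hv⟩ := hg_surj e he
    rw [← hv, hyM, card_singleton]

lemma card_filter_sdiff_eq_of_subset {Z : Type*} [DecidableEq ε] [DecidableEq Z]
    {E M : Finset ε} (hME : M ⊆ E) (z : ε → Z) (w : Z) :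
    #{f ∈ E \ M | z f = w} = #{f ∈ E | z f = w} - #{m ∈ M | z m = w} := by
  rw [← card_sdiff_of_subset (filter_subset_filter _ hME)]
  congr 1
  ext f
  simp only [mem_filter, mem_sdiff]
  tauto

lemma exists_proper_edgeColouring_of_regular [DecidableEq ε] (r : ℕ) {E : Finset ε}
    (hx : ∀ e ∈ E, #{f ∈ E | x f = x e} = r) (hy : ∀ e ∈ E, #{f ∈ E | y f = y e} = r) :
    ∃ φ : ε → ℕ, (∀ e ∈ E, φ e < r) ∧ IsProperEdgeColouring E x y φ := by
  induction r generalizing E with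
  | zero =>
    obtain rfl : E = ∅ := eq_empty_of_forall_notMem fun e he => by
      have hpos : 0 < #{f ∈ E | x f = x e} := card_pos.mpr ⟨e, mem_filter.mpr ⟨he, rfl⟩⟩
      exact hpos.ne' (hx e he)
    exact ⟨fun _ => 0, by simp, by simp [IsProperEdgeColouring]⟩
  | succ r ih =>
    obtain ⟨M, hME, hMx, hMy⟩ := exists_perfect_matching_of_regular r.succ_pos hx hy
    obtain ⟨φ, hφlt, hφ⟩ := ih (E := E \ M)
      (fun e he => by
        rw [card_filter_sdiff_eq_of_subset hME, hx e (sdiff_subset he), hMx e (sdiff_subset he)]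
        rfl)
      (fun e he => by
        rw [card_filter_sdiff_eq_of_subset hME, hy e (sdiff_subset he), hMy e (sdiff_subset he)]
        rfl)
    refine ⟨fun e => if e ∈ M then r else φ e, fun e he => ?_, fun e he f hf hef hadj => ?_⟩
    · by_cases heM : e ∈ M
      · simp [heM]
      · simpa [heM] using (hφlt e (mem_sdiff.mpr ⟨he, heM⟩)).trans r.lt_succ_self
    by_cases heM : e ∈ M <;> by_cases hfM : f ∈ M <;> simp only [heM, hfM, if_true, if_false]
    · refine absurd ?_ hef
      rcases hadj with h | h
      · exact card_le_one.mp (hMx e he).le e (mem_filter.mpr ⟨heM, rfl⟩) f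
          (mem_filter.mpr ⟨hfM, h.symm⟩)
      · exact card_le_one.mp (hMy e he).le e (mem_filter.mpr ⟨heM, rfl⟩) f
          (mem_filter.mpr ⟨hfM, h.symm⟩)
    · exact (hφlt f (mem_sdiff.mpr ⟨hf, hfM⟩)).ne'
    · exact (hφlt e (mem_sdiff.mpr ⟨he, heM⟩)).ne
    · exact hφ e (mem_sdiff.mpr ⟨he, heM⟩) f (mem_sdiff.mpr ⟨hf, hfM⟩) hef hadj

end BipartiteMultigraph

section DoubleCover

variable {ε V : Type*} [DecidableEq V]

/-- The bipartite double cover of the multigraph `(E, p, q)`, with ends `doubleCoverEnd p q` and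
`doubleCoverEnd q p`: each edge appears once in each direction, and `n - endDegree E p q v` extra
edges join the two copies of each vertex `v`. -/
def paddedDoubleCover (E : Finset ε) (p q : ε → V) (n : ℕ) : Finset ((ε ⊕ ε) ⊕ V × ℕ) :=
  (E.disjSum E).disjSum {vi ∈ (E.image p ∪ E.image q) ×ˢ range n | endDegree E p q vi.1 ≤ vi.2}

def doubleCoverEnd (p q : ε → V) : (ε ⊕ ε) ⊕ V × ℕ → V :=
  Sum.elim (Sum.elim p q) Prod.fst

lemma paddedDoubleCover_comm (E : Finset ε) (p q : ε → V) (n : ℕ) :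
    paddedDoubleCover E q p n = paddedDoubleCover E p q n := by
  rw [paddedDoubleCover, paddedDoubleCover, endDegree_comm, union_comm]

lemma card_filter_doubleCoverEnd_eq {E : Finset ε} {p q : ε → V} {n : ℕ}
    (hD : ∀ v, endDegree E p q v ≤ n) :
    ∀ z ∈ paddedDoubleCover E p q n,
      #{z' ∈ paddedDoubleCover E p q n | doubleCoverEnd p q z' = doubleCoverEnd p q z} = n := by
  have hU : ∀ z ∈ paddedDoubleCover E p q n, doubleCoverEnd p q z ∈ E.image p ∪ E.image q := by
    rintro ((e | e) | ⟨v, i⟩) hz <;>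
      simp only [paddedDoubleCover, inl_mem_disjSum, inr_mem_disjSum, mem_filter,
        mem_product] at hz
    · exact mem_union_left _ (mem_image_of_mem p hz)
    · exact mem_union_right _ (mem_image_of_mem q hz)
    · exact hz.1.1
  intro z hz
  obtain ⟨u, hu, hzu⟩ : ∃ u ∈ E.image p ∪ E.image q, doubleCoverEnd p q z = u :=
    ⟨_, hU z hz, rfl⟩
  have hpad : {vi ∈ {vi ∈ (E.image p ∪ E.image q) ×ˢ range n | endDegree E p q vi.1 ≤ vi.2} |
      vi.1 = u} = {u} ×ˢ Ico (endDegree E p q u) n := by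
    ext ⟨v, i⟩
    simp only [mem_filter, mem_product, mem_range, mem_singleton, mem_Ico]
    constructor
    · rintro ⟨⟨⟨-, hi⟩, hDi⟩, rfl⟩
      exact ⟨rfl, hDi, hi⟩
    · rintro ⟨rfl, hDi, hi⟩
      exact ⟨⟨⟨hu, hi⟩, hDi⟩, rfl⟩
  rw [hzu, paddedDoubleCover, card_filter_disjSum, card_filter_disjSum]
  change endDegree E p q u + #{vi ∈ {vi ∈ (E.image p ∪ E.image q) ×ˢ range n |
    endDegree E p q vi.1 ≤ vi.2} | vi.1 = u} = n
  rw [hpad, card_product, card_singleton, Nat.card_Ico, one_mul]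
  exact Nat.add_sub_cancel' (hD u)

end DoubleCover

/-- König's edge colouring theorem. -/
theorem exists_proper_edgeColouring {ε X Y : Type*} [DecidableEq ε] [DecidableEq X]
    [DecidableEq Y] (E : Finset ε) (x : ε → X) (y : ε → Y) (n : ℕ)
    (hx : ∀ v, #{e ∈ E | x e = v} ≤ n) (hy : ∀ w, #{e ∈ E | y e = w} ≤ n) :
    ∃ φ : ε → ℕ, (∀ e ∈ E, φ e < n) ∧ IsProperEdgeColouring E x y φ := by
  set p : ε → X ⊕ Y := Sum.inl ∘ x
  set q : ε → X ⊕ Y := Sum.inr ∘ y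
  have hD : ∀ u, endDegree E p q u ≤ n := by
    rintro (v | w) <;> simp [endDegree, p, q, hx, hy]
  have hright := card_filter_doubleCoverEnd_eq (E := E) (p := q) (q := p) (n := n)
    (by rwa [endDegree_comm])
  rw [paddedDoubleCover_comm] at hright
  obtain ⟨φ, hφlt, hφ⟩ := exists_proper_edgeColouring_of_regular n
    (card_filter_doubleCoverEnd_eq hD) hright
  have hmem : ∀ e ∈ E, .inl (.inl e) ∈ paddedDoubleCover E p q n := fun e he => by
    simpa [paddedDoubleCover] using he
  refine ⟨fun e => φ (.inl (.inl e)), fun e he => hφlt _ (hmem e he),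
    fun e he f hf hef hadj => hφ _ (hmem e he) _ (hmem f hf) (by simpa using hef) ?_⟩
  rcases hadj with h | h
  · exact Or.inl (by simp [doubleCoverEnd, p, h])
  · exact Or.inr (by simp [doubleCoverEnd, q, h])

section Galvin

variable {ε X Y : Type*}

/-- `f` shares an end with `e` and is preferred there, an `x`-end preferring larger labels and a
`y`-end smaller ones. -/
def Outranks (x : ε → X) (y : ε → Y) (φ : ε → ℕ) (f e : ε) : Prop :=
  (x f = x e ∧ φ e < φ f) ∨ (y f = y e ∧ φ f < φ e)

instance [DecidableEq X] [DecidableEq Y] (x : ε → X) (y : ε → Y) (φ : ε → ℕ) :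
    DecidableRel (Outranks x y φ) :=
  fun _ _ => inferInstanceAs (Decidable (_ ∨ _))

/-- A kernel of Galvin's orientation of the line graph. -/
def IsStableMatching (F M : Finset ε) (x : ε → X) (y : ε → Y) (φ : ε → ℕ) : Prop :=
  M ⊆ F ∧ (∀ e ∈ M, ∀ f ∈ M, e ≠ f → x e ≠ x f ∧ y e ≠ y f) ∧
    ∀ f ∈ F, f ∉ M → ∃ e ∈ M, Outranks x y φ e f

variable {x : ε → X} {y : ε → Y} {φ : ε → ℕ}

lemma card_filter_outranks_lt [DecidableEq ε] [DecidableEq X] [DecidableEq Y] {E : Finset ε}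
    {n : ℕ} (hφ : IsProperEdgeColouring E x y φ) (hlt : ∀ e ∈ E, φ e < n) {e : ε} (he : e ∈ E) :
    #{f ∈ E | Outranks x y φ f e} < n := by
  have hsub : {f ∈ E | Outranks x y φ f e} ⊆
      {f ∈ E | x f = x e ∧ φ f ∈ Ioo (φ e) n} ∪ {f ∈ E | y f = y e ∧ φ f ∈ range (φ e)} := by
    intro f hf
    simp only [mem_filter, mem_union, mem_Ioo, mem_range] at hf ⊢
    rcases hf with ⟨hfE, ⟨hx, hlt'⟩ | ⟨hy, hlt'⟩⟩
    · exact Or.inl ⟨hfE, hx, hlt', hlt f hfE⟩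
    · exact Or.inr ⟨hfE, hy, hlt'⟩
  calc #{f ∈ E | Outranks x y φ f e}
      ≤ #{f ∈ E | x f = x e ∧ φ f ∈ Ioo (φ e) n} + #{f ∈ E | y f = y e ∧ φ f ∈ range (φ e)} :=
        (card_le_card hsub).trans (card_union_le _ _)
    _ ≤ #(Ioo (φ e) n) + #(range (φ e)) :=
        add_le_add (hφ.card_filter_left_le _ _) (hφ.card_filter_right_le _ _)
    _ < n := by
        rw [Nat.card_Ioo, card_range]
        have := hlt e he
        omega

/-- An edge `f` rejected by its `y`-end in favour of an `x`-favourite `e` can be discarded. -/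
lemma IsStableMatching.of_erase [DecidableEq ε] {F M : Finset ε} {e f : ε}
    (hM : IsStableMatching (F.erase f) M x y φ) (heF : e ∈ F) (hyef : y e = y f)
    (hφef : φ e < φ f) (hfav : ∀ g ∈ F, x g = x e → φ g ≤ φ e) : IsStableMatching F M x y φ := by
  obtain ⟨hMF, hmatch, hdom⟩ := hM
  refine ⟨hMF.trans (erase_subset f F), hmatch, fun g hgF hgM => ?_⟩
  by_cases hgf : g = f
  · subst hgf
    by_cases heM : e ∈ M
    · exact ⟨e, heM, Or.inr ⟨hyef, hφef⟩⟩
    obtain ⟨m, hmM, hm⟩ := hdom e (mem_erase.mpr ⟨by rintro rfl; omega, heF⟩) heM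
    rcases hm with ⟨hxm, hφm⟩ | ⟨hym, hφm⟩
    · exact absurd (hfav m (erase_subset g F (hMF hmM)) hxm) (by omega)
    · exact ⟨m, hmM, Or.inr ⟨hym.trans hyef, hφm.trans hφef⟩⟩
  · exact hdom g (mem_erase.mpr ⟨hgf, hgF⟩) hgM

/-- When no edge is rejected as in `IsStableMatching.of_erase`, the favourites of the `x`-ends
form a stable matching. -/
lemma isStableMatching_filter_favourite [DecidableEq X] {F : Finset ε}
    (hφ : IsProperEdgeColouring F x y φ)
    (hrej : ∀ f ∈ F, ∀ e ∈ F, y e = y f → φ e < φ f → ∃ g ∈ F, x g = x e ∧ φ e < φ g) :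
    IsStableMatching F {e ∈ F | ∀ g ∈ F, x g = x e → φ g ≤ φ e} x y φ := by
  refine ⟨filter_subset _ _, fun e he f hf hef => ?_, fun f hfF hfM => ?_⟩
  · obtain ⟨heF, hefav⟩ := mem_filter.mp he
    obtain ⟨hfF, hffav⟩ := mem_filter.mp hf
    refine ⟨fun hx => hφ e heF f hfF hef (Or.inl hx) ?_, fun hy => ?_⟩
    · exact le_antisymm (hffav e heF hx) (hefav f hfF hx.symm)
    rcases lt_or_gt_of_ne (hφ e heF f hfF hef (Or.inr hy)) with hlt | hlt
    · obtain ⟨g, hgF, hxg, hφg⟩ := hrej f hfF e heF hy hlt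
      exact absurd (hefav g hgF hxg) (by omega)
    · obtain ⟨g, hgF, hxg, hφg⟩ := hrej e heF f hfF hy.symm hlt
      exact absurd (hffav g hgF hxg) (by omega)
  · obtain ⟨g, hgF, hxg, hφg⟩ : ∃ g ∈ F, x g = x f ∧ φ f < φ g := by
      simpa [hfF] using hfM
    obtain ⟨m, hm, hmax⟩ :=
      exists_max_image {g ∈ F | x g = x f} φ ⟨g, mem_filter.mpr ⟨hgF, hxg⟩⟩
    obtain ⟨hmF, hxm⟩ := mem_filter.mp hm
    refine ⟨m, mem_filter.mpr ⟨hmF, fun g' hg'F hxg' => hmax g' ?_⟩, Or.inl ⟨hxm, ?_⟩⟩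
    · exact mem_filter.mpr ⟨hg'F, hxg'.trans hxm⟩
    · exact hφg.trans_le (hmax g (mem_filter.mpr ⟨hgF, hxg⟩))

lemma exists_isStableMatching [DecidableEq ε] [DecidableEq X] (F : Finset ε)
    (hφ : IsProperEdgeColouring F x y φ) : ∃ M, IsStableMatching F M x y φ := by
  induction F using Finset.strongInduction with
  | H F ih =>
  by_cases hrej : ∃ f ∈ F, ∃ e ∈ F, y e = y f ∧ φ e < φ f ∧ ∀ g ∈ F, x g = x e → φ g ≤ φ e
  · obtain ⟨f, hfF, e, heF, hyef, hφef, hfav⟩ := hrej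
    obtain ⟨M, hM⟩ := ih _ (erase_ssubset hfF) (hφ.mono (erase_subset f F))
    exact ⟨M, hM.of_erase heF hyef hφef hfav⟩
  push Not at hrej
  exact ⟨_, isStableMatching_filter_favourite hφ hrej⟩

lemma card_filter_outranks_sdiff_lt [DecidableEq ε] [DecidableEq X] [DecidableEq Y] {C : Type*}
    [DecidableEq C] {F M : Finset ε} {L : ε → Finset C} {c : C} (hMF : M ⊆ F)
    (hdom : ∀ f ∈ F, c ∈ L f → f ∉ M → ∃ e ∈ M, Outranks x y φ e f)
    (hL : ∀ e ∈ F, #{f ∈ F | Outranks x y φ f e} < #(L e)) :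
    ∀ e ∈ F \ M, #{f ∈ F \ M | Outranks x y φ f e} < #((L e).erase c) := by
  intro e he
  obtain ⟨heF, heM⟩ := mem_sdiff.mp he
  have hsub : {f ∈ F \ M | Outranks x y φ f e} ⊆ {f ∈ F | Outranks x y φ f e} :=
    filter_subset_filter _ sdiff_subset
  by_cases hc : c ∈ L e
  · obtain ⟨m, hmM, hm⟩ := hdom e heF hc heM
    have hm' : m ∈ {f ∈ F | Outranks x y φ f e} := mem_filter.mpr ⟨hMF hmM, hm⟩
    have hssub : {f ∈ F \ M | Outranks x y φ f e} ⊂ {f ∈ F | Outranks x y φ f e} :=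
      ssubset_of_subset_of_ne hsub fun h => by simp [← h, hmM] at hm'
    have := card_lt_card hssub
    have := hL e heF
    rw [card_erase_of_mem hc]
    omega
  · rw [erase_eq_of_notMem hc]
    exact (card_le_card hsub).trans_lt (hL e heF)

theorem exists_list_colouring_of_card_outranks_lt [DecidableEq ε] [DecidableEq X] [DecidableEq Y]
    {C : Type*} [DecidableEq C] [Nonempty C] (F : Finset ε) (hφ : IsProperEdgeColouring F x y φ)
    (L : ε → Finset C) (hL : ∀ e ∈ F, #{f ∈ F | Outranks x y φ f e} < #(L e)) :
    ∃ ω : ε → C, (∀ e ∈ F, ω e ∈ L e) ∧ IsProperEdgeColouring F x y ω := by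
  induction F using Finset.strongInduction generalizing L with
  | H F ih =>
  rcases F.eq_empty_or_nonempty with rfl | ⟨e₀, he₀⟩
  · exact ⟨fun _ => Classical.arbitrary C, by simp, by simp [IsProperEdgeColouring]⟩
  obtain ⟨c, hc⟩ : (L e₀).Nonempty := card_pos.mp (Nat.zero_lt_of_lt (hL e₀ he₀))
  -- colour `c` goes to a stable matching `M` of the edges that may take it; each edge left with
  -- `c` in its list is outranked by an edge of `M`, so loses one list entry and one rival
  obtain ⟨M, hMF, hmatch, hdom⟩ :=
    exists_isStableMatching {e ∈ F | c ∈ L e} (hφ.mono (filter_subset _ _))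
  have hMF' : M ⊆ F := hMF.trans (filter_subset _ _)
  have hMne : M.Nonempty := by
    by_contra hM
    obtain ⟨m, hmM, -⟩ :=
      hdom e₀ (mem_filter.mpr ⟨he₀, hc⟩) (by simp [not_nonempty_iff_eq_empty.mp hM])
    exact hM ⟨m, hmM⟩
  obtain ⟨ω, hωL, hω⟩ := ih (F \ M) (sdiff_ssubset hMF' hMne) (hφ.mono sdiff_subset)
    (fun e => (L e).erase c) (card_filter_outranks_sdiff_lt hMF'
      (fun f hf hcf => hdom f (mem_filter.mpr ⟨hf, hcf⟩)) hL)
  have hωc : ∀ g ∈ F, g ∉ M → ω g ≠ c := fun g hg hgM =>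
    (mem_erase.mp (hωL g (mem_sdiff.mpr ⟨hg, hgM⟩))).1
  refine ⟨fun e => if e ∈ M then c else ω e, fun e he => ?_, fun e he f hf hef hadj => ?_⟩
  · by_cases heM : e ∈ M
    · simpa [heM] using (mem_filter.mp (hMF heM)).2
    · simpa [heM] using mem_of_mem_erase (hωL e (mem_sdiff.mpr ⟨he, heM⟩))
  by_cases heM : e ∈ M <;> by_cases hfM : f ∈ M <;> simp only [heM, hfM, if_true, if_false]
  · have := hmatch e heM f hfM hef
    tauto
  · exact (hωc f hf hfM).symm
  · exact hωc e he heM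
  · exact hω e (mem_sdiff.mpr ⟨he, heM⟩) f (mem_sdiff.mpr ⟨hf, hfM⟩) hef hadj

/-- Galvin's theorem: the list chromatic index of a bipartite multigraph is its maximum degree. -/
theorem exists_list_edgeColouring [DecidableEq ε] [DecidableEq X] [DecidableEq Y] {C : Type*}
    [DecidableEq C] [Nonempty C] (E : Finset ε) (x : ε → X) (y : ε → Y) (n : ℕ)
    (hx : ∀ v, #{e ∈ E | x e = v} ≤ n) (hy : ∀ w, #{e ∈ E | y e = w} ≤ n)
    (L : ε → Finset C) (hL : ∀ e ∈ E, n ≤ #(L e)) :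
    ∃ ω : ε → C, (∀ e ∈ E, ω e ∈ L e) ∧ IsProperEdgeColouring E x y ω := by
  obtain ⟨φ, hφlt, hφ⟩ := exists_proper_edgeColouring E x y n hx hy
  exact exists_list_colouring_of_card_outranks_lt E hφ L fun e he =>
    (card_filter_outranks_lt hφ hφlt he).trans_le (hL e he)

end Galvin

namespace SimpleGraph

variable {V : Type*} [Fintype V] [DecidableEq V] (G : SimpleGraph V) [DecidableRel G.Adj]

lemma endDegree_edgeFinset {p q : Sym2 V → V} (hpq : ∀ e ∈ G.edgeFinset, s(p e, q e) = e)
    (v : V) : endDegree G.edgeFinset p q v = G.degree v := by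
  rw [← card_incidenceFinset_eq_degree, incidenceFinset_eq_filter]
  simp only [endDegree, card_filter, ← sum_add_distrib]
  refine sum_congr rfl fun e he => ?_
  have hne : p e ≠ q e := fun heq => G.not_isDiag_of_mem_edgeSet (mem_edgeFinset.mp he)
    (hpq e he ▸ Sym2.mk_isDiag_iff.mpr heq)
  have hmem : v ∈ e ↔ v = p e ∨ v = q e := by rw [← Sym2.mem_iff, hpq e he]
  simp only [hmem]
  split_ifs <;> grind

lemma exists_balanced_orientation :
    ∃ t h : Sym2 V → V, (∀ e ∈ G.edgeFinset, s(t e, h e) = e) ∧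
      ∀ v, #{e ∈ G.edgeFinset | t e = v} ≤ (G.degree v + 1) / 2 ∧
        #{e ∈ G.edgeFinset | h e = v} ≤ (G.degree v + 1) / 2 := by
  have hpq : ∀ e ∈ G.edgeFinset, s((Quot.out e).1, (Quot.out e).2) = e :=
    fun e _ => Quot.out_eq e
  obtain ⟨t, h, hth, hbal⟩ :=
    _root_.exists_balanced_orientation G.edgeFinset (Prod.fst ∘ Quot.out) (Prod.snd ∘ Quot.out)
  refine ⟨t, h, fun e he => (hth e he).trans (hpq e he), fun v => ?_⟩
  rw [← G.endDegree_edgeFinset hpq v]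
  exact hbal v

lemma ncard_incidenceSet_inter_eq {C : Type*} [DecidableEq C] (ω : Sym2 V → C) (v : V) (c : C) :
    (G.incidenceSet v ∩ {e | ω e = c}).ncard = #{e ∈ G.edgeFinset | v ∈ e ∧ ω e = c} := by
  rw [← Set.ncard_coe_finset]
  congr 1
  ext e
  simp only [incidenceSet, coe_filter, mem_edgeFinset, Set.mem_inter_iff]
  exact and_assoc

theorem exists_list_colouring_card_incidence_le {C : Type*} [DecidableEq C] [Nonempty C]
    (L : Sym2 V → Finset C) {m s : ℕ} (hdeg : ∀ v, (G.degree v + 1) / 2 ≤ m * s)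
    (hL : ∀ e ∈ G.edgeFinset, m ≤ #(L e)) :
    ∃ ω : Sym2 V → C, (∀ e ∈ G.edgeFinset, ω e ∈ L e) ∧
      ∀ v c, #{e ∈ G.edgeFinset | v ∈ e ∧ ω e = c} ≤ 2 * s := by
  obtain ⟨t, h, hth, hbal⟩ := G.exists_balanced_orientation
  obtain ⟨ω, hωL, hω⟩ := exists_list_edgeColouring G.edgeFinset t h (m * s)
    (fun v => (hbal v).1.trans (hdeg v)) (fun v => (hbal v).2.trans (hdeg v))
    (fun e => L e ×ˢ range s) fun e he => by
      rw [card_product, card_range]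
      exact Nat.mul_le_mul_right s (hL e he)
  refine ⟨fun e => (ω e).1, fun e he => (mem_product.mp (hωL e he)).1, fun v c => ?_⟩
  have hsub : {e ∈ G.edgeFinset | v ∈ e ∧ (ω e).1 = c} ⊆
      {e ∈ G.edgeFinset | t e = v ∧ ω e ∈ {c} ×ˢ range s} ∪
        {e ∈ G.edgeFinset | h e = v ∧ ω e ∈ {c} ×ˢ range s} := by
    intro e he
    obtain ⟨heE, hve, hce⟩ := mem_filter.mp he
    have hωe : ω e ∈ {c} ×ˢ range s :=
      mem_product.mpr ⟨mem_singleton.mpr hce, (mem_product.mp (hωL e heE)).2⟩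
    rw [← hth e heE, Sym2.mem_iff] at hve
    rcases hve with rfl | rfl
    · exact mem_union_left _ (mem_filter.mpr ⟨heE, rfl, hωe⟩)
    · exact mem_union_right _ (mem_filter.mpr ⟨heE, rfl, hωe⟩)
  calc #{e ∈ G.edgeFinset | v ∈ e ∧ (ω e).1 = c}
      ≤ #({c} ×ˢ range s) + #({c} ×ˢ range s) :=
        (card_le_card hsub).trans <| (card_union_le _ _).trans <|
          add_le_add (hω.card_filter_left_le v _) (hω.card_filter_right_le v _)
    _ = 2 * s := by rw [card_product, card_singleton, card_range, one_mul, two_mul]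

end SimpleGraph

lemma add_one_div_two_le_mul {d k s : ℕ} (hk : 0 < k) (hd : k ^ 2 - k ≤ d) (hs : d / k = s + s) :
    (d + 1) / 2 ≤ (k + 1) * s := by
  have hdiv : k - 1 ≤ d / k := (Nat.le_div_iff_mul_le hk).mpr <| by rwa [Nat.sub_one_mul, ← sq]
  have hdm := Nat.div_add_mod d k
  have := Nat.mod_lt d hk
  rw [hs, mul_add] at hdm
  rw [hs] at hdiv
  rw [add_one_mul]
  omega

/-- Let `k ≥ 2` and let `G` be a finite simple `d`-regular graph with
`d ≥ k² − k` such that `⌊d/k⌋` is even. Then for every list assignment with lists of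
`k+1` colours, `G` admits an `L`-colouring that is a `1/k`-majority edge colouring. -/
theorem majority_list_edge_colouring_regular_even_floor
    (k d : ℕ) (hk : 2 ≤ k)
    {V : Type*} [Fintype V] [DecidableEq V] (G : SimpleGraph V) [DecidableRel G.Adj]
    (hreg : G.IsRegularOfDegree d) (hd : k ^ 2 - k ≤ d) (heven : Even (d / k))
    {C : Type*} (L : Sym2 V → Finset C)
    (hL : ∀ e ∈ G.edgeSet, (L e).card = k + 1) :
    ∃ ω : Sym2 V → C,
      (∀ e ∈ G.edgeSet, ω e ∈ L e) ∧
      ∀ (v : V) (c : C),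
        ((G.incidenceSet v ∩ {e | ω e = c}).ncard : ℝ) ≤ (G.degree v : ℝ) / k := by
  classical
  rcases isEmpty_or_nonempty V with hV | ⟨⟨v₀⟩⟩
  · exact ⟨isEmptyElim, fun e => isEmptyElim e, fun v => isEmptyElim v⟩
  -- `G` has an edge, so some list is nonempty
  obtain ⟨w₀, hw₀⟩ := (G.degree_pos_iff_exists_adj v₀).mp <| by
    have : 2 * k ≤ k ^ 2 := sq k ▸ Nat.mul_le_mul_right k hk
    rw [hreg v₀]
    omega
  obtain ⟨c₀, -⟩ : (L s(v₀, w₀)).Nonempty :=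
    card_pos.mp ((hL _ (G.mem_edgeSet.mpr hw₀)).symm ▸ k.succ_pos)
  have : Nonempty C := ⟨c₀⟩
  obtain ⟨s, hs⟩ := heven
  obtain ⟨ω, hωL, hω⟩ := G.exists_list_colouring_card_incidence_le L (m := k + 1) (s := s)
    (fun v => hreg v ▸ add_one_div_two_le_mul (by omega) hd hs)
    (fun e he => (hL e (SimpleGraph.mem_edgeFinset.mp he)).ge)
  refine ⟨ω, fun e he => hωL e (SimpleGraph.mem_edgeFinset.mpr he), fun v c => ?_⟩
  rw [G.ncard_incidenceSet_inter_eq, hreg v]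
  calc (#{e ∈ G.edgeFinset | v ∈ e ∧ ω e = c} : ℝ) ≤ ((d / k : ℕ) : ℝ) := by
        exact_mod_cast hs ▸ two_mul s ▸ hω v c
    _ ≤ d / k := Nat.cast_div_le
end
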